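/- arXiv:0903.1984 — 5 statements merged into one kernel-verified Lean document; each statement's English description precedes it below -/
import Mathlib

section
/- For all x > 0 and every positive integer k, |ψ^(k)(x)| < (k-1)!/(x+1/2)^k + k!/x^{k+1}, where ψ^(k) denotes the k-th polygamma function (k-th derivative of the digamma function ψ = Γ'/Γ). -/
open Real MeasureTheory Filter Set

/-- The digamma function ψ = Γ'/Γ, the logarithmic derivative of the Gamma function. -/
noncomputable def digamma (x : ℝ) : ℝ := deriv (fun y => Real.log (Real.Gamma y)) x

/-- The k-th polygamma function ψ^(k), the k-th derivative of the digamma function. -/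
noncomputable def polygamma (k : ℕ) (x : ℝ) : ℝ := iteratedDeriv k digamma x

open Topology

section Aux

/-! ### Summability lemmas -/

lemma summable_P {x : ℝ} (hx : 0 < x) {j : ℕ} (hj : 2 ≤ j) :
    Summable (fun m : ℕ => 1 / (x + m) ^ j) := by
  rw [← summable_nat_add_iff 1]
  have h2 : Summable (fun m : ℕ => 1 / ((m : ℝ) + 1) ^ 2) := by
    have := (summable_nat_add_iff (f := fun n : ℕ => 1 / (n : ℝ) ^ 2) 1).mpr
      (summable_one_div_nat_pow.mpr one_lt_two)
    simpa using this
  refine h2.of_nonneg_of_le (fun m => by positivity) (fun m => ?_)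
  have h1 : (1:ℝ) ≤ x + ((m:ℝ) + 1) := by
    have : (0:ℝ) ≤ (m:ℝ) := Nat.cast_nonneg m
    linarith
  have hle : ((m:ℝ) + 1) ^ 2 ≤ (x + ((m:ℝ)+1)) ^ j := by
    calc ((m:ℝ) + 1) ^ 2 ≤ (x + ((m:ℝ)+1)) ^ 2 := by
          apply pow_le_pow_left₀ (by positivity); linarith
      _ ≤ (x + ((m:ℝ)+1)) ^ j := pow_le_pow_right₀ h1 hj
  have : (0:ℝ) < ((m:ℝ)+1)^2 := by positivity
  push_cast
  exact one_div_le_one_div_of_le this hle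

lemma summable_R {y : ℝ} (hy : 0 < y) :
    Summable (fun m : ℕ => 1/((m:ℝ)+1) - 1/(y+((m:ℝ)+1))) := by
  have h2 : Summable (fun m : ℕ => y * (1 / ((m : ℝ) + 1) ^ 2)) := by
    have := (summable_nat_add_iff (f := fun n : ℕ => 1 / (n : ℝ) ^ 2) 1).mpr
      (summable_one_div_nat_pow.mpr one_lt_two)
    exact (this.congr (fun m => by push_cast; ring)).mul_left y
  refine h2.of_nonneg_of_le (fun m => ?_) (fun m => ?_) <;>
    have hm : (0:ℝ) ≤ (m:ℝ) := Nat.cast_nonneg m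
  · have h1 : 1/(y+((m:ℝ)+1)) ≤ 1/((m:ℝ)+1) := by
      apply one_div_le_one_div_of_le (by linarith); linarith
    linarith
  · have e : 1/((m:ℝ)+1) - 1/(y+((m:ℝ)+1)) = y/(((m:ℝ)+1)*(y+((m:ℝ)+1))) := by
      field_simp; ring
    rw [e, mul_one_div]
    gcongr
    nlinarith

/-! ### Elementary inequalities -/

lemma C1 (k : ℕ) {u : ℝ} (hu : 0 ≤ u) :
    1 ≤ (1+u)^k * (1 - k*u + k*(k+1)/2 * u^2) := by
  induction k with
  | zero => simp
  | succ k ih =>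
    have h1 : (0:ℝ) ≤ (1+u)^k := by positivity
    have hk0 : (0:ℝ) ≤ (k:ℝ) := Nat.cast_nonneg k
    have hu3 : (0:ℝ) ≤ u^3 := by positivity
    have key : (1 - k*u + k*(k+1)/2 * u^2) ≤
        (1+u) * (1 - (k+1)*u + (k+1)*(k+2)/2 * u^2) := by
      nlinarith [mul_nonneg hk0 hu3, mul_nonneg (mul_nonneg hk0 hk0) hu3]
    calc (1:ℝ) ≤ (1+u)^k * (1 - k*u + k*(k+1)/2 * u^2) := ih
      _ ≤ (1+u)^k * ((1+u) * (1 - (k+1)*u + (k+1)*(k+2)/2 * u^2)) :=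
          mul_le_mul_of_nonneg_left key h1
      _ = (1+u)^(k+1) * (1 - (↑(k+1))*u + (↑(k+1))*(↑(k+1)+1)/2 * u^2) := by
          push_cast; ring

lemma C2 (k : ℕ) (hk : 1 ≤ k) {u : ℝ} (hu : 0 < u) (hu1 : u < 1) :
    (1-u)^k * (1 + k*u + k*(k+1)/2 * u^2) < 1 := by
  induction k with
  | zero => omega
  | succ k ih =>
    have hk0 : (0:ℝ) ≤ (k:ℝ) := Nat.cast_nonneg k
    have hu3 : (0:ℝ) < u^3 := by positivity
    rcases Nat.eq_zero_or_pos k with rfl | hk'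
    · push_cast; nlinarith
    have h1 : (0:ℝ) < (1-u)^k := pow_pos (by linarith) k
    have key : (1-u) * (1 + (k+1)*u + (k+1)*(k+2)/2 * u^2) ≤
        (1 + k*u + k*(k+1)/2 * u^2) := by
      nlinarith [mul_nonneg hk0 hu3.le, mul_nonneg (mul_nonneg hk0 hk0) hu3.le]
    calc (1-u)^(k+1) * (1 + (↑(k+1))*u + (↑(k+1))*(↑(k+1)+1)/2 * u^2)
        = (1-u)^k * ((1-u) * (1 + (k+1)*u + (k+1)*(k+2)/2 * u^2)) := by push_cast; ring
      _ ≤ (1-u)^k * (1 + k*u + k*(k+1)/2 * u^2) := mul_le_mul_of_nonneg_left key h1.le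
      _ < 1 := ih hk'

lemma key_ineq {k : ℕ} (hk : 1 ≤ k) {c : ℝ} (hc : 1 < c) :
    (k:ℝ)/c^(k+1) < 1/(c - 1/2)^k - 1/(c + 1/2)^k := by
  have hc0 : (0:ℝ) < c := by linarith
  set u : ℝ := 1/(2*c) with hu_def
  have hu : 0 < u := by positivity
  have hu1 : u < 1 := by
    rw [hu_def, div_lt_one (by linarith)]; linarith
  have h1u : (0:ℝ) < 1 - u := by linarith
  have ha : c - 1/2 = c * (1-u) := by rw [hu_def]; field_simp
  have hb : c + 1/2 = c * (1+u) := by rw [hu_def]; field_simp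
  have hC2 := C2 k hk hu hu1
  have hpow1 : (0:ℝ) < (1-u)^k := pow_pos h1u k
  have hlow : 1 + k*u + k*(k+1)/2 * u^2 < 1/(1-u)^k := by
    rw [lt_div_iff₀ hpow1]; nlinarith
  have hC1 := C1 k hu.le
  have hpow2 : (0:ℝ) < (1+u)^k := by positivity
  have hupp : 1/(1+u)^k ≤ 1 - k*u + k*(k+1)/2 * u^2 := by
    rw [div_le_iff₀ hpow2]; nlinarith
  have hdiff : 2*k*u < 1/(1-u)^k - 1/(1+u)^k := by nlinarith
  have h2ku : 2*(k:ℝ)*u = k/c := by rw [hu_def]; field_simp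
  have hck : (0:ℝ) < c^k := by positivity
  have hrw : 1/(c - 1/2)^k - 1/(c + 1/2)^k = (1/(1-u)^k - 1/(1+u)^k)/c^k := by
    rw [ha, hb, mul_pow, mul_pow]; field_simp
  rw [hrw]
  have h3 : (k:ℝ)/c^(k+1) = (k/c)/c^k := by
    rw [div_div, ← pow_succ']
  rw [h3]
  have := h2ku ▸ hdiff
  gcongr

lemma tail_bound {x : ℝ} (hx : 0 < x) {k : ℕ} (hk : 1 ≤ k) :
    (k:ℝ) * (∑' m : ℕ, 1/(x + ((m:ℝ)+1))^(k+1)) < 1/(x + 1/2)^k := by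
  have hk2 : 2 ≤ k + 1 := by omega
  have hbase := summable_P hx hk2
  have hS : Summable (fun m : ℕ => 1/(x + ((m:ℝ)+1))^(k+1)) := by
    have := (summable_nat_add_iff 1).mpr hbase
    refine this.congr (fun m => ?_)
    push_cast; ring_nf
  have hT : Summable (fun m : ℕ => 1/(x + (m:ℝ) + 2)^(k+1)) := by
    have := (summable_nat_add_iff 2).mpr hbase
    refine this.congr (fun m => ?_)
    push_cast; ring_nf
  set f : ℕ → ℝ := fun m => 1/(x + (m:ℝ) + 3/2)^k with hf_def
  have hgf : ∀ m : ℕ, (k:ℝ)/(x + (m:ℝ) + 2)^(k+1) < f m - f (m+1) := by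
    intro m
    have hc : (1:ℝ) < x + (m:ℝ) + 2 := by
      have : (0:ℝ) ≤ (m:ℝ) := Nat.cast_nonneg m
      linarith
    have h := key_ineq hk hc
    have e1 : x + (m:ℝ) + 2 - 1/2 = x + (m:ℝ) + 3/2 := by ring
    have e2 : x + (m:ℝ) + 2 + 1/2 = x + ((m:ℕ)+1:ℕ) + 3/2 := by push_cast; ring
    rw [e1, e2] at h
    exact h
  have htail : (k:ℝ) * (∑' m : ℕ, 1/(x + (m:ℝ) + 2)^(k+1)) ≤ f 0 := by
    rw [← tsum_mul_left]
    apply Real.tsum_le_of_sum_range_le (fun m => by positivity)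
    intro n
    have h1 : ∑ m ∈ Finset.range n, (k:ℝ) * (1/(x + (m:ℝ) + 2)^(k+1))
        ≤ ∑ m ∈ Finset.range n, (f m - f (m+1)) := by
      refine Finset.sum_le_sum (fun m _ => ?_)
      have := hgf m
      rw [mul_one_div]
      exact this.le
    have h2 : ∑ m ∈ Finset.range n, (f m - f (m+1)) = f 0 - f n :=
      Finset.sum_range_sub' f n
    have h3 : 0 ≤ f n := by
      have : (0:ℝ) ≤ (n:ℝ) := Nat.cast_nonneg n
      rw [hf_def]; positivity
    linarith
  have hsplit : (∑' m : ℕ, 1/(x + ((m:ℝ)+1))^(k+1))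
      = 1/(x+1)^(k+1) + ∑' m : ℕ, 1/(x + (m:ℝ) + 2)^(k+1) := by
    rw [Summable.tsum_eq_zero_add hS]
    norm_num
    refine tsum_congr (fun m => ?_)
    push_cast; ring_nf
  have hfirst : (k:ℝ)/(x+1)^(k+1) < 1/(x+1/2)^k - 1/(x+3/2)^k := by
    have h := key_ineq hk (show (1:ℝ) < x + 1 by linarith)
    have e1 : x + 1 - 1/2 = x + 1/2 := by ring
    have e2 : x + 1 + 1/2 = x + 3/2 := by ring
    rw [e1, e2] at h
    exact h
  have hf0 : f 0 = 1/(x + 3/2)^k := by rw [hf_def]; norm_num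
  rw [hsplit, mul_add, mul_one_div]
  rw [hf0] at htail
  linarith

/-! ### Derivatives of the series -/

lemma hasDerivAt_inv_pow_aux {j : ℕ} (hj : 1 ≤ j) {c y : ℝ} (h : 0 < y + c) :
    HasDerivAt (fun z => 1/(z+c)^j) (-(j:ℝ)/(y+c)^(j+1)) y := by
  have h1 : HasDerivAt (fun z : ℝ => z + c) 1 y := (hasDerivAt_id y).add_const c
  have h2 := h1.fun_pow j
  have h3 := h2.fun_inv (pow_ne_zero j h.ne')
  have hpow : (y+c)^(j-1) * (y+c)^(j+1) = ((y+c)^j)^2 := by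
    rw [← pow_add, ← pow_mul]; congr 1; omega
  have hval : -(↑j * (y + c) ^ (j - 1) * 1) / ((y + c) ^ j) ^ 2 = -(j:ℝ)/(y+c)^(j+1) := by
    rw [mul_one, div_eq_div_iff (by positivity) (by positivity)]
    linear_combination (-(j:ℝ)) * hpow
  simpa only [one_div, hval] using h3

lemma hasDerivAt_P {j : ℕ} (hj : 2 ≤ j) {x : ℝ} (hx : 0 < x) :
    HasDerivAt (fun y => ∑' m : ℕ, 1/(y+(m:ℝ))^j)
      (-(j:ℝ) * ∑' m : ℕ, 1/(x+(m:ℝ))^(j+1)) x := by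
  have hx2 : 0 < x/2 := by linarith
  have hs : IsOpen (Ioi (x/2)) := isOpen_Ioi
  have hxs : x ∈ Ioi (x/2) := by simp only [mem_Ioi]; linarith
  have husum : Summable (fun m : ℕ => (j:ℝ) * (1/(x/2 + m)^(j+1))) :=
    (summable_P hx2 (by omega)).mul_left _
  have hunif : TendstoUniformlyOn
      (fun N (y:ℝ) => ∑ m ∈ Finset.range N, -(j:ℝ)/(y+(m:ℝ))^(j+1))
      (fun y => ∑' m : ℕ, -(j:ℝ)/(y+(m:ℝ))^(j+1)) atTop (Ioi (x/2)) := by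
    apply tendstoUniformlyOn_tsum_nat husum
    intro m y hy
    simp only [mem_Ioi] at hy
    have hm : (0:ℝ) ≤ (m:ℝ) := Nat.cast_nonneg m
    have hy0 : 0 < y + m := by linarith
    rw [neg_div, norm_neg, Real.norm_eq_abs, abs_of_nonneg (by positivity), mul_one_div]
    gcongr
  have hder : ∀ N : ℕ, ∀ y ∈ Ioi (x/2),
      HasDerivAt (fun z => ∑ m ∈ Finset.range N, 1/(z+(m:ℝ))^j)
        (∑ m ∈ Finset.range N, -(j:ℝ)/(y+(m:ℝ))^(j+1)) y := by
    intro N y hy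
    simp only [mem_Ioi] at hy
    apply HasDerivAt.fun_sum
    intro m _
    have hm : (0:ℝ) ≤ (m:ℝ) := Nat.cast_nonneg m
    exact hasDerivAt_inv_pow_aux (by omega) (by linarith)
  have hpt : ∀ y ∈ Ioi (x/2), Tendsto (fun N => ∑ m ∈ Finset.range N, 1/(y+(m:ℝ))^j)
      atTop (𝓝 (∑' m : ℕ, 1/(y+(m:ℝ))^j)) := by
    intro y hy
    simp only [mem_Ioi] at hy
    exact (summable_P (by linarith) hj).hasSum.tendsto_sum_nat
  have := hasDerivAt_of_tendstoUniformlyOn hs hunif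
    (Filter.Eventually.of_forall hder) hpt hxs
  convert! this using 1
  rw [← tsum_mul_left]
  exact tsum_congr (fun m => by rw [mul_one_div, neg_div])

/-! ### The digamma function as a series -/

/-- The classical series representation of the digamma function. -/
noncomputable def psi (x : ℝ) : ℝ :=
  -Real.eulerMascheroniConstant +
    (-(1/x) + ∑' m : ℕ, (1/((m:ℝ)+1) - 1/(x+((m:ℝ)+1))))

lemma hasDerivAt_log_Gamma {x : ℝ} (hx : 0 < x) :
    HasDerivAt (fun y => Real.log (Real.Gamma y)) (psi x) x := by
  set s : Set ℝ := Ioo 0 (x+1) with hs_def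
  have hs : IsOpen s := isOpen_Ioo
  have hxs : x ∈ s := by constructor <;> [linarith; linarith]
  set H : ℕ → ℝ := fun n => ∑ m ∈ Finset.range n, (1/((m:ℝ)+1)) with hH_def
  have hHn : ∀ n : ℕ, ((harmonic n : ℚ) : ℝ) = H n := by
    intro n
    rw [harmonic, hH_def]
    push_cast
    exact Finset.sum_congr rfl (fun i _ => by rw [one_div])
  have hc : Tendsto (fun n : ℕ => Real.log n - H n) atTop
      (𝓝 (-Real.eulerMascheroniConstant)) := by
    have := Real.tendsto_harmonic_sub_log.neg
    refine this.congr (fun n => ?_)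
    rw [← hHn n]; ring
  have hconst : TendstoUniformlyOn (fun (_ : ℕ) (y : ℝ) => -(1/y)) (fun y => -(1/y))
      atTop s :=
    fun u hu => Filter.Eventually.of_forall (fun n y _ => refl_mem_uniformity hu)
  have husum : Summable (fun m : ℕ => (x+1) * (1 / ((m : ℝ) + 1) ^ 2)) := by
    have := (summable_nat_add_iff (f := fun n : ℕ => 1 / (n : ℝ) ^ 2) 1).mpr
      (summable_one_div_nat_pow.mpr one_lt_two)
    exact (this.congr (fun m => by push_cast; ring)).mul_left _
  have hser : TendstoUniformlyOn
      (fun N (y:ℝ) => ∑ m ∈ Finset.range N, (1/((m:ℝ)+1) - 1/(y+((m:ℝ)+1))))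
      (fun y => ∑' m : ℕ, (1/((m:ℝ)+1) - 1/(y+((m:ℝ)+1)))) atTop s := by
    apply tendstoUniformlyOn_tsum_nat husum
    intro m y hy
    obtain ⟨hy0, hy1⟩ := hy
    have hm : (0:ℝ) ≤ (m:ℝ) := Nat.cast_nonneg m
    have e : 1/((m:ℝ)+1) - 1/(y+((m:ℝ)+1)) = y/(((m:ℝ)+1)*(y+((m:ℝ)+1))) := by
      field_simp; ring
    rw [Real.norm_eq_abs, e, abs_of_nonneg (by positivity), mul_one_div]
    gcongr
    nlinarith
  have hunif : TendstoUniformlyOn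
      (fun (n : ℕ) (y : ℝ) => (Real.log n - H n) +
        (-(1/y) + ∑ m ∈ Finset.range n, (1/((m:ℝ)+1) - 1/(y+((m:ℝ)+1)))))
      psi atTop s := by
    have h1 := hc.tendstoUniformlyOn_const (s := s)
    have h2 := h1.add (hconst.add hser)
    exact h2
  have hder : ∀ n : ℕ, ∀ y ∈ s,
      HasDerivAt (fun z => Real.BohrMollerup.logGammaSeq z n)
        ((Real.log n - H n) +
          (-(1/y) + ∑ m ∈ Finset.range n, (1/((m:ℝ)+1) - 1/(y+((m:ℝ)+1))))) y := by
    intro n y hy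
    obtain ⟨hy0, _⟩ := hy
    have h1 : HasDerivAt (fun z : ℝ => z * Real.log n) (Real.log n) y := by
      simpa using (hasDerivAt_id y).mul_const (Real.log n)
    have h2 : HasDerivAt (fun z : ℝ => ∑ m ∈ Finset.range (n+1), Real.log (z + (m:ℝ)))
        (∑ m ∈ Finset.range (n+1), 1/(y + (m:ℝ))) y := by
      apply HasDerivAt.fun_sum
      intro m _
      have hm : (0:ℝ) ≤ (m:ℝ) := Nat.cast_nonneg m
      have := ((hasDerivAt_id y).add_const (m:ℝ)).log
        (by simp only [id_eq]; intro hcon; linarith)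
      simpa [one_div] using this
    have h3 := (h1.add_const (Real.log (Nat.factorial n : ℝ))).sub h2
    have heq : Real.log n - ∑ m ∈ Finset.range (n+1), 1/(y + (m:ℝ))
        = (Real.log n - H n) +
          (-(1/y) + ∑ m ∈ Finset.range n, (1/((m:ℝ)+1) - 1/(y+((m:ℝ)+1)))) := by
      rw [Finset.sum_range_succ' (fun m => 1/(y + (m:ℝ))) n, hH_def,
        Finset.sum_sub_distrib]
      push_cast
      ring
    rw [← heq]
    simp only [Real.BohrMollerup.logGammaSeq]
    exact h3
  have hpt : ∀ y ∈ s, Tendsto (fun n => Real.BohrMollerup.logGammaSeq y n) atTop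
      (𝓝 (Real.log (Real.Gamma y))) := by
    intro y hy
    obtain ⟨hy0, _⟩ := hy
    have hfeq : ∀ {z : ℝ}, 0 < z →
        (Real.log ∘ Real.Gamma) (z+1) = (Real.log ∘ Real.Gamma) z + Real.log z := by
      intro z hz
      simp only [Function.comp_apply]
      rw [Real.Gamma_add_one hz.ne',
        Real.log_mul hz.ne' (Real.Gamma_pos_of_pos hz).ne']
      ring
    have := Real.BohrMollerup.tendsto_logGammaSeq Real.convexOn_log_Gamma hfeq hy0
    simpa [Real.Gamma_one] using this
  exact hasDerivAt_of_tendstoUniformlyOn hs hunif (Filter.Eventually.of_forall hder) hpt hxs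

lemma hasDerivAt_psi {x : ℝ} (hx : 0 < x) :
    HasDerivAt psi (∑' m : ℕ, 1/(x+(m:ℝ))^2) x := by
  have hx2 : 0 < x/2 := by linarith
  have hs : IsOpen (Ioi (x/2)) := isOpen_Ioi
  have hxs : x ∈ Ioi (x/2) := by simp only [mem_Ioi]; linarith
  have husum : Summable (fun m : ℕ => 1/(x/2 + (m:ℝ))^2) := summable_P hx2 le_rfl
  have hunif : TendstoUniformlyOn
      (fun N (y:ℝ) => ∑ m ∈ Finset.range N, 1/(y+((m:ℝ)+1))^2)
      (fun y => ∑' m : ℕ, 1/(y+((m:ℝ)+1))^2) atTop (Ioi (x/2)) := by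
    apply tendstoUniformlyOn_tsum_nat husum
    intro m y hy
    simp only [mem_Ioi] at hy
    have hm : (0:ℝ) ≤ (m:ℝ) := Nat.cast_nonneg m
    rw [Real.norm_eq_abs, abs_of_nonneg (by positivity)]
    gcongr
    linarith
  have hder : ∀ N : ℕ, ∀ y ∈ Ioi (x/2),
      HasDerivAt (fun z => ∑ m ∈ Finset.range N, (1/((m:ℝ)+1) - 1/(z+((m:ℝ)+1))))
        (∑ m ∈ Finset.range N, 1/(y+((m:ℝ)+1))^2) y := by
    intro N y hy
    simp only [mem_Ioi] at hy
    apply HasDerivAt.fun_sum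
    intro m _
    have hm : (0:ℝ) ≤ (m:ℝ) := Nat.cast_nonneg m
    have h1 : HasDerivAt (fun z : ℝ => 1/(z+((m:ℝ)+1))^1) (-(1:ℝ)/(y+((m:ℝ)+1))^2) y := by
      have := hasDerivAt_inv_pow_aux le_rfl (c := (m:ℝ)+1) (y := y) (by linarith)
      simpa using this
    have h2 := h1.const_sub (1/((m:ℝ)+1))
    simp only [pow_one] at h2
    convert h2 using 1
    ring
  have hpt : ∀ y ∈ Ioi (x/2),
      Tendsto (fun N => ∑ m ∈ Finset.range N, (1/((m:ℝ)+1) - 1/(y+((m:ℝ)+1)))) atTop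
        (𝓝 (∑' m : ℕ, (1/((m:ℝ)+1) - 1/(y+((m:ℝ)+1))))) := by
    intro y hy
    simp only [mem_Ioi] at hy
    exact (summable_R (by linarith)).hasSum.tendsto_sum_nat
  have hR : HasDerivAt (fun y => ∑' m : ℕ, (1/((m:ℝ)+1) - 1/(y+((m:ℝ)+1))))
      (∑' m : ℕ, 1/(x+((m:ℝ)+1))^2) x :=
    hasDerivAt_of_tendstoUniformlyOn hs hunif (Filter.Eventually.of_forall hder) hpt hxs
  have hinv : HasDerivAt (fun y : ℝ => -(1/y)) ((x^2)⁻¹) x := by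
    have := (hasDerivAt_inv hx.ne').fun_neg
    simpa [one_div] using this
  have htot := (hinv.add hR).const_add (-Real.eulerMascheroniConstant)
  have : HasDerivAt psi ((x^2)⁻¹ + ∑' m : ℕ, 1/(x+((m:ℝ)+1))^2) x := by
    convert! htot using 2
  convert this using 1
  rw [Summable.tsum_eq_zero_add (summable_P hx le_rfl)]
  push_cast
  norm_num

/-! ### The polygamma formula -/

lemma polygamma_formula {k : ℕ} (hk : 1 ≤ k) :
    ∀ x : ℝ, 0 < x →
      polygamma k x = (-1:ℝ)^(k+1) * (Nat.factorial k : ℝ) * ∑' m : ℕ, 1/(x+(m:ℝ))^(k+1) := by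
  induction k, hk using Nat.le_induction with
  | base =>
    intro x hx
    have hev : digamma =ᶠ[𝓝 x] psi := by
      filter_upwards [Ioi_mem_nhds hx] with y hy
      exact (hasDerivAt_log_Gamma hy).deriv
    rw [polygamma, iteratedDeriv_one, hev.deriv_eq, (hasDerivAt_psi hx).deriv]
    norm_num
  | succ k hk ih =>
    intro x hx
    have hev : iteratedDeriv k digamma =ᶠ[𝓝 x]
        (fun y => (-1:ℝ)^(k+1) * (Nat.factorial k : ℝ) * ∑' m : ℕ, 1/(y+(m:ℝ))^(k+1)) := by
      filter_upwards [Ioi_mem_nhds hx] with y hy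
      exact ih y hy
    have hd := ((hasDerivAt_P (by omega : 2 ≤ k+1) hx).const_mul
      ((-1:ℝ)^(k+1) * (Nat.factorial k : ℝ)))
    rw [polygamma, iteratedDeriv_succ, hev.deriv_eq, hd.deriv]
    rw [pow_succ ((-1:ℝ)) (k+1), Nat.factorial_succ]
    push_cast
    ring

end Aux

theorem stmt0 (x : ℝ) (hx : 0 < x) (k : ℕ) (hk : 1 ≤ k) :
    |polygamma k x| <
      (Nat.factorial (k - 1) : ℝ) / (x + 1 / 2) ^ k +
        (Nat.factorial k : ℝ) / x ^ (k + 1) := by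
  have hk2 : 2 ≤ k + 1 := by omega
  have hsum := summable_P hx hk2
  have hP : (0:ℝ) ≤ ∑' m : ℕ, 1/(x+(m:ℝ))^(k+1) :=
    tsum_nonneg (fun m => by positivity)
  rw [polygamma_formula hk x hx, abs_mul, abs_mul, abs_pow, abs_neg, abs_one, one_pow,
    one_mul, Nat.abs_cast, abs_of_nonneg hP]
  have hsplit : (∑' m : ℕ, 1/(x+(m:ℝ))^(k+1))
      = 1/x^(k+1) + ∑' m : ℕ, 1/(x + ((m:ℝ)+1))^(k+1) := by
    rw [Summable.tsum_eq_zero_add hsum]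
    norm_num
  have htail := tail_bound hx hk
  have hfact : ((Nat.factorial k : ℝ)) = (k:ℝ) * (Nat.factorial (k-1) : ℝ) := by
    rw [← Nat.cast_mul, Nat.mul_factorial_pred (by omega)]
  have hfpos : (0:ℝ) < (Nat.factorial (k-1) : ℝ) := by
    exact_mod_cast Nat.factorial_pos (k-1)
  have hmain : (Nat.factorial k : ℝ) * (∑' m : ℕ, 1/(x + ((m:ℝ)+1))^(k+1))
      < (Nat.factorial (k-1) : ℝ) / (x + 1/2)^k := by
    calc (Nat.factorial k : ℝ) * (∑' m : ℕ, 1/(x + ((m:ℝ)+1))^(k+1))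
        = (Nat.factorial (k-1) : ℝ) * ((k:ℝ) * (∑' m : ℕ, 1/(x + ((m:ℝ)+1))^(k+1))) := by
          rw [hfact]; ring
      _ < (Nat.factorial (k-1) : ℝ) * (1/(x+1/2)^k) :=
          mul_lt_mul_of_pos_left htail hfpos
      _ = (Nat.factorial (k-1) : ℝ) / (x + 1/2)^k := by rw [mul_one_div]
  rw [hsplit, mul_add, mul_one_div]
  linarith
end

section
/- For all x > 0, (ψ'(x))^2 + ψ''(x) > 0, where ψ is the digamma function. -/
open Real MeasureTheory Filter Set

namespace Stmt6Aux

lemma summable_aux {x : ℝ} (hx : 0 < x) {k : ℕ} (hk : 2 ≤ k) :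
    Summable (fun n : ℕ => 1 / (x + n) ^ k) := by
  have hmaj : Summable (fun n : ℕ => 1 / ((n : ℝ) + 1) ^ k) := by
    have := (summable_nat_add_iff (f := fun n : ℕ => 1 / (n : ℝ) ^ k) 1).mpr
      (summable_one_div_nat_pow.mpr hk)
    refine this.congr fun n => by push_cast; ring
  rw [← summable_nat_add_iff 1]
  refine hmaj.of_nonneg_of_le (fun n => by positivity) (fun n => ?_)
  apply one_div_le_one_div_of_le (by positivity)
  apply pow_le_pow_left₀ (by positivity)
  push_cast
  linarith
end Stmt6Aux

namespace Stmt6Aux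
open Stmt6Aux

noncomputable def psi1 (x : ℝ) : ℝ := ∑' n : ℕ, 1 / (x + n) ^ 2
noncomputable def T3 (x : ℝ) : ℝ := ∑' n : ℕ, 1 / (x + n) ^ 3

lemma psi1_nonneg {x : ℝ} (hx : 0 < x) : 0 ≤ psi1 x := by
  apply tsum_nonneg
  intro n
  have : (0:ℝ) < x + n := by positivity
  positivity

lemma T3_nonneg {x : ℝ} (hx : 0 < x) : 0 ≤ T3 x := by
  apply tsum_nonneg
  intro n
  have : (0:ℝ) < x + n := by positivity
  positivity


lemma shift_eq {x : ℝ} (k : ℕ) : (fun n : ℕ => 1 / (x + 1 + (n : ℝ)) ^ k) =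
    (fun n : ℕ => 1 / (x + ((n + 1 : ℕ) : ℝ)) ^ k) := by
  funext n; push_cast; ring_nf

lemma psi1_shift {x : ℝ} (hx : 0 < x) : psi1 x = 1 / x ^ 2 + psi1 (x + 1) := by
  have h := Summable.tsum_eq_zero_add (summable_aux hx (le_refl 2))
  simp only [Nat.cast_zero, add_zero] at h
  rw [psi1, h, psi1, shift_eq 2]

lemma T3_shift {x : ℝ} (hx : 0 < x) : T3 x = 1 / x ^ 3 + T3 (x + 1) := by
  have h := Summable.tsum_eq_zero_add (summable_aux hx (by norm_num : 2 ≤ 3))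
  simp only [Nat.cast_zero, add_zero] at h
  rw [T3, h, T3, shift_eq 3]

lemma tendsto_one_div_add (y : ℝ) :
    Filter.Tendsto (fun n : ℕ => 1 / (y + n)) atTop (nhds 0) := by
  have h : Filter.Tendsto (fun n : ℕ => y + (n : ℝ)) atTop atTop :=
    tendsto_atTop_add_const_left _ y tendsto_natCast_atTop_atTop
  simpa only [one_div, Pi.inv_def] using h.inv_tendsto_atTop

lemma telescope {y : ℝ} (hy : 0 < y) :
    HasSum (fun n : ℕ => 1 / (y + n) - 1 / (y + n + 1)) (1 / y) := by
  have hnn : ∀ n : ℕ, 0 ≤ 1 / (y + n) - 1 / (y + n + 1) := by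
    intro n
    have h1 : (0:ℝ) < y + n := by positivity
    rw [sub_nonneg]
    apply one_div_le_one_div_of_le h1
    linarith
  rw [hasSum_iff_tendsto_nat_of_nonneg hnn]
  have heq : ∀ n : ℕ, ∑ i ∈ Finset.range n, (1 / (y + i) - 1 / (y + i + 1)) =
      1 / (y + (0:ℕ)) - 1 / (y + n) := by
    intro n
    rw [← Finset.sum_range_sub' (fun i : ℕ => 1 / (y + i)) n]
    congr 1
    funext i
    push_cast
    ring_nf
  simp only [heq, Nat.cast_zero, add_zero]
  have := (tendsto_one_div_add y)
  simpa using tendsto_const_nhds.sub this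

lemma telescope_summable {y : ℝ} (hy : 0 < y) :
    Summable (fun n : ℕ => 1 / (y + n) - 1 / (y + n + 1)) := (telescope hy).summable

end Stmt6Aux

namespace Stmt6Aux

lemma psi1_shift_summable {x : ℝ} (hx : 0 < x) :
    Summable (fun n : ℕ => 1 / (x + n + 1) ^ 2) := by
  have := summable_aux (by linarith : (0:ℝ) < x + 1) (le_refl 2)
  refine this.congr fun n => by ring_nf

lemma psi1_shift_tsum {x : ℝ} (hx : 0 < x) :
    ∑' n : ℕ, 1 / (x + n + 1) ^ 2 = psi1 x - 1 / x ^ 2 := by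
  have h1 : ∑' n : ℕ, 1 / (x + n + 1) ^ 2 = psi1 (x + 1) := by
    rw [psi1]
    apply tsum_congr
    intro n
    ring_nf
  rw [h1, psi1_shift hx]
  ring

/-- Trapezoid-type lower bound: `ψ'(y) > 1/y + 1/(2y²)`. -/
lemma psi1_lower {y : ℝ} (hy : 0 < y) : 1 / y + 1 / (2 * y ^ 2) < psi1 y := by
  -- compare telescoping series with average series
  have hS1 : Summable (fun n : ℕ => 1 / (y + n) ^ 2 / 2) :=
    (summable_aux hy (le_refl 2)).div_const 2
  have hS2 : Summable (fun n : ℕ => 1 / (y + n + 1) ^ 2 / 2) :=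
    (psi1_shift_summable hy).div_const 2
  have hSg : Summable (fun n : ℕ => 1 / (y + n) ^ 2 / 2 + 1 / (y + n + 1) ^ 2 / 2) :=
    hS1.add hS2
  have hterm : ∀ n : ℕ, 1 / (y + n) - 1 / (y + n + 1) <
      1 / (y + n) ^ 2 / 2 + 1 / (y + n + 1) ^ 2 / 2 := by
    intro n
    have ha : (0:ℝ) < y + n := by positivity
    have hb : (0:ℝ) < y + n + 1 := by positivity
    have hab : 1 / (y + n) * (1 / (y + n + 1)) = 1 / (y + n) - 1 / (y + n + 1) := by
      field_simp
      ring
    have huv : 1 / (y + n + 1) < 1 / (y + n) := by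
      apply one_div_lt_one_div_of_lt ha (by linarith)
    have e1 : 1 / (y + n) ^ 2 = (1 / (y + n)) ^ 2 := by rw [one_div_pow]
    have e2 : 1 / (y + n + 1) ^ 2 = (1 / (y + n + 1)) ^ 2 := by rw [one_div_pow]
    rw [e1, e2]
    nlinarith [mul_pos (sub_pos.mpr huv) (sub_pos.mpr huv), hab]
  have hlt : 1 / y < ∑' n : ℕ, (1 / (y + n) ^ 2 / 2 + 1 / (y + n + 1) ^ 2 / 2) := by
    rw [← (telescope hy).tsum_eq]
    exact Summable.tsum_lt_tsum (fun n => (hterm n).le) (hterm 0) (telescope_summable hy) hSg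
  have heq : ∑' n : ℕ, (1 / (y + n) ^ 2 / 2 + 1 / (y + n + 1) ^ 2 / 2) =
      psi1 y - 1 / (2 * y ^ 2) := by
    rw [Summable.tsum_add hS1 hS2, tsum_div_const, tsum_div_const, psi1_shift_tsum hy, ← psi1]
    ring
  rw [heq] at hlt
  linarith

/-- Upper bound `ψ'(y) ≤ 1/y² + 1/y`. -/
lemma psi1_upper {y : ℝ} (hy : 0 < y) : psi1 y ≤ 1 / y ^ 2 + 1 / y := by
  have hterm : ∀ n : ℕ, 1 / (y + n + 1) ^ 2 ≤ 1 / (y + n) - 1 / (y + n + 1) := by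
    intro n
    have ha : (0:ℝ) < y + n := by positivity
    have hb : (0:ℝ) < y + n + 1 := by positivity
    rw [div_sub_div _ _ (ne_of_gt ha) (ne_of_gt hb)]
    rw [div_le_div_iff₀ (by positivity) (by positivity)]
    nlinarith
  have := Summable.tsum_le_tsum hterm (psi1_shift_summable hy) (telescope_summable hy)
  rw [(telescope hy).tsum_eq, psi1_shift_tsum hy] at this
  linarith

/-- `T3 y ≤ ψ'(y)/y`. -/
lemma T3_le {y : ℝ} (hy : 0 < y) : T3 y ≤ psi1 y / y := by
  have hterm : ∀ n : ℕ, 1 / (y + n) ^ 3 ≤ 1 / y * (1 / (y + n) ^ 2) := by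
    intro n
    have ha : (0:ℝ) < y + n := by positivity
    rw [one_div_mul_one_div, div_le_div_iff₀ (by positivity) (by positivity)]
    nlinarith [sq_nonneg (y + n)]
  have := Summable.tsum_le_tsum hterm (summable_aux hy (by norm_num))
    ((summable_aux hy (le_refl 2)).mul_left (1 / y))
  rw [tsum_mul_left] at this
  rw [T3, psi1]
  calc ∑' n : ℕ, 1 / (y + n) ^ 3 ≤ 1 / y * ∑' n : ℕ, 1 / (y + n) ^ 2 := this
  _ = (∑' n : ℕ, 1 / (y + n) ^ 2) / y := by ring

end Stmt6Aux

namespace Stmt6Aux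

noncomputable def Ffun (y : ℝ) : ℝ := psi1 y ^ 2 + (-2 * T3 y)

lemma F_step {x : ℝ} (hx : 0 < x) :
    Ffun (x + 1) + 1 / (x ^ 4 * (x + 1) ^ 2) ≤ Ffun x := by
  have hx1 : (0:ℝ) < x + 1 := by linarith
  have hp := psi1_lower hx1
  have hkey : 1 / x - 1 / (2 * x ^ 2) + 1 / (2 * x ^ 2 * (x + 1) ^ 2)
      ≤ 1 / (x + 1) + 1 / (2 * (x + 1) ^ 2) := by
    have : 1 / (x + 1) + 1 / (2 * (x + 1) ^ 2) -
        (1 / x - 1 / (2 * x ^ 2) + 1 / (2 * x ^ 2 * (x + 1) ^ 2)) = 0 := by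
      field_simp
      ring
    linarith
  have hplow : 1 / x - 1 / (2 * x ^ 2) + 1 / (2 * x ^ 2 * (x + 1) ^ 2) < psi1 (x + 1) :=
    lt_of_le_of_lt hkey hp
  rw [Ffun, Ffun, psi1_shift hx, T3_shift hx]
  have hexp : (1 / x ^ 2 + psi1 (x + 1)) ^ 2 + -2 * (1 / x ^ 3 + T3 (x + 1)) -
      (psi1 (x + 1) ^ 2 + -2 * T3 (x + 1)) =
      2 / x ^ 2 * (psi1 (x + 1) - 1 / x + 1 / (2 * x ^ 2)) := by
    field_simp
    ring
  have hd : 1 / (x ^ 4 * (x + 1) ^ 2) ≤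
      2 / x ^ 2 * (psi1 (x + 1) - 1 / x + 1 / (2 * x ^ 2)) := by
    have h2 : 1 / (2 * x ^ 2 * (x + 1) ^ 2) ≤ psi1 (x + 1) - 1 / x + 1 / (2 * x ^ 2) := by
      linarith
    calc 1 / (x ^ 4 * (x + 1) ^ 2) = 2 / x ^ 2 * (1 / (2 * x ^ 2 * (x + 1) ^ 2)) := by
          field_simp
    _ ≤ 2 / x ^ 2 * (psi1 (x + 1) - 1 / x + 1 / (2 * x ^ 2)) := by
          apply mul_le_mul_of_nonneg_left h2 (by positivity)
  linarith

lemma F_tendsto {x : ℝ} (hx : 0 < x) :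
    Filter.Tendsto (fun n : ℕ => Ffun (x + n)) atTop (nhds 0) := by
  have h0 : Filter.Tendsto (fun n : ℕ => 1 / (x + n)) atTop (nhds 0) :=
    tendsto_one_div_add x
  have hB : Filter.Tendsto (fun n : ℕ =>
      ((1 / (x + n)) ^ 2 + 1 / (x + n)) ^ 2 +
        2 * ((1 / (x + n)) ^ 2 + 1 / (x + n)) * (1 / (x + n))) atTop (nhds 0) := by
    have := (((h0.pow 2).add h0).pow 2).add
      ((((h0.pow 2).add h0).const_mul 2).mul h0)
    simpa using this
  apply squeeze_zero_norm _ hB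
  intro n
  have hyn : (0:ℝ) < x + n := by positivity
  have hup := psi1_upper hyn
  have hlo := psi1_nonneg hyn
  have hT := T3_le hyn
  have hTnn := T3_nonneg hyn
  have he : 1 / (x + n) ^ 2 = (1 / (x + n)) ^ 2 := by rw [one_div_pow]
  rw [he] at hup
  rw [Real.norm_eq_abs, abs_le]
  constructor
  · have h1 : psi1 (x + n) / (x + n) ≤ ((1 / (x + n)) ^ 2 + 1 / (x + n)) * (1 / (x + n)) := by
      rw [div_eq_mul_one_div (psi1 (x + n))]
      apply mul_le_mul_of_nonneg_right hup (by positivity)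
    have hF : -(2 * (((1 / (x + n)) ^ 2 + 1 / (x + n)) * (1 / (x + n)))) ≤ Ffun (x + n) := by
      rw [Ffun]
      nlinarith [sq_nonneg (psi1 (x + n))]
    have hsq : (0:ℝ) ≤ ((1 / (x + n)) ^ 2 + 1 / (x + n)) ^ 2 := sq_nonneg _
    linarith
  · have hF : Ffun (x + n) ≤ ((1 / (x + n)) ^ 2 + 1 / (x + n)) ^ 2 := by
      rw [Ffun]
      nlinarith [sq_nonneg ((1 / (x + n)) ^ 2 + 1 / (x + n) - psi1 (x + n))]
    have : (0:ℝ) ≤ 2 * ((1 / (x + n)) ^ 2 + 1 / (x + n)) * (1 / (x + n)) := by positivity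
    linarith

lemma F_pos {x : ℝ} (hx : 0 < x) : 0 < Ffun x := by
  set d : ℝ := 1 / (x ^ 4 * (x + 1) ^ 2) with hd
  have hdpos : 0 < d := by positivity
  have hmono : ∀ n : ℕ, d + Ffun (x + (n + 1 : ℕ)) ≤ Ffun x := by
    intro n
    induction n with
    | zero =>
      have := F_step hx
      push_cast
      linarith
    | succ k ih =>
      have hxk : (0:ℝ) < x + (k + 1 : ℕ) := by positivity
      have hstep := F_step hxk
      have hdk : (0:ℝ) ≤ 1 / ((x + (k + 1 : ℕ)) ^ 4 * (x + (k + 1 : ℕ) + 1) ^ 2) := by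
        positivity
      have hcast : x + ((k + 1 : ℕ) + 1 : ℕ) = x + (k + 1 : ℕ) + 1 := by push_cast; ring
      rw [hcast]
      linarith
  have hlim : Filter.Tendsto (fun n : ℕ => d + Ffun (x + (n + 1 : ℕ))) atTop (nhds d) := by
    have h1 := (F_tendsto hx).comp (tendsto_add_atTop_nat 1)
    have h2 : Filter.Tendsto (fun n : ℕ => Ffun (x + ((n + 1 : ℕ) : ℝ))) atTop (nhds 0) := h1
    simpa using tendsto_const_nhds.add h2
  have : d ≤ Ffun x := le_of_tendsto hlim (Filter.Eventually.of_forall hmono)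
  linarith

end Stmt6Aux

namespace Stmt6Aux

noncomputable def psi0 (x : ℝ) : ℝ :=
  -Real.eulerMascheroniConstant + ∑' n : ℕ, (1 / ((n : ℝ) + 1) - 1 / (x + n))

lemma summable_psi0_term {x : ℝ} (hx : 0 < x) :
    Summable (fun n : ℕ => 1 / ((n : ℝ) + 1) - 1 / (x + n)) := by
  set c : ℝ := min x 1 with hc
  have hcpos : 0 < c := lt_min hx one_pos
  have hmaj : Summable (fun n : ℕ => |x - 1| / c * (1 / ((n : ℝ) + 1) ^ 2)) := by
    apply Summable.mul_left
    have := (summable_nat_add_iff (f := fun n : ℕ => 1 / (n : ℝ) ^ 2) 1).mpr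
      (summable_one_div_nat_pow.mpr (by norm_num))
    refine this.congr fun n => by push_cast; ring
  apply Summable.of_norm
  refine hmaj.of_nonneg_of_le (fun n => norm_nonneg _) (fun n => ?_)
  have hn1 : (0:ℝ) < (n : ℝ) + 1 := by positivity
  have hxn : (0:ℝ) < x + n := by positivity
  have heq : 1 / ((n : ℝ) + 1) - 1 / (x + n) = (x - 1) / (((n : ℝ) + 1) * (x + n)) := by
    field_simp
    ring
  have hcx : c * ((n : ℝ) + 1) ≤ x + n := by
    have h1 : c ≤ x := min_le_left _ _
    have h2 : c ≤ 1 := min_le_right _ _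
    nlinarith [Nat.cast_nonneg (α := ℝ) n]
  rw [heq, norm_div, Real.norm_eq_abs, Real.norm_eq_abs,
    abs_of_pos (by positivity : (0:ℝ) < ((n : ℝ) + 1) * (x + n)),
    div_mul_div_comm, mul_one]
  apply div_le_div_of_nonneg_left (abs_nonneg _) (by positivity)
  nlinarith

end Stmt6Aux

namespace Stmt6Aux
open Real

lemma hder_logGamma {y : ℝ} (hy : 0 < y) :
    DifferentiableAt ℝ (Real.log ∘ Real.Gamma) y := by
  refine ((Real.differentiableAt_Gamma ?_).log (Real.Gamma_ne_zero ?_)) <;>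
    exact fun m => ne_of_gt (by have : (0:ℝ) ≤ (m:ℝ) := Nat.cast_nonneg m; linarith)

lemma hrec_logGamma {y : ℝ} (hy : 0 < y) :
    (Real.log ∘ Real.Gamma) (y + 1) = (Real.log ∘ Real.Gamma) y + Real.log y := by
  simp only [Function.comp_apply, Real.Gamma_add_one hy.ne',
    Real.log_mul hy.ne' (Real.Gamma_pos_of_pos hy).ne', add_comm]

lemma deriv_rec_logGamma {y : ℝ} (hy : 0 < y) :
    deriv (Real.log ∘ Real.Gamma) (y + 1) = deriv (Real.log ∘ Real.Gamma) y + 1 / y := by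
  rw [← deriv_comp_add_const, one_div, ← Real.deriv_log,
    ← deriv_add (hder_logGamma hy) (Real.differentiableAt_log hy.ne')]
  apply Filter.EventuallyEq.deriv_eq
  filter_upwards [eventually_gt_nhds hy] with t ht
  exact hrec_logGamma ht

lemma deriv_logGamma_le {y : ℝ} (hy : 0 < y) :
    deriv (Real.log ∘ Real.Gamma) y ≤ Real.log y := by
  have hc := Real.convexOn_log_Gamma
  have := hc.deriv_le_slope (mem_Ioi.mpr hy) (mem_Ioi.mpr (by linarith : (0:ℝ) < y + 1))
    (by linarith) (hder_logGamma hy)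
  rwa [slope_def_field, hrec_logGamma hy, add_sub_cancel_left,
    show y + 1 - y = (1:ℝ) by ring, div_one] at this

lemma le_deriv_logGamma {y : ℝ} (hy : 0 < y) :
    Real.log y ≤ deriv (Real.log ∘ Real.Gamma) (y + 1) := by
  have hc := Real.convexOn_log_Gamma
  have := hc.slope_le_deriv (mem_Ioi.mpr hy) (mem_Ioi.mpr (by linarith : (0:ℝ) < y + 1))
    (by linarith) (hder_logGamma (by linarith))
  rwa [slope_def_field, hrec_logGamma hy, add_sub_cancel_left,
    show y + 1 - y = (1:ℝ) by ring, div_one] at this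

lemma deriv_logGamma_sum {x : ℝ} (hx : 0 < x) (n : ℕ) :
    deriv (Real.log ∘ Real.Gamma) (x + n) =
      deriv (Real.log ∘ Real.Gamma) x + ∑ k ∈ Finset.range n, 1 / (x + k) := by
  induction n with
  | zero => simp
  | succ m ih =>
    have hxm : (0:ℝ) < x + m := by positivity
    have hcast : x + ((m + 1 : ℕ) : ℝ) = (x + m) + 1 := by push_cast; ring
    rw [hcast, deriv_rec_logGamma hxm, ih, Finset.sum_range_succ]
    ring

end Stmt6Aux

namespace Stmt6Aux
open Real

lemma harmonic_cast (n : ℕ) :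
    ((harmonic n : ℚ) : ℝ) = ∑ k ∈ Finset.range n, 1 / ((k : ℝ) + 1) := by
  rw [harmonic]
  push_cast
  apply Finset.sum_congr rfl
  intro k _
  rw [one_div]

lemma tendsto_log_ratio {x : ℝ} (hx : 0 < x) :
    Filter.Tendsto (fun n : ℕ => Real.log (x + n) - Real.log n) atTop (nhds 0) := by
  have h1 : Filter.Tendsto (fun n : ℕ => (x + n) / n) atTop (nhds 1) := by
    have hx0 : Filter.Tendsto (fun n : ℕ => x * (1 / (n : ℝ))) atTop (nhds 0) := by
      simpa using tendsto_const_nhds.mul (tendsto_one_div_atTop_nhds_zero_nat (𝕜 := ℝ))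
    have : Filter.Tendsto (fun n : ℕ => x * (1 / (n : ℝ)) + 1) atTop (nhds 1) := by
      simpa using hx0.add tendsto_const_nhds
    apply this.congr'
    filter_upwards [Filter.eventually_ge_atTop 1] with n hn
    have hn0 : (0:ℝ) < n := by exact_mod_cast hn
    field_simp
  have h2 := (Real.continuousAt_log one_ne_zero).tendsto.comp h1
  rw [Real.log_one] at h2
  apply h2.congr'
  filter_upwards [Filter.eventually_ge_atTop 1] with n hn
  have hn0 : (0:ℝ) < n := by exact_mod_cast hn
  have hxn : (0:ℝ) < x + n := by positivity
  simp only [Function.comp_apply]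
  rw [Real.log_div hxn.ne' hn0.ne']

lemma tendsto_aseq {x : ℝ} (hx : 0 < x) :
    Filter.Tendsto (fun n : ℕ => Real.log (x + n) - ∑ k ∈ Finset.range n, 1 / (x + k))
      atTop (nhds (psi0 x)) := by
  have hdecomp : ∀ n : ℕ,
      Real.log (x + n) - ∑ k ∈ Finset.range n, 1 / (x + k) =
        (Real.log (x + n) - Real.log n) + (-(((harmonic n : ℚ) : ℝ) - Real.log n)) +
          ∑ k ∈ Finset.range n, (1 / ((k : ℝ) + 1) - 1 / (x + k)) := by
    intro n
    rw [Finset.sum_sub_distrib, ← harmonic_cast n]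
    ring
  have t1 := tendsto_log_ratio hx
  have t2 := Real.tendsto_harmonic_sub_log.neg
  have t3 := (summable_psi0_term hx).hasSum.tendsto_sum_nat
  have := (t1.add t2).add t3
  rw [psi0]
  have hval : (0 : ℝ) + -Real.eulerMascheroniConstant +
      ∑' n : ℕ, (1 / ((n : ℝ) + 1) - 1 / (x + n)) =
      -Real.eulerMascheroniConstant + ∑' n : ℕ, (1 / ((n : ℝ) + 1) - 1 / (x + n)) := by ring
  rw [hval] at this
  exact this.congr fun n => (hdecomp n).symm

lemma deriv_logGamma_eq_psi0 {x : ℝ} (hx : 0 < x) :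
    deriv (Real.log ∘ Real.Gamma) x = psi0 x := by
  set D := deriv (Real.log ∘ Real.Gamma) x with hD
  set a : ℕ → ℝ := fun n => Real.log (x + n) - ∑ k ∈ Finset.range n, 1 / (x + k) with ha
  have hupper : ∀ n : ℕ, D ≤ a n := by
    intro n
    have hxn : (0:ℝ) < x + n := by positivity
    have := deriv_logGamma_le hxn
    rw [deriv_logGamma_sum hx n] at this
    simp only [ha]
    linarith
  have hlower : ∀ m : ℕ, a (m + 1) ≤ D + (Real.log (x + (m + 1 : ℕ)) - Real.log (x + m)) := by
    intro m
    have hxm : (0:ℝ) < x + m := by positivity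
    have := le_deriv_logGamma hxm
    have hcast : x + (m : ℝ) + 1 = x + ((m + 1 : ℕ) : ℝ) := by push_cast; ring
    rw [hcast, deriv_logGamma_sum hx (m + 1)] at this
    simp only [ha]
    linarith
  have hgap : Filter.Tendsto
      (fun m : ℕ => Real.log (x + (m + 1 : ℕ)) - Real.log (x + m)) atTop (nhds 0) := by
    have h1 : Filter.Tendsto (fun m : ℕ => (x + ((m + 1 : ℕ) : ℝ)) / (x + m)) atTop (nhds 1) := by
      have hx0 : Filter.Tendsto (fun m : ℕ => 1 / (x + (m : ℝ))) atTop (nhds 0) :=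
        tendsto_one_div_add x
      have : Filter.Tendsto (fun m : ℕ => 1 / (x + (m : ℝ)) + 1) atTop (nhds 1) := by
        simpa using hx0.add tendsto_const_nhds
      apply this.congr
      intro m
      have hxm : (0:ℝ) < x + m := by positivity
      field_simp
      push_cast
      ring
    have h2 := (Real.continuousAt_log one_ne_zero).tendsto.comp h1
    rw [Real.log_one] at h2
    apply h2.congr
    intro m
    have hxm : (0:ℝ) < x + m := by positivity
    have hxm1 : (0:ℝ) < x + ((m + 1 : ℕ) : ℝ) := by positivity
    simp only [Function.comp_apply]
    rw [Real.log_div hxm1.ne' hxm.ne']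
  have hsq : Filter.Tendsto (fun m : ℕ => a (m + 1)) atTop (nhds D) := by
    apply tendsto_of_tendsto_of_tendsto_of_le_of_le
      (tendsto_const_nhds : Filter.Tendsto (fun _ : ℕ => D) atTop (nhds D))
      (by simpa using (tendsto_const_nhds (x := D)).add hgap)
      (fun m => hupper (m + 1)) hlower
  have hsq' : Filter.Tendsto (fun m : ℕ => a (m + 1)) atTop (nhds (psi0 x)) :=
    (tendsto_aseq hx).comp (tendsto_add_atTop_nat 1)
  exact tendsto_nhds_unique hsq hsq'

end Stmt6Aux

namespace Stmt6Aux

lemma hasDerivAt_term0 {n : ℕ} {y : ℝ} (hy : 0 < y) :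
    HasDerivAt (fun z : ℝ => 1 / ((n : ℝ) + 1) - 1 / (z + n)) (1 / (y + n) ^ 2) y := by
  have hyn : (0:ℝ) < y + n := by positivity
  have h1 : HasDerivAt (fun z : ℝ => z + (n : ℝ)) 1 y := (hasDerivAt_id y).add_const _
  have h2 := h1.inv hyn.ne'
  have h3 := h2.const_sub (1 / ((n : ℝ) + 1))
  have hval : -(-1 / (y + (n : ℝ)) ^ 2) = 1 / (y + n) ^ 2 := by ring
  rw [hval] at h3
  refine h3.congr_of_eventuallyEq (Filter.Eventually.of_forall fun z => ?_)
  simp [one_div]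

lemma hasDerivAt_term1 {n : ℕ} {y : ℝ} (hy : 0 < y) :
    HasDerivAt (fun z : ℝ => 1 / (z + n) ^ 2) (-2 / (y + n) ^ 3) y := by
  have hyn : (0:ℝ) < y + n := by positivity
  have h1 : HasDerivAt (fun z : ℝ => z + (n : ℝ)) 1 y := (hasDerivAt_id y).add_const _
  have h2 := h1.pow 2
  have h3 := h2.inv (by positivity : (y + (n : ℝ)) ^ 2 ≠ 0)
  have h4 : HasDerivAt (fun z : ℝ => 1 / (z + n) ^ 2)
      (-((2 : ℕ) * (y + (n : ℝ)) ^ (2 - 1) * 1) / ((y + (n : ℝ)) ^ 2) ^ 2) y :=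
    h3.congr_of_eventuallyEq (Filter.Eventually.of_forall fun z => by simp [one_div])
  convert h4 using 1
  push_cast
  field_simp

lemma hasDerivAt_psi0 {x : ℝ} (hx : 0 < x) : HasDerivAt psi0 (psi1 x) x := by
  have hx2 : (0:ℝ) < x / 2 := by linarith
  have key : HasDerivAt (fun z : ℝ => ∑' n : ℕ, (1 / ((n : ℝ) + 1) - 1 / (z + n)))
      (∑' n : ℕ, 1 / (x + n) ^ 2) x := by
    apply hasDerivAt_tsum_of_isPreconnected (summable_aux hx2 (le_refl 2)) isOpen_Ioi
      (isPreconnected_Ioi) (fun n y hy => hasDerivAt_term0 (lt_trans hx2 hy))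
      (fun n y hy => ?_) (mem_Ioi.mpr (by linarith : x / 2 < x)) (summable_psi0_term hx)
      (mem_Ioi.mpr (by linarith : x / 2 < x))
    have hymem := mem_Ioi.mp hy
    have hy2 : (0:ℝ) < y + n := by
      have : (0:ℝ) ≤ (n:ℝ) := Nat.cast_nonneg n
      linarith
    have hxn2 : (0:ℝ) < x / 2 + n := by
      have : (0:ℝ) ≤ (n:ℝ) := Nat.cast_nonneg n
      linarith
    rw [Real.norm_eq_abs, abs_of_pos (by positivity)]
    apply one_div_le_one_div_of_le (by positivity)
    apply pow_le_pow_left₀ hxn2.le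
    linarith
  have := key.const_add (-Real.eulerMascheroniConstant)
  exact this

lemma hasDerivAt_psi1 {x : ℝ} (hx : 0 < x) : HasDerivAt psi1 (-2 * T3 x) x := by
  have hx2 : (0:ℝ) < x / 2 := by linarith
  have hu : Summable (fun n : ℕ => 2 * (1 / (x / 2 + n) ^ 3)) :=
    (summable_aux hx2 (by norm_num)).mul_left 2
  have key : HasDerivAt (fun z : ℝ => ∑' n : ℕ, 1 / (z + n) ^ 2)
      (∑' n : ℕ, -2 / (x + n) ^ 3) x := by
    apply hasDerivAt_tsum_of_isPreconnected hu isOpen_Ioi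
      (isPreconnected_Ioi) (fun n y hy => hasDerivAt_term1 (lt_trans hx2 hy))
      (fun n y hy => ?_) (mem_Ioi.mpr (by linarith : x / 2 < x))
      (summable_aux hx (le_refl 2)) (mem_Ioi.mpr (by linarith : x / 2 < x))
    have hymem := mem_Ioi.mp hy
    have hy2 : (0:ℝ) < y + n := by
      have : (0:ℝ) ≤ (n:ℝ) := Nat.cast_nonneg n
      linarith
    have hxn2 : (0:ℝ) < x / 2 + n := by
      have : (0:ℝ) ≤ (n:ℝ) := Nat.cast_nonneg n
      linarith
    rw [Real.norm_eq_abs, neg_div, abs_neg, abs_of_pos (by positivity)]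
    have h1 : 1 / (y + n) ^ 3 ≤ 1 / (x / 2 + n) ^ 3 := by
      apply one_div_le_one_div_of_le (by positivity)
      apply pow_le_pow_left₀ hxn2.le
      linarith
    calc 2 / (y + n) ^ 3 = 2 * (1 / (y + n) ^ 3) := by ring
    _ ≤ 2 * (1 / (x / 2 + n) ^ 3) := by linarith
  have heq : ∑' n : ℕ, -2 / (x + n) ^ 3 = -2 * T3 x := by
    rw [T3, ← tsum_mul_left]
    apply tsum_congr
    intro n
    ring
  rw [heq] at key
  exact key

end Stmt6Aux


theorem stmt6 (x : ℝ) (hx : 0 < x) :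
    0 < (polygamma 1 x) ^ 2 + polygamma 2 x := by
  have heq0 : ∀ y : ℝ, 0 < y → digamma y = Stmt6Aux.psi0 y := fun y hy =>
    Stmt6Aux.deriv_logGamma_eq_psi0 hy
  have hderiv : ∀ y : ℝ, 0 < y → deriv digamma y = Stmt6Aux.psi1 y := by
    intro y hy
    have hev' : digamma =ᶠ[nhds y] Stmt6Aux.psi0 := by
      filter_upwards [Ioi_mem_nhds hy] with z hz using heq0 z hz
    rw [hev'.deriv_eq, (Stmt6Aux.hasDerivAt_psi0 hy).deriv]
  have h1 : polygamma 1 x = Stmt6Aux.psi1 x := by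
    rw [polygamma, iteratedDeriv_one, hderiv x hx]
  have h2 : polygamma 2 x = -2 * Stmt6Aux.T3 x := by
    rw [polygamma, iteratedDeriv_succ, iteratedDeriv_one]
    have hev2 : deriv digamma =ᶠ[nhds x] Stmt6Aux.psi1 := by
      filter_upwards [Ioi_mem_nhds hx] with z hz using hderiv z hz
    rw [hev2.deriv_eq, (Stmt6Aux.hasDerivAt_psi1 hx).deriv]
  rw [h1, h2]
  exact Stmt6Aux.F_pos hx
end

section
/- For all x > 0, ψ''(x) + (ψ'(x + 1/2))^2 < 0, where ψ is the digamma function. -/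
open Real MeasureTheory Filter Set

namespace PsiAux

open Finset Topology

/-! ### Function sequences: derivatives of `logGammaSeq` and their limits -/

noncomputable def t1 (m : ℕ) (x : ℝ) : ℝ := 1 / (x + m + 1) - 1 / (m + 1)

noncomputable def F1 (n : ℕ) (x : ℝ) : ℝ :=
  (Real.log n - harmonic n) - 1 / x - ∑ m ∈ Finset.range n, t1 m x

noncomputable def L1 (x : ℝ) : ℝ :=
  (-Real.eulerMascheroniConstant) - 1 / x - ∑' m : ℕ, t1 m x

noncomputable def F2 (n : ℕ) (x : ℝ) : ℝ :=
  1 / x ^ 2 + ∑ m ∈ Finset.range n, 1 / (x + m + 1) ^ 2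

noncomputable def L2 (x : ℝ) : ℝ := 1 / x ^ 2 + ∑' m : ℕ, 1 / (x + m + 1) ^ 2

noncomputable def F3 (n : ℕ) (x : ℝ) : ℝ :=
  -(2 / x ^ 3) - ∑ m ∈ Finset.range n, 2 / (x + m + 1) ^ 3

noncomputable def L3 (x : ℝ) : ℝ := -(2 / x ^ 3) - ∑' m : ℕ, 2 / (x + m + 1) ^ 3

/-! ### Summability helpers -/

lemma summable_sq : Summable (fun m : ℕ => 1 / ((m : ℝ) + 1) ^ 2) := by
  have := (Real.summable_one_div_nat_pow (p := 2)).mpr one_lt_two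
  have h := (summable_nat_add_iff 1).mpr this
  refine h.congr fun m => ?_
  push_cast
  ring

lemma summable_cube : Summable (fun m : ℕ => 1 / ((m : ℝ) + 1) ^ 3) := by
  refine Summable.of_nonneg_of_le (fun m => by positivity) (fun m => ?_) summable_sq
  have h1 : (0:ℝ) < (m : ℝ) + 1 := by positivity
  have h2 : ((m:ℝ) + 1) ^ 2 ≤ ((m:ℝ)+1) ^ 3 := by
    have : (1:ℝ) ≤ (m:ℝ) + 1 := by have := Nat.cast_nonneg (α := ℝ) m; linarith
    calc ((m:ℝ)+1)^2 = ((m:ℝ)+1)^2 * 1 := by ring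
    _ ≤ ((m:ℝ)+1)^2 * ((m:ℝ)+1) := by nlinarith
    _ = ((m:ℝ)+1)^3 := by ring
  exact one_div_le_one_div_of_le (by positivity) h2

/-! ### Uniform convergence helpers -/

lemma tuo_of_tendsto {c : ℕ → ℝ} {a : ℝ} (h : Tendsto c atTop (𝓝 a)) (s : Set ℝ) :
    TendstoUniformlyOn (fun n (_ : ℝ) => c n) (fun _ => a) atTop s := by
  rw [Metric.tendstoUniformlyOn_iff]
  intro ε hε
  filter_upwards [Metric.tendsto_nhds.mp h ε hε] with n hn x _
  simpa [dist_comm] using hn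

lemma tuo_const (f : ℝ → ℝ) (s : Set ℝ) :
    TendstoUniformlyOn (fun (_ : ℕ) x => f x) f atTop s := by
  rw [Metric.tendstoUniformlyOn_iff]
  intro ε hε
  filter_upwards with n x _
  simpa using hε

/-! ### Locally uniform convergence of the derivative sequences -/

lemma tlu1 : TendstoLocallyUniformlyOn F1 L1 atTop (Ioi 0) := by
  rw [tendstoLocallyUniformlyOn_iff_forall_isCompact isOpen_Ioi]
  intro K hK hKc
  rcases K.eq_empty_or_nonempty with rfl | hne
  · exact tendstoUniformlyOn_empty
  obtain ⟨b, hbK, hb⟩ := hKc.exists_isMaxOn hne continuous_id.continuousOn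
  have hb0 : (0:ℝ) < b := hK hbK
  have hc : TendstoUniformlyOn (fun (n:ℕ) (_:ℝ) => Real.log n - harmonic n)
      (fun _ => -Real.eulerMascheroniConstant) atTop K := by
    apply tuo_of_tendsto
    have := Real.tendsto_harmonic_sub_log.neg
    refine this.congr fun n => by ring
  have hsum : TendstoUniformlyOn (fun n x => ∑ m ∈ Finset.range n, t1 m x)
      (fun x => ∑' m : ℕ, t1 m x) atTop K := by
    apply tendstoUniformlyOn_tsum_nat (u := fun m => b * (1 / ((m:ℝ)+1)^2))
      (summable_sq.mul_left b)
    intro m x hxK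
    have hx : (0:ℝ) < x := hK hxK
    have hm : (0:ℝ) < (m:ℝ) + 1 := by positivity
    have e : t1 m x = -(x / (((m:ℝ)+1) * (x + m + 1))) := by
      have h1 : ((m:ℝ)+1) ≠ 0 := by positivity
      have h2 : x + (m:ℝ) + 1 ≠ 0 := by positivity
      unfold t1
      rw [div_sub_div _ _ h2 h1, show (1*((m:ℝ)+1) - (x+(m:ℝ)+1)*1) = -x by ring,
        show ((x+(m:ℝ)+1)*((m:ℝ)+1)) = ((m:ℝ)+1)*(x+(m:ℝ)+1) by ring, neg_div]
    have hxx : (0:ℝ) ≤ x / (((m:ℝ)+1) * (x + m + 1)) := div_nonneg hx.le (by positivity)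
    rw [e, norm_neg, Real.norm_eq_abs, abs_of_nonneg hxx]
    have : x / (((m:ℝ)+1) * (x + m + 1)) ≤ b / (((m:ℝ)+1)^2) :=
      div_le_div₀ hb0.le (hb hxK) (by positivity) (by nlinarith)
    calc x / (((m:ℝ)+1) * (x + m + 1)) ≤ b / (((m:ℝ)+1)^2) := this
    _ = b * (1 / ((m:ℝ)+1)^2) := by ring
  exact (hc.sub (tuo_const (fun x => 1 / x) K)).sub hsum

lemma tlu2 : TendstoLocallyUniformlyOn F2 L2 atTop (Ioi 0) := by
  apply TendstoUniformlyOn.tendstoLocallyUniformlyOn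
  have hsum : TendstoUniformlyOn (fun n x => ∑ m ∈ Finset.range n, 1 / (x + (m:ℝ) + 1) ^ 2)
      (fun x => ∑' m : ℕ, 1 / (x + (m:ℝ) + 1) ^ 2) atTop (Ioi 0) := by
    apply tendstoUniformlyOn_tsum_nat summable_sq
    intro m x hx
    have hx0 : (0:ℝ) < x := hx
    have h1 : (0:ℝ) < (m:ℝ) + 1 := by positivity
    have h2 : ((m:ℝ) + 1) ^ 2 ≤ (x + m + 1) ^ 2 := by nlinarith
    rw [Real.norm_eq_abs, abs_of_nonneg (by positivity)]
    exact one_div_le_one_div_of_le (by positivity) h2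
  exact (tuo_const (fun x => 1 / x ^ 2) (Ioi 0)).add hsum

lemma tlu3 : TendstoLocallyUniformlyOn F3 L3 atTop (Ioi 0) := by
  apply TendstoUniformlyOn.tendstoLocallyUniformlyOn
  have hsum : TendstoUniformlyOn (fun n x => ∑ m ∈ Finset.range n, 2 / (x + (m:ℝ) + 1) ^ 3)
      (fun x => ∑' m : ℕ, 2 / (x + (m:ℝ) + 1) ^ 3) atTop (Ioi 0) := by
    apply tendstoUniformlyOn_tsum_nat (summable_cube.mul_left 2)
    intro m x hx
    have hx0 : (0:ℝ) < x := hx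
    have h1 : (0:ℝ) < (m:ℝ) + 1 := by positivity
    have h2 : ((m:ℝ) + 1) ^ 3 ≤ (x + m + 1) ^ 3 :=
      pow_le_pow_left₀ (by positivity) (by linarith) 3
    rw [Real.norm_eq_abs, abs_of_nonneg (by positivity)]
    calc 2 / (x + (m:ℝ) + 1) ^ 3 ≤ 2 / ((m:ℝ) + 1) ^ 3 :=
          div_le_div_of_nonneg_left (by norm_num) (by positivity) h2
    _ = 2 * (1 / ((m:ℝ)+1)^3) := by ring
  exact (tuo_const (fun x => -(2 / x ^ 3)) (Ioi 0)).sub hsum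

/-! ### Derivative computations -/

lemma hd1 (n : ℕ) {x : ℝ} (hx : 0 < x) :
    HasDerivAt (fun y => Real.BohrMollerup.logGammaSeq y n) (F1 n x) x := by
  have h2 : ∀ m ∈ Finset.range (n+1),
      HasDerivAt (fun y : ℝ => Real.log (y + m)) ((x + (m:ℝ))⁻¹) x := by
    intro m _
    have hm : x + (m:ℝ) ≠ 0 := by positivity
    have := ((hasDerivAt_id x).add_const (m:ℝ)).log hm
    simpa using this
  have h3 := HasDerivAt.fun_sum h2
  have h1 : HasDerivAt (fun y : ℝ => y * Real.log n) (Real.log n) x := hasDerivAt_mul_const _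
  have key := (h1.add_const (Real.log (Nat.factorial n))).fun_sub h3
  have keq : (fun y => Real.BohrMollerup.logGammaSeq y n)
      = fun y : ℝ => y * Real.log n + Real.log (Nat.factorial n)
          - ∑ m ∈ Finset.range (n+1), Real.log (y + m) := by
    funext y; simp [Real.BohrMollerup.logGammaSeq]
  rw [keq]
  convert! key using 1
  unfold F1 t1
  have hh : ((harmonic n : ℚ) : ℝ) = ∑ m ∈ Finset.range n, 1/((m:ℝ)+1) := by
    rw [harmonic]; push_cast; simp [one_div]
  have e1 : ∑ m ∈ Finset.range (n+1), (x + (m:ℝ))⁻¹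
      = x⁻¹ + ∑ m ∈ Finset.range n, 1/(x + (m:ℝ) + 1) := by
    rw [Finset.sum_range_succ', add_comm]
    congr 1
    · norm_num
    · exact Finset.sum_congr rfl fun i _ => by push_cast; ring
  rw [hh, Finset.sum_sub_distrib, e1]
  ring

lemma hd2 (n : ℕ) {x : ℝ} (hx : 0 < x) : HasDerivAt (F1 n) (F2 n x) x := by
  have ht : ∀ m ∈ Finset.range n,
      HasDerivAt (fun y : ℝ => t1 m y) (-(1/(x+(m:ℝ)+1)^2)) x := by
    intro m _
    have h0 : HasDerivAt (fun y : ℝ => y + (m:ℝ) + 1) 1 x :=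
      ((hasDerivAt_id x).add_const (m:ℝ)).add_const 1
    have h := (h0.inv (by positivity)).sub_const (1/((m:ℝ)+1))
    have e : -1 / (x + (m:ℝ) + 1) ^ 2 = -(1/(x+(m:ℝ)+1)^2) := by ring
    simpa [t1, one_div, e] using h
  have hsum := HasDerivAt.fun_sum ht
  have hinv : HasDerivAt (fun y : ℝ => 1/y) (-(1/x^2)) x := by
    have : (fun y : ℝ => 1/y) = fun y : ℝ => y⁻¹ := by funext y; rw [one_div]
    rw [this]
    simpa [one_div] using hasDerivAt_inv hx.ne'
  have total := ((hasDerivAt_const x ((Real.log n : ℝ) - harmonic n)).fun_sub hinv).fun_sub hsum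
  have feq : F1 n = fun y => ((Real.log n : ℝ) - harmonic n) - 1/y
      - ∑ m ∈ Finset.range n, t1 m y := rfl
  rw [feq]
  convert! total using 1
  unfold F2
  rw [Finset.sum_neg_distrib]
  ring

lemma hd3 (n : ℕ) {x : ℝ} (hx : 0 < x) : HasDerivAt (F2 n) (F3 n x) x := by
  have ht : ∀ m ∈ Finset.range n,
      HasDerivAt (fun y : ℝ => 1/(y+(m:ℝ)+1)^2) (-(2/(x+(m:ℝ)+1)^3)) x := by
    intro m _
    have h0 : HasDerivAt (fun y : ℝ => y + (m:ℝ) + 1) 1 x :=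
      ((hasDerivAt_id x).add_const (m:ℝ)).add_const 1
    have h1 := h0.fun_pow 2
    have h := h1.fun_inv (by positivity)
    have feq : (fun y : ℝ => 1/(y+(m:ℝ)+1)^2) = fun y : ℝ => ((y+(m:ℝ)+1)^2)⁻¹ := by
      funext y; rw [one_div]
    rw [feq]
    convert! h using 1
    have hne : x + (m:ℝ) + 1 ≠ 0 := by positivity
    push_cast
    field_simp
  have hsum := HasDerivAt.fun_sum ht
  have hinv : HasDerivAt (fun y : ℝ => 1/y^2) (-(2/x^3)) x := by
    have feq : (fun y : ℝ => 1/y^2) = fun y : ℝ => (y^2)⁻¹ := by funext y; rw [one_div]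
    rw [feq]
    have h0 : HasDerivAt (fun y : ℝ => y^2) ((2:ℕ) * x ^ (2-1)) x := hasDerivAt_pow 2 x
    have h := h0.fun_inv (by positivity)
    convert! h using 1
    push_cast
    field_simp
  have total := hinv.fun_add hsum
  have feq : F2 n = fun y => 1/y^2 + ∑ m ∈ Finset.range n, 1/(y+(m:ℝ)+1)^2 := rfl
  rw [feq]
  convert! total using 1
  unfold F3
  rw [Finset.sum_neg_distrib]
  ring

/-! ### Identification of `digamma` and its derivatives with explicit series -/

lemma key1 : ∀ x ∈ Ioi (0:ℝ), HasDerivAt (fun y => Real.log (Real.Gamma y)) (L1 x) x := by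
  intro x hx
  exact hasDerivAt_of_tendstoLocallyUniformlyOn isOpen_Ioi tlu1
    (Filter.Eventually.of_forall fun n => fun y hy => hd1 n hy)
    (fun y hy => Real.BohrMollerup.tendsto_log_gamma hy) hx

lemma key2 : ∀ x ∈ Ioi (0:ℝ), HasDerivAt L1 (L2 x) x := by
  intro x hx
  exact hasDerivAt_of_tendstoLocallyUniformlyOn isOpen_Ioi tlu2
    (Filter.Eventually.of_forall fun n => fun y hy => hd2 n hy)
    (fun y hy => tlu1.tendsto_at hy) hx

lemma key3 : ∀ x ∈ Ioi (0:ℝ), HasDerivAt L2 (L3 x) x := by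
  intro x hx
  exact hasDerivAt_of_tendstoLocallyUniformlyOn isOpen_Ioi tlu3
    (Filter.Eventually.of_forall fun n => fun y hy => hd3 n hy)
    (fun y hy => tlu2.tendsto_at hy) hx

lemma digamma_eq {x : ℝ} (hx : 0 < x) : digamma x = L1 x :=
  (key1 x hx).deriv

lemma deriv_digamma_eq {x : ℝ} (hx : 0 < x) : deriv digamma x = L2 x := by
  have hev : digamma =ᶠ[𝓝 x] L1 := by
    filter_upwards [isOpen_Ioi.mem_nhds (mem_Ioi.mpr hx)] with y hy
    exact digamma_eq hy
  rw [hev.deriv_eq]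
  exact (key2 x hx).deriv

lemma polygamma_one_eq {x : ℝ} (hx : 0 < x) : polygamma 1 x = L2 x := by
  rw [polygamma, iteratedDeriv_one]
  exact deriv_digamma_eq hx

lemma polygamma_two_eq {x : ℝ} (hx : 0 < x) : polygamma 2 x = L3 x := by
  rw [polygamma, iteratedDeriv_succ, iteratedDeriv_one]
  have hev : deriv digamma =ᶠ[𝓝 x] L2 := by
    filter_upwards [isOpen_Ioi.mem_nhds (mem_Ioi.mpr hx)] with y hy
    exact deriv_digamma_eq hy
  rw [hev.deriv_eq]
  exact (key3 x hx).deriv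

/-! ### The explicit series representations -/

lemma cast_bound {x : ℝ} (hx : 0 < x) (m : ℕ) : min x 1 * ((m:ℝ) + 1) ≤ x + m := by
  have h1 : min x 1 ≤ x := min_le_left _ _
  have h2 : min x 1 ≤ 1 := min_le_right _ _
  have h3 : (0:ℝ) ≤ (m:ℝ) := Nat.cast_nonneg m
  nlinarith

lemma summable_shift_sq {x : ℝ} (hx : 0 < x) :
    Summable (fun m : ℕ => 1 / (x + (m:ℝ)) ^ 2) := by
  have hc : (0:ℝ) < min x 1 := lt_min hx one_pos
  refine Summable.of_nonneg_of_le (fun m => by positivity) (fun m => ?_)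
    (summable_sq.mul_left (1 / (min x 1)^2))
  have hb := cast_bound hx m
  have h1 : (min x 1 * ((m:ℝ)+1))^2 ≤ (x + m)^2 := pow_le_pow_left₀ (by positivity) hb 2
  calc 1 / (x + (m:ℝ))^2 ≤ 1 / (min x 1 * ((m:ℝ)+1))^2 :=
        one_div_le_one_div_of_le (by positivity) h1
  _ = 1 / (min x 1)^2 * (1 / ((m:ℝ)+1)^2) := by
        rw [mul_pow, one_div_mul_one_div]

lemma summable_shift_cube {x : ℝ} (hx : 0 < x) :
    Summable (fun m : ℕ => 2 / (x + (m:ℝ)) ^ 3) := by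
  have hc : (0:ℝ) < min x 1 := lt_min hx one_pos
  refine Summable.of_nonneg_of_le (fun m => by positivity) (fun m => ?_)
    ((summable_cube.mul_left (1 / (min x 1)^3)).mul_left 2)
  have h1 : (min x 1 * ((m:ℝ)+1))^3 ≤ (x + m)^3 :=
    pow_le_pow_left₀ (by positivity) (cast_bound hx m) 3
  calc 2 / (x + (m:ℝ))^3 ≤ 2 / (min x 1 * ((m:ℝ)+1))^3 := by
        apply div_le_div_of_nonneg_left (by norm_num) (by positivity) h1
  _ = 2 * (1 / (min x 1)^3 * (1 / ((m:ℝ)+1)^3)) := by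
        rw [mul_pow, one_div_mul_one_div]
        ring

lemma hasSum_L2 {x : ℝ} (hx : 0 < x) :
    HasSum (fun m : ℕ => 1 / (x + (m:ℝ)) ^ 2) (L2 x) := by
  have hs := summable_shift_sq hx
  have key := (hasSum_nat_add_iff' (f := fun m : ℕ => 1 / (x + (m:ℝ)) ^ 2) 1).mpr hs.hasSum
  have key2 : HasSum (fun m : ℕ => 1 / (x + (m:ℝ) + 1) ^ 2)
      ((∑' m : ℕ, 1 / (x + (m:ℝ)) ^ 2) - 1 / x ^ 2) := by
    convert! key using 2 with m
    · push_cast; ring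
    · norm_num
  have : L2 x = ∑' m : ℕ, 1 / (x + (m:ℝ)) ^ 2 := by
    rw [L2, key2.tsum_eq]; ring
  rw [this]
  exact hs.hasSum

lemma hasSum_negL3 {x : ℝ} (hx : 0 < x) :
    HasSum (fun m : ℕ => 2 / (x + (m:ℝ)) ^ 3) (-(L3 x)) := by
  have hs := summable_shift_cube hx
  have key := (hasSum_nat_add_iff' (f := fun m : ℕ => 2 / (x + (m:ℝ)) ^ 3) 1).mpr hs.hasSum
  have key2 : HasSum (fun m : ℕ => 2 / (x + (m:ℝ) + 1) ^ 3)
      ((∑' m : ℕ, 2 / (x + (m:ℝ)) ^ 3) - 2 / x ^ 3) := by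
    convert! key using 2 with m
    · push_cast; ring
    · norm_num
  have : -(L3 x) = ∑' m : ℕ, 2 / (x + (m:ℝ)) ^ 3 := by
    rw [L3, key2.tsum_eq]; ring
  rw [this]
  exact hs.hasSum

/-! ### Telescoping sums -/

lemma tendsto_inv_shift {x : ℝ} :
    Tendsto (fun n : ℕ => 1 / (x + (n:ℝ))) atTop (𝓝 0) := by
  have h1 : Tendsto (fun n : ℕ => x + (n:ℝ)) atTop atTop :=
    tendsto_atTop_add_const_left _ x tendsto_natCast_atTop_atTop
  simpa [one_div, Pi.inv_def] using h1.inv_tendsto_atTop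

lemma tele1 {x : ℝ} (hx : 0 < x) :
    HasSum (fun m : ℕ => 1 / (x + (m:ℝ)) - 1 / (x + m + 1)) (1 / x) := by
  have h0 : ∀ m : ℕ, 0 ≤ 1 / (x + (m:ℝ)) - 1 / (x + m + 1) := by
    intro m
    have h3 : (0:ℝ) ≤ (m:ℝ) := Nat.cast_nonneg m
    have : 1 / (x + (m:ℝ) + 1) ≤ 1 / (x + m) :=
      one_div_le_one_div_of_le (by positivity) (by linarith)
    linarith
  rw [hasSum_iff_tendsto_nat_of_nonneg h0]
  have ps : ∀ n : ℕ, ∑ m ∈ Finset.range n, (1 / (x + (m:ℝ)) - 1 / (x + m + 1))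
      = 1 / x - 1 / (x + n) := by
    intro n
    calc ∑ m ∈ Finset.range n, (1 / (x + (m:ℝ)) - 1 / (x + m + 1))
        = ∑ m ∈ Finset.range n,
          ((fun k : ℕ => 1 / (x + (k:ℝ))) m - (fun k : ℕ => 1 / (x + (k:ℝ))) (m+1)) :=
          Finset.sum_congr rfl (fun m _ => by push_cast; ring)
    _ = 1 / (x + ((0:ℕ):ℝ)) - 1 / (x + n) := Finset.sum_range_sub' _ n
    _ = 1 / x - 1 / (x + n) := by norm_num
  simp_rw [ps]
  simpa using tendsto_const_nhds.sub (tendsto_inv_shift (x := x))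

lemma tele2 {x : ℝ} (hx : 0 < x) :
    HasSum (fun m : ℕ => 1 / (x + (m:ℝ))^2 - 1 / (x + m + 1)^2) (1 / x^2) := by
  have h0 : ∀ m : ℕ, 0 ≤ 1 / (x + (m:ℝ))^2 - 1 / (x + m + 1)^2 := by
    intro m
    have h3 : (0:ℝ) ≤ (m:ℝ) := Nat.cast_nonneg m
    have hp : (x + (m:ℝ))^2 ≤ (x + m + 1)^2 := by nlinarith
    have : 1 / (x + (m:ℝ) + 1)^2 ≤ 1 / (x + m)^2 :=
      one_div_le_one_div_of_le (by positivity) hp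
    linarith
  rw [hasSum_iff_tendsto_nat_of_nonneg h0]
  have ps : ∀ n : ℕ, ∑ m ∈ Finset.range n, (1 / (x + (m:ℝ))^2 - 1 / (x + m + 1)^2)
      = 1 / x^2 - 1 / (x + n)^2 := by
    intro n
    calc ∑ m ∈ Finset.range n, (1 / (x + (m:ℝ))^2 - 1 / (x + m + 1)^2)
        = ∑ m ∈ Finset.range n,
          ((fun k : ℕ => 1 / (x + (k:ℝ))^2) m - (fun k : ℕ => 1 / (x + (k:ℝ))^2) (m+1)) :=
          Finset.sum_congr rfl (fun m _ => by push_cast; ring)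
    _ = 1 / (x + ((0:ℕ):ℝ))^2 - 1 / (x + n)^2 := Finset.sum_range_sub' _ n
    _ = 1 / x^2 - 1 / (x + n)^2 := by norm_num
  simp_rw [ps]
  have h2 : Tendsto (fun n : ℕ => 1 / (x + (n:ℝ))^2) atTop (𝓝 0) := by
    have := (tendsto_inv_shift (x := x)).mul (tendsto_inv_shift (x := x))
    simpa [one_div, mul_inv, pow_two] using this
  simpa using tendsto_const_nhds.sub h2

/-! ### The two strict inequalities -/

lemma L2_lt {x : ℝ} (hx : 0 < x) : L2 (x + 1/2) < 1 / x := by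
  have hy : (0:ℝ) < x + 1/2 := by linarith
  have hle : ∀ m : ℕ, 1 / (x + 1/2 + (m:ℝ))^2 ≤ 1 / (x + (m:ℝ)) - 1 / (x + m + 1) := by
    intro m
    have h3 : (0:ℝ) ≤ (m:ℝ) := Nat.cast_nonneg m
    have hne1 : x + (m:ℝ) ≠ 0 := by positivity
    have hne2 : x + (m:ℝ) + 1 ≠ 0 := by positivity
    have e : 1 / (x + (m:ℝ)) - 1 / (x + m + 1) = 1 / ((x + (m:ℝ)) * (x + m + 1)) := by
      rw [div_sub_div _ _ hne1 hne2,
        show (1*(x+(m:ℝ)+1) - (x+(m:ℝ))*1) = (1:ℝ) by ring]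
    rw [e]
    apply le_of_lt
    apply one_div_lt_one_div_of_lt (by positivity)
    nlinarith
  have hstrict : 1 / (x + 1/2 + ((0:ℕ):ℝ))^2 < 1 / (x + ((0:ℕ):ℝ)) - 1 / (x + (0:ℕ) + 1) := by
    have hne1 : x ≠ 0 := hx.ne'
    have e : 1 / (x + ((0:ℕ):ℝ)) - 1 / (x + ((0:ℕ):ℝ) + 1) = 1 / (x * (x + 1)) := by
      push_cast
      rw [show x + (0:ℝ) = x by ring]
      rw [div_sub_div _ _ hne1 (by positivity), show (1*(x+1) - x*1) = (1:ℝ) by ring]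
    rw [e]
    apply one_div_lt_one_div_of_lt (by positivity)
    push_cast
    nlinarith
  exact hasSum_lt hle hstrict (hasSum_L2 hy) (tele1 hx)

lemma L2_nonneg {x : ℝ} (hx : 0 < x) : 0 ≤ L2 x :=
  (hasSum_L2 hx).nonneg fun m => by positivity

lemma negL3_gt {x : ℝ} (hx : 0 < x) : 1 / x^2 < -(L3 x) := by
  have hle : ∀ m : ℕ, 1 / (x + (m:ℝ))^2 - 1 / (x + m + 1)^2 ≤ 2 / (x + (m:ℝ))^3 := by
    intro m
    have h3 : (0:ℝ) ≤ (m:ℝ) := Nat.cast_nonneg m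
    set a : ℝ := x + (m:ℝ) with ha
    have ha0 : 0 < a := by positivity
    have e : 1 / a^2 - 1 / (a + 1)^2 = (2*a+1) / (a^2 * (a+1)^2) := by
      rw [div_sub_div _ _ (by positivity) (by positivity),
        show (1*(a+1)^2 - a^2*1) = 2*a+1 by ring]
    rw [e]
    apply le_of_lt
    rw [div_lt_div_iff₀ (by positivity) (by positivity)]
    nlinarith [pow_pos ha0 2, pow_pos ha0 3]
  have hstrict : 1 / (x + ((0:ℕ):ℝ))^2 - 1 / (x + (0:ℕ) + 1)^2 < 2 / (x + ((0:ℕ):ℝ))^3 := by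
    have e : 1 / (x+((0:ℕ):ℝ))^2 - 1 / (x+((0:ℕ):ℝ)+1)^2 = (2*x+1) / (x^2 * (x+1)^2) := by
      push_cast
      rw [add_zero, div_sub_div _ _ (by positivity) (by positivity),
        show (1*(x+1)^2 - x^2*1) = 2*x+1 by ring]
    rw [e]
    push_cast
    rw [add_zero, div_lt_div_iff₀ (by positivity) (by positivity)]
    nlinarith [pow_pos hx 2, pow_pos hx 3]
  exact hasSum_lt hle hstrict (tele2 hx) (hasSum_negL3 hx)

end PsiAux

theorem stmt7 (x : ℝ) (hx : 0 < x) :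
    polygamma 2 x + (polygamma 1 (x + 1 / 2)) ^ 2 < 0 := by
  have hy : (0:ℝ) < x + 1/2 := by linarith
  rw [PsiAux.polygamma_two_eq hx, PsiAux.polygamma_one_eq hy]
  have h1 : PsiAux.L2 (x + 1/2) < 1 / x := PsiAux.L2_lt hx
  have h2 : 0 ≤ PsiAux.L2 (x + 1/2) := PsiAux.L2_nonneg hy
  have h3 : 1 / x^2 < -(PsiAux.L3 x) := PsiAux.negL3_gt hx
  have h4 : (PsiAux.L2 (x + 1/2))^2 < (1/x)^2 := by
    apply pow_lt_pow_left₀ h1 h2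
    norm_num
  have h5 : (1/x)^2 = 1/x^2 := by rw [div_pow]; norm_num
  linarith
end

section
/- For all x > 0, ln(x + 1/2) - 1/x < ψ(x) < ln(x + e^{-γ}) - 1/x, where γ is the Euler–Mascheroni constant. -/
open Real MeasureTheory Filter Set
open Topology

namespace Stmt8Aux

local notation "γ" => Real.eulerMascheroniConstant

/-- Monotonicity helper on `[0, ∞)`. -/
lemma nonneg_of_deriv {F F' : ℝ → ℝ} (h0 : F 0 = 0)
    (hd : ∀ u : ℝ, 0 ≤ u → HasDerivAt F (F' u) u)
    (hpos : ∀ u : ℝ, 0 < u → 0 ≤ F' u) :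
    ∀ u : ℝ, 0 ≤ u → 0 ≤ F u := by
  intro u hu
  have hmono : MonotoneOn F (Ici 0) := by
    refine monotoneOn_of_deriv_nonneg (convex_Ici 0)
      (fun y hy => (hd y hy).continuousAt.continuousWithinAt)
      (fun y hy => ?_) (fun y hy => ?_)
    · rw [interior_Ici] at hy
      exact ((hd y (le_of_lt hy)).differentiableAt).differentiableWithinAt
    · rw [interior_Ici] at hy
      rw [(hd y hy.le).deriv]
      exact hpos y hy
  simpa [h0] using hmono self_mem_Ici (mem_Ici.2 hu) hu

/-- Strict version. -/
lemma pos_of_deriv {F F' : ℝ → ℝ} (h0 : F 0 = 0)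
    (hd : ∀ u : ℝ, 0 ≤ u → HasDerivAt F (F' u) u)
    (hpos : ∀ u : ℝ, 0 < u → 0 < F' u) :
    ∀ u : ℝ, 0 < u → 0 < F u := by
  intro u hu
  have hmono : StrictMonoOn F (Ici 0) := by
    refine strictMonoOn_of_deriv_pos (convex_Ici 0)
      (fun y hy => (hd y hy).continuousAt.continuousWithinAt) (fun y hy => ?_)
    · rw [interior_Ici] at hy
      rw [(hd y hy.le).deriv]
      exact hpos y hy
  simpa [h0] using hmono self_mem_Ici (mem_Ici.2 hu.le) hu

lemma hasDerivAt_log_one_add {u : ℝ} (hu : 0 ≤ u) :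
    HasDerivAt (fun v : ℝ => log (1 + v)) (1 / (1 + u)) u := by
  have h1 : HasDerivAt (fun v : ℝ => 1 + v) 1 u := (hasDerivAt_id u).const_add 1
  simpa using h1.log (by linarith : (1:ℝ) + u ≠ 0)

/-- Padé [1/1] lower bound : `2u/(u+2) < log(1+u)` for `u > 0`. -/
lemma log_lb_pade11 {u : ℝ} (hu : 0 < u) : 2 * u / (u + 2) < log (1 + u) := by
  have key := pos_of_deriv (F := fun v => log (1 + v) - 2 * v / (v + 2))
    (F' := fun v => 1 / (1 + v) - (2 * (v + 2) - 2 * v * 1) / (v + 2) ^ 2)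
    (by norm_num) ?_ ?_ u hu
  · linarith [key]
  · intro v hv
    refine (hasDerivAt_log_one_add hv).sub ?_
    have := ((hasDerivAt_id v).const_mul (2:ℝ)).div ((hasDerivAt_id v).add_const 2)
      (by simp only [id_eq]; linarith)
    exact this.congr_deriv (by simp only [id_eq]; ring)
  · intro v hv
    show (0:ℝ) < 1 / (1 + v) - (2 * (v + 2) - 2 * v * 1) / (v + 2) ^ 2
    have h : 1 / (1 + v) - (2 * (v + 2) - 2 * v * 1) / (v + 2) ^ 2
        = v ^ 2 / ((1 + v) * (v + 2) ^ 2) := by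
      field_simp
      ring
    rw [h]; positivity

/-- Degree-8 alternating lower bound for `log(1+u)`, valid for all `u ≥ 0`. -/
lemma log_lb_alt8 {u : ℝ} (hu : 0 ≤ u) :
    u - u^2/2 + u^3/3 - u^4/4 + u^5/5 - u^6/6 + u^7/7 - u^8/8 ≤ log (1 + u) := by
  have key := nonneg_of_deriv
    (F := fun v => log (1 + v) - (v - v^2/2 + v^3/3 - v^4/4 + v^5/5 - v^6/6 + v^7/7 - v^8/8))
    (F' := fun v => 1 / (1 + v) -
      (1 - 2*v/2 + 3*v^2/3 - 4*v^3/4 + 5*v^4/5 - 6*v^5/6 + 7*v^6/7 - 8*v^7/8))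
    (by norm_num) ?_ ?_ u hu
  · linarith [key]
  · intro v hv
    refine (hasDerivAt_log_one_add hv).sub ?_
    have : HasDerivAt (fun w : ℝ => w - w^2/2 + w^3/3 - w^4/4 + w^5/5 - w^6/6 + w^7/7 - w^8/8)
        (1 - 2*v/2 + 3*v^2/3 - 4*v^3/4 + 5*v^4/5 - 6*v^5/6 + 7*v^6/7 - 8*v^7/8) v := by
      have h1 := hasDerivAt_id v
      have p2 := (hasDerivAt_pow 2 v).div_const 2
      have p3 := (hasDerivAt_pow 3 v).div_const 3
      have p4 := (hasDerivAt_pow 4 v).div_const 4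
      have p5 := (hasDerivAt_pow 5 v).div_const 5
      have p6 := (hasDerivAt_pow 6 v).div_const 6
      have p7 := (hasDerivAt_pow 7 v).div_const 7
      have p8 := (hasDerivAt_pow 8 v).div_const 8
      refine (((((((h1.sub p2).add p3).sub p4).add p5).sub p6).add p7).sub p8).congr_deriv ?_
      push_cast
      ring
    exact this
  · intro v hv
    show (0:ℝ) ≤ 1 / (1 + v) -
        (1 - 2*v/2 + 3*v^2/3 - 4*v^3/4 + 5*v^4/5 - 6*v^5/6 + 7*v^6/7 - 8*v^7/8)
    have h : 1 / (1 + v) -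
        (1 - 2*v/2 + 3*v^2/3 - 4*v^3/4 + 5*v^4/5 - 6*v^5/6 + 7*v^6/7 - 8*v^7/8)
        = v^8 / (1 + v) := by
      field_simp
      ring
    rw [h]; positivity

/-- Padé [4/3] upper bound for `log(1+u)`, `u ≥ 0`. -/
lemma log_ub_pade43 {u : ℝ} (hu : 0 ≤ u) :
    log (1 + u) ≤ (420*u + 510*u^2 + 140*u^3 + 3*u^4) / (420 + 720*u + 360*u^2 + 48*u^3) := by
  have hQ : ∀ v : ℝ, 0 ≤ v → (0:ℝ) < 420 + 720*v + 360*v^2 + 48*v^3 := by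
    intro v hv; positivity
  have key := nonneg_of_deriv
    (F := fun v => (420*v + 510*v^2 + 140*v^3 + 3*v^4) / (420 + 720*v + 360*v^2 + 48*v^3)
      - log (1 + v))
    (F' := fun v => ((420 + 510*(2*v) + 140*(3*v^2) + 3*(4*v^3)) * (420 + 720*v + 360*v^2 + 48*v^3)
      - (420*v + 510*v^2 + 140*v^3 + 3*v^4) * (720 + 360*(2*v) + 48*(3*v^2)))
      / (420 + 720*v + 360*v^2 + 48*v^3) ^ 2 - 1 / (1 + v))
    (by norm_num) ?_ ?_ u hu
  · linarith [key]
  · intro v hv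
    refine HasDerivAt.sub ?_ (hasDerivAt_log_one_add hv)
    have hN : HasDerivAt (fun w : ℝ => 420*w + 510*w^2 + 140*w^3 + 3*w^4)
        (420 + 510*(2*v) + 140*(3*v^2) + 3*(4*v^3)) v := by
      have p1 := (hasDerivAt_id v).const_mul (420:ℝ)
      have p2 := (hasDerivAt_pow 2 v).const_mul (510:ℝ)
      have p3 := (hasDerivAt_pow 3 v).const_mul (140:ℝ)
      have p4 := (hasDerivAt_pow 4 v).const_mul (3:ℝ)
      refine (((p1.add p2).add p3).add p4).congr_deriv ?_
      push_cast; ring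
    have hD : HasDerivAt (fun w : ℝ => 420 + 720*w + 360*w^2 + 48*w^3)
        (720 + 360*(2*v) + 48*(3*v^2)) v := by
      have p1 := ((hasDerivAt_id v).const_mul (720:ℝ)).const_add (420:ℝ)
      have p2 := (hasDerivAt_pow 2 v).const_mul (360:ℝ)
      have p3 := (hasDerivAt_pow 3 v).const_mul (48:ℝ)
      refine ((p1.add p2).add p3).congr_deriv ?_
      push_cast; ring
    exact hN.div hD (hQ v hv).ne'
  · intro v hv
    have hq := hQ v hv.le
    show (0:ℝ) ≤ ((420 + 510*(2*v) + 140*(3*v^2) + 3*(4*v^3)) * (420 + 720*v + 360*v^2 + 48*v^3)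
      - (420*v + 510*v^2 + 140*v^3 + 3*v^4) * (720 + 360*(2*v) + 48*(3*v^2)))
      / (420 + 720*v + 360*v^2 + 48*v^3) ^ 2 - 1 / (1 + v)
    have h : ((420 + 510*(2*v) + 140*(3*v^2) + 3*(4*v^3)) * (420 + 720*v + 360*v^2 + 48*v^3)
      - (420*v + 510*v^2 + 140*v^3 + 3*v^4) * (720 + 360*(2*v) + 48*(3*v^2)))
      / (420 + 720*v + 360*v^2 + 48*v^3) ^ 2 - 1 / (1 + v)
      = 144 * v^7 / ((420 + 720*v + 360*v^2 + 48*v^3)^2 * (1 + v)) := by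
      field_simp
      ring
    rw [h]; positivity



/-- upper bound for `log(1+s) - log(1-s)` by `2s + (2/3)s³/(1-s²)` on `[0,1/2]`. -/
lemma artanh_ub {s : ℝ} (h0 : 0 ≤ s) (h1 : s ≤ 1/2) :
    log (1 + s) - log (1 - s) ≤ 2*s + (2/3)*s^3/(1 - s^2) := by
  set F : ℝ → ℝ := fun v => 2*v + (2/3)*v^3/(1 - v^2) - (log (1 + v) - log (1 - v)) with hF
  have hd : ∀ v ∈ Icc (0:ℝ) (1/2), HasDerivAt F
      (2 + ((2/3)*(3*v^2) * (1 - v^2) - (2/3)*v^3 * (0 - 2*v)) / (1 - v^2)^2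
        - (1/(1+v) - (0 - 1)/(1 - v))) v := by
    intro v hv
    obtain ⟨hv0, hv1⟩ := hv
    have hne1 : (1:ℝ) + v ≠ 0 := by linarith
    have hne2 : (1:ℝ) - v ≠ 0 := by linarith
    have hne3 : (1:ℝ) - v^2 ≠ 0 := by nlinarith
    have d1 : HasDerivAt (fun w : ℝ => 2*w) 2 v := by
      simpa using (hasDerivAt_id v).const_mul (2:ℝ)
    have d2 : HasDerivAt (fun w : ℝ => (2/3)*w^3) ((2/3)*(3*v^2)) v := by
      simpa using (hasDerivAt_pow 3 v).const_mul ((2:ℝ)/3)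
    have d3 : HasDerivAt (fun w : ℝ => 1 - w^2) (0 - 2*v) v := by
      simpa using (hasDerivAt_pow 2 v).const_sub (1:ℝ)
    have d4 : HasDerivAt (fun w : ℝ => log (1 + w)) (1/(1+v)) v := by
      have h1 : HasDerivAt (fun w : ℝ => 1 + w) 1 v := (hasDerivAt_id v).const_add 1
      simpa using h1.log hne1
    have d5 : HasDerivAt (fun w : ℝ => log (1 - w)) ((0-1)/(1 - v)) v := by
      have h1 : HasDerivAt (fun w : ℝ => 1 - w) (0 - 1) v :=
        (hasDerivAt_const v (1:ℝ)).sub (hasDerivAt_id v)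
      simpa using h1.log hne2
    exact (d1.add (d2.div d3 hne3)).sub (d4.sub d5)
  have hcont : ContinuousOn F (Icc 0 (1/2)) :=
    fun v hv => ((hd v hv).continuousAt).continuousWithinAt
  have hmono : MonotoneOn F (Icc 0 (1/2)) := by
    refine monotoneOn_of_deriv_nonneg (convex_Icc 0 (1/2)) hcont (fun v hv => ?_) (fun v hv => ?_)
    · rw [interior_Icc] at hv
      exact ((hd v ⟨hv.1.le, hv.2.le⟩).differentiableAt).differentiableWithinAt
    · rw [interior_Icc] at hv
      obtain ⟨hv0, hv1⟩ := hv
      rw [(hd v ⟨hv0.le, hv1.le⟩).deriv]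
      have hne3 : (0:ℝ) < 1 - v^2 := by nlinarith
      have hb1 : (1:ℝ) + v ≠ 0 := by linarith
      have hb2 : (1:ℝ) - v ≠ 0 := by linarith
      have hb3 : (1:ℝ) - v^2 ≠ 0 := hne3.ne'
      have key : 2 + ((2/3)*(3*v^2) * (1 - v^2) - (2/3)*v^3 * (0 - 2*v)) / (1 - v^2)^2
          - (1/(1+v) - (0 - 1)/(1 - v)) = (4/3)*v^4/(1 - v^2)^2 := by
        field_simp
        ring
      rw [key]; positivity
  have h2 := hmono (left_mem_Icc.2 (by norm_num)) (⟨h0, h1⟩ : s ∈ Icc (0:ℝ) (1/2)) h0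
  have hF0 : F 0 = 0 := by norm_num [hF]
  rw [hF0] at h2
  simp only [hF] at h2
  linarith

/-- `log(τ+1/2) - log(τ-1/2) ≤ 1/τ + (1/24)(1/((τ-1)τ) - 1/(τ(τ+1)))` for `τ ≥ 2`. -/
lemma central_log_ub {τ : ℝ} (hτ : 2 ≤ τ) :
    log (τ + 1/2) - log (τ - 1/2) ≤ 1/τ + (1/24)*(1/((τ-1)*τ) - 1/(τ*(τ+1))) := by
  have hτ0 : (0:ℝ) < τ := by linarith
  set s : ℝ := 1/(2*τ) with hs
  have hs0 : 0 ≤ s := by positivity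
  have hs1 : s ≤ 1/2 := by
    rw [hs]
    rw [div_le_div_iff₀ (by linarith) (by norm_num)]
    linarith
  have e1 : τ + 1/2 = τ * (1 + s) := by
    rw [hs]; field_simp
  have e2 : τ - 1/2 = τ * (1 - s) := by
    rw [hs]; field_simp
  have hs1' : (0:ℝ) < 1 + s := by linarith
  have hs2' : (0:ℝ) < 1 - s := by linarith
  rw [e1, e2, log_mul hτ0.ne' hs1'.ne', log_mul hτ0.ne' hs2'.ne']
  have h3 := artanh_ub hs0 hs1
  have e3 : 2*s = 1/τ := by rw [hs]; field_simp
  have e4 : (2/3)*s^3/(1 - s^2) ≤ (1/24)*(1/((τ-1)*τ) - 1/(τ*(τ+1))) := by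
    have h5 : (2/3)*s^3/(1 - s^2) = 1/(12*τ*(τ^2 - 1/4)) := by
      rw [hs]
      rw [div_eq_div_iff (by nlinarith [sq_nonneg τ]) (by nlinarith)]
      field_simp
      ring
    have h6 : (1/24)*(1/((τ-1)*τ) - 1/(τ*(τ+1))) = 1/(12*τ*(τ^2 - 1)) := by
      have n1 : τ - 1 ≠ 0 := by nlinarith
      have n2 : τ + 1 ≠ 0 := by nlinarith
      have n3 : τ ≠ 0 := hτ0.ne'
      have n4 : ((τ-1)*τ) ≠ 0 := mul_ne_zero n1 n3
      have n5 : (τ*(τ+1)) ≠ 0 := mul_ne_zero n3 n2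
      have n6 : (12*τ*(τ^2 - 1)) ≠ 0 := by
        have : (0:ℝ) < 12*τ*(τ^2-1) := by nlinarith
        exact this.ne'
      rw [div_sub_div _ _ n4 n5, mul_div_assoc', div_eq_div_iff (mul_ne_zero n4 n5) n6]
      ring
    rw [h5, h6]
    apply one_div_le_one_div_of_le (by nlinarith)
    nlinarith
  linarith



lemma tendsto_log_shift (a b : ℝ) :
    Tendsto (fun n : ℕ => log ((n:ℝ) + a) - log ((n:ℝ) + b)) atTop (𝓝 0) := by
  have h1 : Tendsto (fun n : ℕ => (n:ℝ) + b) atTop atTop :=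
    tendsto_atTop_add_const_right _ b tendsto_natCast_atTop_atTop
  have h4 : Tendsto (fun n : ℕ => (a - b) * ((n:ℝ) + b)⁻¹) atTop (𝓝 0) := by
    simpa using (h1.inv_tendsto_atTop).const_mul (a - b)
  have h2 : Tendsto (fun n : ℕ => 1 + (a - b) * ((n:ℝ) + b)⁻¹) atTop (𝓝 1) := by
    simpa using tendsto_const_nhds.add h4
  have h5 : Tendsto (fun n : ℕ => log (1 + (a - b) * ((n:ℝ) + b)⁻¹)) atTop (𝓝 0) := by
    have := (Real.continuousAt_log (by norm_num : (1:ℝ) ≠ 0)).tendsto.comp h2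
    simpa [Function.comp_def] using this
  apply h5.congr'
  filter_upwards [eventually_gt_atTop (⌈|a| + |b|⌉₊)] with n hn
  have hna : |a| + |b| + 1 ≤ (n:ℝ) := by
    have h1 : (⌈|a| + |b|⌉₊ : ℕ) + 1 ≤ n := hn
    have h2 : ((⌈|a| + |b|⌉₊ : ℕ) : ℝ) + 1 ≤ (n:ℝ) := by exact_mod_cast h1
    have h3 : |a| + |b| ≤ ((⌈|a| + |b|⌉₊ : ℕ) : ℝ) := Nat.le_ceil _
    linarith
  have hb0 : (0:ℝ) < (n:ℝ) + b := by
    have h := neg_abs_le b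
    nlinarith [abs_nonneg a]
  have ha0 : (0:ℝ) < (n:ℝ) + a := by
    have h := neg_abs_le a
    nlinarith [abs_nonneg b]
  rw [show 1 + (a - b) * ((n:ℝ) + b)⁻¹ = ((n:ℝ) + a)/((n:ℝ) + b) by field_simp; ring]
  rw [log_div ha0.ne' hb0.ne']

/-- telescoping sum. -/
lemma hasSum_telescope {g : ℕ → ℝ} (hg : Tendsto g atTop (𝓝 0))
    (hm : ∀ n, g (n+1) ≤ g n) : HasSum (fun n => g n - g (n+1)) (g 0) := by
  rw [hasSum_iff_tendsto_nat_of_nonneg (fun n => sub_nonneg.2 (hm n))]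
  have : (fun n => ∑ i ∈ Finset.range n, (g i - g (i+1))) = fun n => g 0 - g n := by
    funext n; exact Finset.sum_range_sub' g n
  rw [this]
  simpa using tendsto_const_nhds.sub hg


/-- The sequence `harmonic n - log (n + 1/2)` -/
noncomputable def aa (n : ℕ) : ℝ := (harmonic n : ℝ) - log ((n:ℝ) + 1/2)

/-- positivity of the lower-bound telescoping bracket -/
lemma brA_pos {t : ℝ} (ht : 0 ≤ t) : 1/(t+1) < log (t + 3/2) - log (t + 1/2) := by
  have h1 : log (t+3/2) - log (t+1/2) = log (1 + 1/(t+1/2)) := by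
    rw [← log_div (by linarith) (by linarith)]
    congr 1
    field_simp
    ring
  rw [h1]
  have h2 := log_lb_pade11 (u := 1/(t+1/2)) (by positivity)
  have h3 : 2*(1/(t+1/2))/((1/(t+1/2))+2) = 1/(t+1) := by
    rw [div_eq_div_iff (by positivity) (by linarith)]
    field_simp
    ring
  rw [h3] at h2
  exact h2

lemma aa_succ_lt (n : ℕ) : aa (n+1) < aa n := by
  have h := brA_pos (t := (n:ℝ)) (Nat.cast_nonneg n)
  have hh : (harmonic (n+1) : ℝ) = (harmonic n : ℝ) + 1/((n:ℝ)+1) := by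
    push_cast [harmonic_succ]
    ring
  simp only [aa, hh]
  have e1 : ((n+1:ℕ):ℝ) + 1/2 = (n:ℝ) + 3/2 := by push_cast; ring
  rw [e1]
  linarith

lemma aa_tendsto : Tendsto aa atTop (𝓝 γ) := by
  have h1 := Real.tendsto_harmonic_sub_log
  have h2 := tendsto_log_shift (1/2) 0
  have h3 : Tendsto (fun n : ℕ => ((harmonic n : ℝ) - log n) -
      (log ((n:ℝ) + 1/2) - log ((n:ℝ) + 0))) atTop (𝓝 (γ - 0)) := h1.sub h2
  simp only [add_zero, sub_zero] at h3
  apply h3.congr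
  intro n
  simp only [aa]
  ring

lemma gamma_lt : γ < 49/20 - log (13/2) := by
  have anti : StrictAnti aa := strictAnti_nat_of_succ_lt aa_succ_lt
  have h7 : γ ≤ aa 7 := by
    apply le_of_tendsto aa_tendsto
    filter_upwards [eventually_ge_atTop 7] with m hm
    exact anti.antitone hm
  have h6 : aa 7 < aa 6 := anti (by norm_num)
  have e6 : aa 6 = 49/20 - log (13/2) := by
    have hh : (harmonic 6 : ℚ) = 49/20 := by norm_num [harmonic]
    simp only [aa, hh]
    norm_num
  linarith [e6 ▸ (lt_of_le_of_lt h7 h6)]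

lemma gamma_ge : 49/20 - log (13/2) - 1/1008 ≤ γ := by
  have key : ∀ m : ℕ, aa 6 - aa (6+m) ≤ 1/1008 - 1/(24*((m:ℝ)+6)*((m:ℝ)+7)) := by
    intro m
    induction m with
    | zero => norm_num
    | succ k ih =>
      have step : aa (6+k) - aa (6+(k+1)) ≤
          1/(24*((k:ℝ)+6)*((k:ℝ)+7)) - 1/(24*((k:ℝ)+7)*((k:ℝ)+8)) := by
        have hh : (harmonic (6+k+1) : ℝ) = (harmonic (6+k) : ℝ) + 1/((k:ℝ)+7) := by
          push_cast [harmonic_succ]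
          ring
        have e0 : (6+(k+1) : ℕ) = (6+k)+1 := rfl
        rw [e0]
        simp only [aa, hh]
        have hτ := central_log_ub (τ := (k:ℝ)+7) (by norm_num [Nat.cast_nonneg]; linarith [Nat.cast_nonneg (α := ℝ) k])
        have e1 : ((6+k:ℕ):ℝ) + 1/2 = ((k:ℝ)+7) - 1/2 := by push_cast; ring
        have e2 : (((6+k)+1:ℕ):ℝ) + 1/2 = ((k:ℝ)+7) + 1/2 := by push_cast; ring
        rw [e1, e2]
        have e3 : 1/(24*((k:ℝ)+6)*((k:ℝ)+7)) - 1/(24*((k:ℝ)+7)*((k:ℝ)+8))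
            = (1/24)*(1/((((k:ℝ)+7)-1)*((k:ℝ)+7)) - 1/(((k:ℝ)+7)*(((k:ℝ)+7)+1))) := by
          have n1 : ((k:ℝ)+6) ≠ 0 := by positivity
          have n2 : ((k:ℝ)+7) ≠ 0 := by positivity
          have n3 : ((k:ℝ)+8) ≠ 0 := by positivity
          have e4 : (((k:ℝ)+7)-1) = ((k:ℝ)+6) := by ring
          have e5 : (((k:ℝ)+7)+1) = ((k:ℝ)+8) := by ring
          rw [e4, e5]
          field_simp
        rw [e3]
        linarith [hτ]
      have e6 : ((k+1:ℕ):ℝ) + 6 = (k:ℝ)+7 := by push_cast; ring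
      have e7 : ((k+1:ℕ):ℝ) + 7 = (k:ℝ)+8 := by push_cast; ring
      rw [e6, e7]
      linarith
  have hlim : Tendsto (fun m : ℕ => aa (6+m)) atTop (𝓝 γ) := by
    have := aa_tendsto.comp (tendsto_add_atTop_nat 6)
    apply this.congr
    intro m
    simp [Nat.add_comm]
  have e6 : aa 6 = 49/20 - log (13/2) := by
    have hh : (harmonic 6 : ℚ) = 49/20 := by norm_num [harmonic]
    simp only [aa, hh]
    norm_num
  apply ge_of_tendsto hlim
  filter_upwards with m
  have hk := key m
  have hR : (0:ℝ) < 1/(24*((m:ℝ)+6)*((m:ℝ)+7)) := by positivity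
  rw [e6] at hk
  linarith

lemma log_one_sub_bound {x : ℝ} (h0 : 0 < x) (h1 : x < 1) :
    -(∑ i ∈ Finset.range 7, x^(i+1)/(i+1)) - x^8/(1-x) ≤ log (1-x) ∧
    log (1-x) ≤ -(∑ i ∈ Finset.range 7, x^(i+1)/(i+1)) + x^8/(1-x) := by
  have h := Real.abs_log_sub_add_sum_range_le (x := x) (by rw [abs_of_pos h0]; exact h1) 7
  rw [abs_of_pos h0] at h
  rw [abs_le] at h
  constructor <;> linarith [h.1, h.2]

lemma log132_lb : (1.8718005:ℝ) ≤ log (13/2) := by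
  have h := (log_one_sub_bound (x := 3/16) (by norm_num) (by norm_num)).1
  have hS : ∑ i ∈ Finset.range 7, ((3:ℝ)/16)^(i+1)/((i:ℝ)+1) = 1950819711/9395240960 := by
    norm_num [Finset.sum_range_succ]
  rw [hS] at h
  have e1 : (13:ℝ)/2 = 2^3 * (1 - 3/16) := by norm_num
  rw [e1, log_mul (by norm_num) (by norm_num), log_pow]
  have h2 := Real.log_two_gt_d9
  push_cast
  norm_num at h ⊢
  linarith

lemma log132_ub : log (13/2) ≤ (1.8718043:ℝ) := by
  have h := (log_one_sub_bound (x := 3/16) (by norm_num) (by norm_num)).2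
  have hS : ∑ i ∈ Finset.range 7, ((3:ℝ)/16)^(i+1)/((i:ℝ)+1) = 1950819711/9395240960 := by
    norm_num [Finset.sum_range_succ]
  rw [hS] at h
  have e1 : (13:ℝ)/2 = 2^3 * (1 - 3/16) := by norm_num
  rw [e1, log_mul (by norm_num) (by norm_num), log_pow]
  have h2 := Real.log_two_lt_d9
  push_cast
  norm_num at h ⊢
  linarith

lemma logA_lb : (0.5785692:ℝ) ≤ log (10000/5607) := by
  have h := (log_one_sub_bound (x := 607/5607) (by norm_num) (by norm_num)).1
  have hS : ∑ i ∈ Finset.range 7, ((607:ℝ)/5607)^(i+1)/((i:ℝ)+1) ≤ 0.1145780 := by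
    norm_num [Finset.sum_range_succ]
  have hE : ((607:ℝ)/5607)^8/(1-607/5607) ≤ 0.0000001 := by norm_num
  have e1 : (10000:ℝ)/5607 = 2 * (1 - 607/5607) := by norm_num
  rw [e1, log_mul (by norm_num) (by norm_num)]
  have h2 := Real.log_two_gt_d9
  linarith

lemma logB_ub : log (5000/2811) ≤ (0.5758977:ℝ) := by
  have h := (log_one_sub_bound (x := 311/2811) (by norm_num) (by norm_num)).2
  have hS : (0.1172495:ℝ) ≤ ∑ i ∈ Finset.range 7, ((311:ℝ)/2811)^(i+1)/((i:ℝ)+1) := by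
    norm_num [Finset.sum_range_succ]
  have hE : ((311:ℝ)/2811)^8/(1-311/2811) ≤ 0.0000001 := by norm_num
  have e1 : (5000:ℝ)/2811 = 2 * (1 - 311/2811) := by norm_num
  rw [e1, log_mul (by norm_num) (by norm_num)]
  have h2 := Real.log_two_lt_d9
  linarith

lemma gamma_ub' : γ < 0.5782 := by
  have := gamma_lt
  have := log132_lb
  linarith

lemma gamma_lb' : (0.5772:ℝ) ≤ γ := by
  have := gamma_ge
  have := log132_ub
  linarith

lemma c_lb : (5607/10000 : ℝ) ≤ exp (-γ) := by
  have h1 : γ ≤ log (10000/5607) := by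
    have := gamma_ub'
    have := logA_lb
    linarith
  calc (5607/10000 : ℝ) = exp (log (5607/10000)) := (exp_log (by norm_num)).symm
  _ ≤ exp (-γ) := by
    apply exp_le_exp.2
    have e1 : log (5607/10000 : ℝ) = - log (10000/5607) := by
      rw [← log_inv]
      norm_num
    rw [e1]
    linarith

lemma c_ub : exp (-γ) ≤ (2811/5000 : ℝ) := by
  have h1 : log (5000/2811) ≤ γ := by
    have := gamma_lb'
    have := logB_ub
    linarith
  calc exp (-γ) ≤ exp (- log (5000/2811)) := by
        apply exp_le_exp.2
        linarith
  _ = 2811/5000 := by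
    rw [← log_inv]
    rw [exp_log (by norm_num)]
    norm_num

/-- summand of the shifted-digamma series -/
noncomputable def gg (x : ℝ) (n : ℕ) : ℝ := 1/((n:ℝ)+1) - 1/((n:ℝ)+1+x)

/-- `P x = ψ(x+1) + γ` -/
noncomputable def P (x : ℝ) : ℝ := ∑' n : ℕ, gg x n

lemma summable_invsq : Summable (fun n : ℕ => 1/((n:ℝ)+1)^2) := by
  have h := (summable_one_div_nat_pow (p := 2)).2 (by norm_num)
  have h2 := (summable_nat_add_iff (k := 1) (f := fun n : ℕ => 1/(n:ℝ)^2)).2 h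
  apply h2.congr
  intro n
  push_cast
  ring

lemma gg_nonneg {x : ℝ} (hx : 0 ≤ x) (n : ℕ) : 0 ≤ gg x n := by
  unfold gg
  have h1 : (0:ℝ) < (n:ℝ)+1 := by positivity
  have h2 : (0:ℝ) < (n:ℝ)+1+x := by linarith
  rw [sub_nonneg]
  apply one_div_le_one_div_of_le h1
  linarith

lemma gg_le {x : ℝ} (hx : 0 ≤ x) (n : ℕ) : gg x n ≤ x * (1/((n:ℝ)+1)^2) := by
  unfold gg
  have h1 : (0:ℝ) < (n:ℝ)+1 := by positivity
  have h2 : (0:ℝ) < (n:ℝ)+1+x := by linarith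
  rw [div_sub_div _ _ h1.ne' h2.ne']
  rw [show x * (1/((n:ℝ)+1)^2) = x/((n:ℝ)+1)^2 by ring]
  rw [div_le_div_iff₀ (by positivity) (by positivity)]
  nlinarith [mul_nonneg (mul_nonneg hx hx) h1.le]

lemma summable_gg {x : ℝ} (hx : 0 ≤ x) : Summable (gg x) := by
  apply Summable.of_nonneg_of_le (gg_nonneg hx) (gg_le hx)
  exact summable_invsq.mul_left x

lemma P_zero : P 0 = 0 := by
  unfold P
  have h : ∀ n : ℕ, gg 0 n = 0 := by
    intro n; unfold gg; norm_num
  simp [h]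

lemma tendsto_shift_inv (x : ℝ) (hx : 0 ≤ x) :
    Tendsto (fun n : ℕ => 1/((n:ℝ)+1+x)) atTop (𝓝 0) := by
  have h1 : Tendsto (fun n : ℕ => (n:ℝ)+(1+x)) atTop atTop :=
    tendsto_atTop_add_const_right _ (1+x) tendsto_natCast_atTop_atTop
  have h2 : Tendsto (fun n : ℕ => (n:ℝ)+1+x) atTop atTop :=
    h1.congr (fun n => by ring)
  simpa [one_div, Pi.inv_def] using h2.inv_tendsto_atTop

lemma P_rec {x : ℝ} (hx : 0 ≤ x) : P (x+1) = P x + 1/(x+1) := by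
  have htel : HasSum (fun n : ℕ => (fun k : ℕ => 1/((k:ℝ)+1+x)) n -
      (fun k : ℕ => 1/((k:ℝ)+1+x)) (n+1)) ((fun k : ℕ => 1/((k:ℝ)+1+x)) 0) := by
    apply hasSum_telescope (tendsto_shift_inv x hx)
    intro n
    have h1 : (0:ℝ) < (n:ℝ)+1+x := by positivity
    apply one_div_le_one_div_of_le h1
    push_cast
    linarith
  have hsum := ((summable_gg hx).hasSum).add htel
  unfold P
  have heq : gg (x+1) = (fun n : ℕ => gg x n + ((fun k : ℕ => 1/((k:ℝ)+1+x)) n -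
      (fun k : ℕ => 1/((k:ℝ)+1+x)) (n+1))) := by
    funext n
    unfold gg
    push_cast
    ring
  rw [heq, hsum.tsum_eq]
  norm_num
  ring

lemma P_mono {x y : ℝ} (hx : 0 ≤ x) (hxy : x ≤ y) : P x ≤ P y := by
  unfold P
  apply Summable.tsum_le_tsum _ (summable_gg hx) (summable_gg (le_trans hx hxy))
  intro n
  unfold gg
  have h1 : (0:ℝ) < (n:ℝ)+1+x := by positivity
  have h2 : (0:ℝ) < (n:ℝ)+1+y := by linarith
  have := one_div_le_one_div_of_le h1 (by linarith : (n:ℝ)+1+x ≤ (n:ℝ)+1+y)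
  linarith

lemma P_nat (m : ℕ) : P m = (harmonic m : ℝ) := by
  induction m with
  | zero => simpa using P_zero
  | succ k ih =>
    have h1 : ((k+1:ℕ):ℝ) = (k:ℝ)+1 := by push_cast; ring
    rw [h1, P_rec (Nat.cast_nonneg k), ih]
    push_cast [harmonic_succ]
    ring

/-! ### The digamma function via convexity of `log ∘ Gamma` -/

lemma fdiff {y : ℝ} (hy : 0 < y) : DifferentiableAt ℝ (log ∘ Gamma) y := by
  refine ((Real.differentiableAt_Gamma ?_).log (Real.Gamma_pos_of_pos hy).ne')
  intro m
  have h1 : (0:ℝ) ≤ m := Nat.cast_nonneg m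
  intro hc
  rw [hc] at hy
  linarith

lemma deriv_f_rec {y : ℝ} (hy : 0 < y) :
    deriv (log ∘ Gamma) (y + 1) = deriv (log ∘ Gamma) y + 1/y := by
  have h_rec : ∀ z : ℝ, 0 < z → (log ∘ Gamma) (z + 1) = (log ∘ Gamma) z + log z := by
    intro z hz
    simp only [Function.comp_apply, Real.Gamma_add_one hz.ne',
      log_mul hz.ne' (Real.Gamma_pos_of_pos hz).ne', add_comm]
  rw [← deriv_comp_add_const, one_div, ← Real.deriv_log,
    ← deriv_add (fdiff hy) (Real.differentiableAt_log hy.ne')]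
  apply Filter.EventuallyEq.deriv_eq
  filter_upwards [eventually_gt_nhds hy] using h_rec

lemma deriv_f_mono {a b : ℝ} (ha : 0 < a) (hab : a ≤ b) :
    deriv (log ∘ Gamma) a ≤ deriv (log ∘ Gamma) b := by
  rcases eq_or_lt_of_le hab with h | h
  · rw [h]
  · have hb : 0 < b := lt_trans ha h
    have hc := Real.convexOn_log_Gamma
    exact (hc.deriv_le_slope (mem_Ioi.2 ha) (mem_Ioi.2 hb) h (fdiff ha)).trans
      (hc.slope_le_deriv (mem_Ioi.2 ha) (mem_Ioi.2 hb) h (fdiff hb))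

lemma deriv_f_shift (n : ℕ) {y : ℝ} (hy : 0 < y) :
    deriv (log ∘ Gamma) (y + n) = deriv (log ∘ Gamma) y + ∑ k ∈ Finset.range n, 1/(y + k) := by
  induction n with
  | zero => simp
  | succ m ih =>
    have e1 : y + ((m+1:ℕ):ℝ) = (y + m) + 1 := by push_cast; ring
    rw [e1, deriv_f_rec (by positivity), ih, Finset.sum_range_succ]
    push_cast
    ring

lemma deriv_f_one : deriv (log ∘ Gamma) 1 = -γ := by
  have h1 : deriv (log ∘ Gamma) 1 = deriv Gamma 1 / Gamma 1 := by
    rw [Function.comp_def]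
    exact deriv.log (Real.differentiableAt_Gamma (fun m => by
      intro hc
      have : (0:ℝ) ≤ m := Nat.cast_nonneg m
      nlinarith [hc])) (by rw [Real.Gamma_one]; norm_num)
  rw [h1, Real.Gamma_one, Real.eulerMascheroniConstant_eq_neg_deriv]
  ring

lemma harmonic_cast_sum (n : ℕ) : (harmonic n : ℝ) = ∑ k ∈ Finset.range n, 1/((k:ℝ)+1) := by
  induction n with
  | zero => simp
  | succ m ih =>
    rw [Finset.sum_range_succ, ← ih]
    push_cast [harmonic_succ]
    ring

lemma deriv_f_nat (n : ℕ) : deriv (log ∘ Gamma) (1 + (n:ℝ)) = -γ + (harmonic n : ℝ) := by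
  rw [deriv_f_shift n one_pos, deriv_f_one, harmonic_cast_sum]
  congr 1
  apply Finset.sum_congr rfl
  intro k _
  rw [add_comm (1:ℝ) (k:ℝ)]

lemma digamma_eq_small {x : ℝ} (hx : 0 < x) (hx1 : x ≤ 1) :
    deriv (log ∘ Gamma) x = -γ + P x - 1/x := by
  set D := deriv (log ∘ Gamma) x with hD
  have key : ∀ n : ℕ, D = deriv (log ∘ Gamma) (x + ((n+1:ℕ):ℝ))
      - ∑ k ∈ Finset.range (n+1), 1/(x + k) := by
    intro n
    rw [deriv_f_shift (n+1) hx]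
    ring
  have hsandL : ∀ n : ℕ, -γ + (harmonic n : ℝ) - ∑ k ∈ Finset.range (n+1), 1/(x + k) ≤ D := by
    intro n
    rw [key n]
    have h1 : deriv (log ∘ Gamma) (1 + (n:ℝ)) ≤ deriv (log ∘ Gamma) (x + ((n+1:ℕ):ℝ)) := by
      apply deriv_f_mono (by positivity)
      push_cast
      linarith
    rw [deriv_f_nat n] at h1
    linarith
  have hsandU : ∀ n : ℕ, D ≤ -γ + (harmonic (n+1) : ℝ)
      - ∑ k ∈ Finset.range (n+1), 1/(x + k) := by
    intro n
    rw [key n]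
    have h1 : deriv (log ∘ Gamma) (x + ((n+1:ℕ):ℝ)) ≤ deriv (log ∘ Gamma) (1 + ((n+1):ℝ)) := by
      apply deriv_f_mono (by positivity)
      push_cast
      linarith
    have h2 := deriv_f_nat (n+1)
    push_cast at h2 h1 ⊢
    linarith
  have hT : Tendsto (fun n : ℕ => (harmonic n : ℝ) - ∑ k ∈ Finset.range (n+1), 1/(x + k))
      atTop (𝓝 (P x - 1/x)) := by
    have he : ∀ n : ℕ, (harmonic n : ℝ) - ∑ k ∈ Finset.range (n+1), 1/(x + k)
        = (∑ k ∈ Finset.range n, gg x k) - 1/x := by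
      intro n
      rw [harmonic_cast_sum]
      unfold gg
      rw [Finset.sum_sub_distrib, Finset.sum_range_succ']
      have h0 : 1/(x + ((0:ℕ):ℝ)) = 1/x := by norm_num
      rw [h0]
      have hterm : ∀ k ∈ Finset.range n, 1/(x + ((k+1:ℕ):ℝ)) = 1/((k:ℝ)+1+x) := by
        intro k _
        push_cast
        ring_nf
      rw [Finset.sum_congr rfl hterm]
      ring
    have h3 := ((summable_gg hx.le).hasSum).tendsto_sum_nat
    have h4 : Tendsto (fun n : ℕ => (∑ k ∈ Finset.range n, gg x k) - 1/x)
        atTop (𝓝 (P x - 1/x)) := h3.sub_const (1/x)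
    exact h4.congr (fun n => (he n).symm)
  have hTU : Tendsto (fun n : ℕ => (harmonic (n+1) : ℝ) - ∑ k ∈ Finset.range (n+1), 1/(x + k))
      atTop (𝓝 (P x - 1/x)) := by
    have he : ∀ n : ℕ, (harmonic (n+1) : ℝ) - ∑ k ∈ Finset.range (n+1), 1/(x + k)
        = ((harmonic n : ℝ) - ∑ k ∈ Finset.range (n+1), 1/(x + k)) + 1/((n:ℝ)+1) := by
      intro n
      push_cast [harmonic_succ]
      ring
    have h5 : Tendsto (fun n : ℕ => 1/((n:ℝ)+1)) atTop (𝓝 0) := by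
      have := tendsto_shift_inv 0 le_rfl
      simpa using this
    have h6 := hT.add h5
    rw [add_zero] at h6
    exact h6.congr (fun n => (he n).symm)
  have hle : -γ + (P x - 1/x) ≤ D := by
    apply le_of_tendsto ((tendsto_const_nhds (x := -γ)).add hT)
    filter_upwards with n
    have := hsandL n
    linarith
  have hge : D ≤ -γ + (P x - 1/x) := by
    apply ge_of_tendsto ((tendsto_const_nhds (x := -γ)).add hTU)
    filter_upwards with n
    have := hsandU n
    linarith
  linarith

lemma digamma_eq_aux : ∀ n : ℕ, ∀ x : ℝ, 0 < x → x ≤ (n:ℝ)+1 →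
    deriv (log ∘ Gamma) x = -γ + P x - 1/x := by
  intro n
  induction n with
  | zero => intro x hx hx1; exact digamma_eq_small hx (by simpa using hx1)
  | succ k ih =>
    intro x hx hx1
    by_cases hc : x ≤ (k:ℝ)+1
    · exact ih x hx hc
    · push_neg at hc
      have hy : 0 < x - 1 := by
        have : (1:ℝ) ≤ (k:ℝ)+1 := by
          have := Nat.cast_nonneg (α := ℝ) k
          linarith
        linarith
      have hy1 : x - 1 ≤ (k:ℝ)+1 := by
        push_cast at hx1
        linarith
      have h1 := ih (x-1) hy hy1
      have h2 : deriv (log ∘ Gamma) x = deriv (log ∘ Gamma) (x-1) + 1/(x-1) := by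
        have := deriv_f_rec hy
        rw [sub_add_cancel] at this
        exact this
      have h3 : P x = P (x-1) + 1/x := by
        have hp := P_rec (x := x-1) hy.le
        rw [sub_add_cancel] at hp
        exact hp
      rw [h2, h1, h3]
      ring

lemma digamma_eq {x : ℝ} (hx : 0 < x) : digamma x = -γ + P x - 1/x := by
  obtain ⟨n, hn⟩ := exists_nat_ge x
  have h := digamma_eq_aux n x hx (by linarith)
  exact h

/-! ### Zeta values and bounds -/

noncomputable def Zeta (j : ℕ) : ℝ := ∑' n : ℕ, 1/((n:ℝ)+1)^j

lemma summable_zeta {j : ℕ} (hj : 2 ≤ j) : Summable (fun n : ℕ => 1/((n:ℝ)+1)^j) := by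
  apply Summable.of_nonneg_of_le (fun n => by positivity) _ summable_invsq
  intro n
  have h1 : (1:ℝ) ≤ (n:ℝ)+1 := by
    have := Nat.cast_nonneg (α := ℝ) n
    linarith
  apply one_div_le_one_div_of_le (by positivity)
  exact pow_le_pow_right₀ h1 hj

lemma zeta_hasSum {j : ℕ} (hj : 2 ≤ j) : HasSum (fun n : ℕ => 1/((n:ℝ)+1)^j) (Zeta j) :=
  (summable_zeta hj).hasSum

lemma zeta_lb (m : ℕ) {j : ℕ} (hj : 2 ≤ j) :
    ∑ i ∈ Finset.range m, 1/((i:ℝ)+1)^j ≤ Zeta j :=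
  Summable.sum_le_tsum _ (fun i _ => by positivity) (summable_zeta hj)

lemma zeta2_tail : (∑' n : ℕ, 1/(((n+8:ℕ):ℝ)+1)^2) ≤ 2/17 := by
  have htel : HasSum (fun n : ℕ => (fun k : ℕ => 1/((k:ℝ)+17/2)) n -
      (fun k : ℕ => 1/((k:ℝ)+17/2)) (n+1)) ((fun k : ℕ => 1/((k:ℝ)+17/2)) 0) := by
    apply hasSum_telescope
    · have h1 : Tendsto (fun n : ℕ => (n:ℝ)+17/2) atTop atTop :=
        tendsto_atTop_add_const_right _ (17/2) tendsto_natCast_atTop_atTop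
      simpa [one_div, Pi.inv_def] using h1.inv_tendsto_atTop
    · intro n
      apply one_div_le_one_div_of_le (by positivity)
      push_cast
      linarith
  have hsum : Summable (fun n : ℕ => 1/(((n+8:ℕ):ℝ)+1)^2) := by
    have := (summable_nat_add_iff (k := 8) (f := fun n : ℕ => 1/((n:ℝ)+1)^2)).2 summable_invsq
    exact this
  have hb := Summable.tsum_le_tsum (f := fun n : ℕ => 1/(((n+8:ℕ):ℝ)+1)^2)
    (g := fun n : ℕ => (fun k : ℕ => 1/((k:ℝ)+17/2)) n - (fun k : ℕ => 1/((k:ℝ)+17/2)) (n+1))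
    ?_ hsum htel.summable
  · rw [htel.tsum_eq] at hb
    simpa using hb
  · intro n
    simp only []
    push_cast
    rw [div_sub_div _ _ (by positivity) (by positivity)]
    rw [div_le_div_iff₀ (by positivity) (by positivity)]
    nlinarith [sq_nonneg ((n:ℝ)+9), Nat.cast_nonneg (α := ℝ) n]

lemma zeta2_ub : Zeta 2 ≤ 19732933/11995200 := by
  have hsplit := Summable.sum_add_tsum_nat_add (f := fun n : ℕ => 1/((n:ℝ)+1)^2) 8 (summable_zeta le_rfl)
  have htail := zeta2_tail
  have hS : ∑ i ∈ Finset.range 8, 1/((i:ℝ)+1)^2 = 1077749/705600 := by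
    norm_num [Finset.sum_range_succ]
  have htail' : (∑' (i : ℕ), (fun n : ℕ => 1/((n:ℝ)+1)^2) (i + 8)) ≤ 2/17 := by
    refine le_trans (le_of_eq (tsum_congr fun i => ?_)) htail
    push_cast
    ring
  unfold Zeta
  rw [← hsplit, hS]
  linarith

lemma zeta_tail_ub (j m : ℕ) (hm : 1 ≤ m) :
    (∑' n : ℕ, 1/(((n+m:ℕ):ℝ)+1)^(j+2)) ≤ 1/(m:ℝ)^(j+1) := by
  have hm' : (1:ℝ) ≤ (m:ℝ) := by exact_mod_cast hm
  have htel : HasSum (fun n : ℕ => (fun k : ℕ => (1/(m:ℝ)^j) * (1/((k:ℝ)+m))) n -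
      (fun k : ℕ => (1/(m:ℝ)^j) * (1/((k:ℝ)+m))) (n+1))
      ((fun k : ℕ => (1/(m:ℝ)^j) * (1/((k:ℝ)+m))) 0) := by
    apply hasSum_telescope
    · have h1 : Tendsto (fun n : ℕ => (n:ℝ)+m) atTop atTop :=
        tendsto_atTop_add_const_right _ (m:ℝ) tendsto_natCast_atTop_atTop
      have h2 : Tendsto (fun n : ℕ => 1/((n:ℝ)+m)) atTop (𝓝 0) := by
        simpa [one_div, Pi.inv_def] using h1.inv_tendsto_atTop
      simpa using h2.const_mul ((1:ℝ)/(m:ℝ)^j)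
    · intro n
      apply mul_le_mul_of_nonneg_left _ (by positivity)
      apply one_div_le_one_div_of_le (by positivity)
      push_cast
      linarith
  have hsum : Summable (fun n : ℕ => 1/(((n+m:ℕ):ℝ)+1)^(j+2)) := by
    have h0 := (summable_nat_add_iff (k := m) (f := fun n : ℕ => 1/((n:ℝ)+1)^(j+2))).2
      (summable_zeta (by omega))
    exact h0
  have hb := Summable.tsum_le_tsum (f := fun n : ℕ => 1/(((n+m:ℕ):ℝ)+1)^(j+2))
    (g := fun n : ℕ => (fun k : ℕ => (1/(m:ℝ)^j) * (1/((k:ℝ)+m))) n -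
      (fun k : ℕ => (1/(m:ℝ)^j) * (1/((k:ℝ)+m))) (n+1))
    ?_ hsum htel.summable
  · rw [htel.tsum_eq] at hb
    refine hb.trans (le_of_eq ?_)
    simp only []
    rw [pow_succ]
    field_simp
    simp
  · intro n
    simp only []
    have hgap : (fun k : ℕ => (1/(m:ℝ)^j) * (1/((k:ℝ)+m))) n -
        (fun k : ℕ => (1/(m:ℝ)^j) * (1/((k:ℝ)+m))) (n+1)
        = (1/(m:ℝ)^j) * (1/(((n:ℝ)+m)*((n:ℝ)+m+1))) := by
      simp only []
      push_cast
      rw [← mul_sub]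
      congr 1
      rw [div_sub_div _ _ (by positivity) (by positivity)]
      congr 1 <;> ring
    rw [hgap]
    push_cast
    rw [div_mul_div_comm, one_mul]
    apply one_div_le_one_div_of_le (by positivity)
    have e1 : ((n:ℝ)+m+1)^(j+2) = ((n:ℝ)+m+1)^j * ((n:ℝ)+m+1)^2 := by
      rw [← pow_add]
    have h2 : (m:ℝ)^j ≤ ((n:ℝ)+m+1)^j := by
      apply pow_le_pow_left₀ (by positivity)
      have := Nat.cast_nonneg (α := ℝ) n
      linarith
    have h3 : ((n:ℝ)+m)*((n:ℝ)+m+1) ≤ ((n:ℝ)+m+1)^2 := by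
      have := Nat.cast_nonneg (α := ℝ) n
      nlinarith
    calc (m:ℝ)^j * (((n:ℝ)+m)*((n:ℝ)+m+1)) ≤ ((n:ℝ)+m+1)^j * (((n:ℝ)+m)*((n:ℝ)+m+1)) := by
          apply mul_le_mul_of_nonneg_right h2 (by positivity)
    _ ≤ ((n:ℝ)+m+1)^j * ((n:ℝ)+m+1)^2 := by
          apply mul_le_mul_of_nonneg_left h3 (by positivity)
    _ = ((n:ℝ)+m+1)^(j+2) := e1.symm

lemma zeta_ub_aux (j m : ℕ) (hm : 1 ≤ m) :
    Zeta (j+2) ≤ ∑ i ∈ Finset.range m, 1/((i:ℝ)+1)^(j+2) + 1/(m:ℝ)^(j+1) := by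
  have hsplit := Summable.sum_add_tsum_nat_add (f := fun n : ℕ => 1/((n:ℝ)+1)^(j+2)) m
    (summable_zeta (by omega))
  have htail := zeta_tail_ub j m hm
  have htail' : (∑' (i : ℕ), (fun n : ℕ => 1/((n:ℝ)+1)^(j+2)) (i + m)) ≤ 1/(m:ℝ)^(j+1) := by
    refine le_trans (le_of_eq (tsum_congr fun i => ?_)) htail
    push_cast
    ring
  unfold Zeta
  rw [← hsplit]
  linarith

/-! ### Numeric zeta bounds -/

lemma z2ub : Zeta 2 ≤ 19732933/11995200 := zeta2_ub
lemma z3lb : (78708473/65856000:ℝ) ≤ Zeta 3 := by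
  have h := zeta_lb 8 (j := 3) (by norm_num)
  have e : ∑ i ∈ Finset.range 8, 1/((i:ℝ)+1)^3 = 78708473/65856000 := by
    norm_num [Finset.sum_range_succ]
  linarith [e ▸ h]
lemma z4ub : Zeta 4 ≤ 14105041/12960000 := by
  have h := zeta_ub_aux 2 5 (by norm_num)
  have e : ∑ i ∈ Finset.range 5, 1/((i:ℝ)+1)^(2+2) = 14001361/12960000 := by
    norm_num [Finset.sum_range_succ]
  rw [e] at h
  norm_num at h ⊢
  linarith
lemma z5lb : (257875/248832:ℝ) ≤ Zeta 5 := by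
  have h := zeta_lb 4 (j := 5) (by norm_num)
  have e : ∑ i ∈ Finset.range 4, 1/((i:ℝ)+1)^5 = 257875/248832 := by
    norm_num [Finset.sum_range_succ]
  linarith [e ▸ h]
lemma z6ub : Zeta 6 ≤ 47641/46656 := by
  have h := zeta_ub_aux 4 3 (by norm_num)
  have e : ∑ i ∈ Finset.range 3, 1/((i:ℝ)+1)^(4+2) = 47449/46656 := by
    norm_num [Finset.sum_range_succ]
  rw [e] at h
  norm_num at h ⊢
  linarith
lemma z7lb : (129/128:ℝ) ≤ Zeta 7 := by
  have h := zeta_lb 2 (j := 7) (by norm_num)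
  have e : ∑ i ∈ Finset.range 2, 1/((i:ℝ)+1)^7 = 129/128 := by
    norm_num [Finset.sum_range_succ]
  linarith [e ▸ h]
lemma z8ub : Zeta 8 ≤ 259/256 := by
  have h := zeta_ub_aux 6 2 (by norm_num)
  have e : ∑ i ∈ Finset.range 2, 1/((i:ℝ)+1)^(6+2) = 257/256 := by
    norm_num [Finset.sum_range_succ]
  rw [e] at h
  norm_num at h ⊢
  linarith
lemma z9lb : (1:ℝ) ≤ Zeta 9 := by
  have h := zeta_lb 1 (j := 9) (by norm_num)
  have e : ∑ i ∈ Finset.range 1, 1/((i:ℝ)+1)^9 = 1 := by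
    norm_num [Finset.sum_range_succ]
  linarith [e ▸ h]
lemma z10ub : Zeta 10 ≤ 1027/1024 := by
  have h := zeta_ub_aux 8 2 (by norm_num)
  have e : ∑ i ∈ Finset.range 2, 1/((i:ℝ)+1)^(8+2) = 1025/1024 := by
    norm_num [Finset.sum_range_succ]
  rw [e] at h
  norm_num at h ⊢
  linarith

/-! ### Polynomial upper bound for `P` -/

lemma P_upper {x : ℝ} (hx : 0 ≤ x) :
    P x ≤ x * Zeta 2 - x^2 * Zeta 3 + x^3 * Zeta 4 - x^4 * Zeta 5 + x^5 * Zeta 6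
      - x^6 * Zeta 7 + x^7 * Zeta 8 - x^8 * Zeta 9 + x^9 * Zeta 10 := by
  have h2 := (zeta_hasSum (j := 2) (by norm_num)).mul_left x
  have h3 := (zeta_hasSum (j := 3) (by norm_num)).mul_left (x^2)
  have h4 := (zeta_hasSum (j := 4) (by norm_num)).mul_left (x^3)
  have h5 := (zeta_hasSum (j := 5) (by norm_num)).mul_left (x^4)
  have h6 := (zeta_hasSum (j := 6) (by norm_num)).mul_left (x^5)
  have h7 := (zeta_hasSum (j := 7) (by norm_num)).mul_left (x^6)
  have h8 := (zeta_hasSum (j := 8) (by norm_num)).mul_left (x^7)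
  have h9 := (zeta_hasSum (j := 9) (by norm_num)).mul_left (x^8)
  have h10 := (zeta_hasSum (j := 10) (by norm_num)).mul_left (x^9)
  have hsum := ((((((((h2.sub h3).add h4).sub h5).add h6).sub h7).add h8).sub h9).add h10)
  have hle : ∀ n : ℕ, gg x n ≤ x * (1/((n:ℝ)+1)^2) - x^2 * (1/((n:ℝ)+1)^3)
      + x^3 * (1/((n:ℝ)+1)^4) - x^4 * (1/((n:ℝ)+1)^5) + x^5 * (1/((n:ℝ)+1)^6)
      - x^6 * (1/((n:ℝ)+1)^7) + x^7 * (1/((n:ℝ)+1)^8) - x^8 * (1/((n:ℝ)+1)^9)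
      + x^9 * (1/((n:ℝ)+1)^10) := by
    intro n
    have ha : (0:ℝ) < (n:ℝ)+1 := by positivity
    have hax : (0:ℝ) < (n:ℝ)+1+x := by linarith
    have key : (x * (1/((n:ℝ)+1)^2) - x^2 * (1/((n:ℝ)+1)^3)
      + x^3 * (1/((n:ℝ)+1)^4) - x^4 * (1/((n:ℝ)+1)^5) + x^5 * (1/((n:ℝ)+1)^6)
      - x^6 * (1/((n:ℝ)+1)^7) + x^7 * (1/((n:ℝ)+1)^8) - x^8 * (1/((n:ℝ)+1)^9)
      + x^9 * (1/((n:ℝ)+1)^10)) - gg x n = x^10 / (((n:ℝ)+1)^10 * ((n:ℝ)+1+x)) := by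
      unfold gg
      field_simp
      ring
    have hpos : (0:ℝ) ≤ x^10 / (((n:ℝ)+1)^10 * ((n:ℝ)+1+x)) := by positivity
    linarith
  have := Summable.tsum_le_tsum hle (summable_gg hx) hsum.summable
  rw [hsum.tsum_eq] at this
  exact this

/-! ### Regime I : `0 < x ≤ 2/5` -/

lemma B_pos_small {x : ℝ} (hx : 0 < x) (hx4 : x ≤ 2/5) :
    P x - γ < log (x + exp (-γ)) := by
  set c : ℝ := exp (-γ) with hc
  have hc0 : 0 < c := exp_pos _
  have hcu : c ≤ 2811/5000 := c_ub
  -- rewrite the log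
  have e1 : x + c = c * (1 + x/c) := by field_simp; ring
  have e2 : log (x + c) = -γ + log (1 + x/c) := by
    rw [e1, log_mul hc0.ne' (by positivity), hc, log_exp]
  rw [e2]
  -- lower bound the log by the value at c = 2811/5000
  have h3 : log (1 + (5000/2811)*x) ≤ log (1 + x/c) := by
    apply log_le_log (by positivity)
    have hinv : (5000/2811:ℝ) ≤ c⁻¹ := by
      have h := inv_anti₀ hc0 hcu
      rw [show ((2811:ℝ)/5000)⁻¹ = 5000/2811 by norm_num] at h
      exact h
    calc 1 + (5000/2811:ℝ)*x ≤ 1 + c⁻¹*x := by nlinarith [mul_le_mul_of_nonneg_right hinv hx.le]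
    _ = 1 + x/c := by rw [div_eq_mul_inv]; ring
  -- series lower bound
  set u : ℝ := (5000/2811)*x with hu
  have hu0 : 0 ≤ u := by positivity
  have h4 := log_lb_alt8 hu0
  -- polynomial upper bound for P
  have h5 := P_upper hx.le
  have m2 := mul_le_mul_of_nonneg_left z2ub (by positivity : (0:ℝ) ≤ x)
  have m3 := mul_le_mul_of_nonneg_left z3lb (by positivity : (0:ℝ) ≤ x^2)
  have m4 := mul_le_mul_of_nonneg_left z4ub (by positivity : (0:ℝ) ≤ x^3)
  have m5 := mul_le_mul_of_nonneg_left z5lb (by positivity : (0:ℝ) ≤ x^4)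
  have m6 := mul_le_mul_of_nonneg_left z6ub (by positivity : (0:ℝ) ≤ x^5)
  have m7 := mul_le_mul_of_nonneg_left z7lb (by positivity : (0:ℝ) ≤ x^6)
  have m8 := mul_le_mul_of_nonneg_left z8ub (by positivity : (0:ℝ) ≤ x^7)
  have m9 := mul_le_mul_of_nonneg_left z9lb (by positivity : (0:ℝ) ≤ x^8)
  have m10 := mul_le_mul_of_nonneg_left z10ub (by positivity : (0:ℝ) ≤ x^9)
  -- the Bernstein certificate
  have hs : (0:ℝ) ≤ 2/5 - x := by linarith
  have cert : (u - u^2/2 + u^3/3 - u^4/4 + u^5/5 - u^6/6 + u^7/7 - u^8/8)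
      - (x * (19732933/11995200) - x^2 * (78708473/65856000) + x^3 * (14105041/12960000)
        - x^4 * (257875/248832) + x^5 * (47641/46656) - x^6 * (129/128) + x^7 * (259/256)
        - x^8 * 1 + x^9 * (1027/1024))
      = x * ((23472527796875/115092504576) * (2/5 - x)^8
        + (1404593047638955625/1006522316685312) * x * (2/5 - x)^7
        + (15461201823616729025975/3637715441403101184) * x^2 * (2/5 - x)^6
        + (76425453349129254596786225/10225618105784117428224) * x^3 * (2/5 - x)^5
        + (238033970633107573133276792125/28744212495359154090737664) * x^4 * (2/5 - x)^4
        + (476900804650498307641363775170625/80799981324454582149063573504) * x^5 * (2/5 - x)^3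
        + (200201683718994778162382904332908675/75709582501013943473672568373248) * x^6 * (2/5 - x)^2
        + (143143653686375856190358885051619207245/212819636410350195104493589697200128) * x^7 * (2/5 - x)
        + (94763205711808624136678290016312643857/1489737454872451365731455127880400896) * x^8) := by
    rw [hu]
    ring
  have hpos : (0:ℝ) < x * ((23472527796875/115092504576) * (2/5 - x)^8
        + (1404593047638955625/1006522316685312) * x * (2/5 - x)^7
        + (15461201823616729025975/3637715441403101184) * x^2 * (2/5 - x)^6
        + (76425453349129254596786225/10225618105784117428224) * x^3 * (2/5 - x)^5
        + (238033970633107573133276792125/28744212495359154090737664) * x^4 * (2/5 - x)^4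
        + (476900804650498307641363775170625/80799981324454582149063573504) * x^5 * (2/5 - x)^3
        + (200201683718994778162382904332908675/75709582501013943473672568373248) * x^6 * (2/5 - x)^2
        + (143143653686375856190358885051619207245/212819636410350195104493589697200128) * x^7 * (2/5 - x)
        + (94763205711808624136678290016312643857/1489737454872451365731455127880400896) * x^8) := by
    apply mul_pos hx
    have t8 : (0:ℝ) < (94763205711808624136678290016312643857/1489737454872451365731455127880400896) * x^8 := by positivity
    have t0 : (0:ℝ) ≤ (23472527796875/115092504576) * (2/5 - x)^8 := by positivity
    have t1 : (0:ℝ) ≤ (1404593047638955625/1006522316685312) * x * (2/5 - x)^7 := by positivity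
    have t2 : (0:ℝ) ≤ (15461201823616729025975/3637715441403101184) * x^2 * (2/5 - x)^6 := by positivity
    have t3 : (0:ℝ) ≤ (76425453349129254596786225/10225618105784117428224) * x^3 * (2/5 - x)^5 := by positivity
    have t4 : (0:ℝ) ≤ (238033970633107573133276792125/28744212495359154090737664) * x^4 * (2/5 - x)^4 := by positivity
    have t5 : (0:ℝ) ≤ (476900804650498307641363775170625/80799981324454582149063573504) * x^5 * (2/5 - x)^3 := by positivity
    have t6 : (0:ℝ) ≤ (200201683718994778162382904332908675/75709582501013943473672568373248) * x^6 * (2/5 - x)^2 := by positivity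
    have t7 : (0:ℝ) ≤ (143143653686375856190358885051619207245/212819636410350195104493589697200128) * x^7 * (2/5 - x) := by positivity
    linarith
  linarith

/-! ### Lower bound: `A` positivity -/

lemma A_pos {x : ℝ} (hx : 0 < x) : log (x + 1/2) < P x - γ := by
  set A : ℝ → ℝ := fun t => P t - γ - log (t + 1/2) with hA
  have step : ∀ t : ℝ, 0 ≤ t → A (t+1) < A t := by
    intro t ht
    have hb := brA_pos ht
    have hp := P_rec ht
    simp only [hA]
    rw [hp]
    have e1 : t + 1 + 1/2 = t + 3/2 := by ring
    rw [e1]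
    linarith
  have chain : ∀ n : ℕ, A (x + ((n+1:ℕ):ℝ)) ≤ A (x + 1) := by
    intro n
    induction n with
    | zero => norm_num
    | succ k ih =>
      have hstep := step (x + ((k+1:ℕ):ℝ)) (by positivity)
      have e : x + ((k+1+1:ℕ):ℝ) = (x + ((k+1:ℕ):ℝ)) + 1 := by push_cast; ring
      rw [e]
      linarith
  have lb : ∀ n : ℕ, (harmonic (n+1) : ℝ) - γ - log (x + ((n+1:ℕ):ℝ) + 1/2)
      ≤ A (x + ((n+1:ℕ):ℝ)) := by
    intro n
    simp only [hA]
    have hm : P (((n+1:ℕ)):ℝ) ≤ P (x + ((n+1:ℕ):ℝ)) := by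
      apply P_mono (Nat.cast_nonneg _)
      linarith
    rw [P_nat (n+1)] at hm
    linarith
  have limit : Tendsto (fun n : ℕ => (harmonic (n+1) : ℝ) - γ - log (x + ((n+1:ℕ):ℝ) + 1/2))
      atTop (𝓝 0) := by
    have h1 : Tendsto (fun n : ℕ => (harmonic (n+1) : ℝ) - log (((n+1:ℕ)):ℝ)) atTop (𝓝 γ) := by
      have := Real.tendsto_harmonic_sub_log.comp (tendsto_add_atTop_nat 1)
      exact this
    have h2 := tendsto_log_shift (x + 3/2) 1
    have h3 := (h1.sub h2).sub_const γ
    rw [show γ - 0 - γ = 0 by ring] at h3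
    apply h3.congr
    intro n
    have e1 : log (((n+1:ℕ)):ℝ) = log ((n:ℝ) + 1) := by push_cast; ring_nf
    have e2 : log (x + ((n+1:ℕ):ℝ) + 1/2) = log ((n:ℝ) + (x + 3/2)) := by
      congr 1
      push_cast
      ring
    rw [e1, e2]
    ring
  have hA1 : 0 ≤ A (x + 1) := by
    apply le_of_tendsto limit
    filter_upwards with n
    exact le_trans (lb n) (chain n)
  have hstep0 := step x hx.le
  have : 0 < A x := lt_of_le_of_lt hA1 hstep0
  simp only [hA] at this
  linarith

/-! ### Regime II bracket -/

lemma brB_pos {t : ℝ} (ht : 2/5 ≤ t) :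
    log (t + 1 + exp (-γ)) - log (t + exp (-γ)) < 1/(t+1) := by
  set c : ℝ := exp (-γ) with hc
  have hc0 : 0 < c := exp_pos _
  have hcl : (5607/10000:ℝ) ≤ c := c_lb
  have htc : (0:ℝ) < t + c := by linarith
  have e1 : log (t+1+c) - log (t+c) = log (1 + 1/(t+c)) := by
    rw [← log_div (by linarith) htc.ne']
    congr 1
    field_simp
    ring
  set s : ℝ := t + 5607/10000 with hs
  have hs0 : (0:ℝ) < s := by rw [hs]; linarith
  have h2 : log (1 + 1/(t+c)) ≤ log (1 + 1/s) := by
    apply log_le_log (by positivity)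
    have h21 : 1/(t+c) ≤ 1/s := by
      apply one_div_le_one_div_of_le hs0
      rw [hs]; linarith
    linarith
  have h3 := log_ub_pade43 (u := 1/s) (by positivity)
  have h4 : (420*(1/s) + 510*(1/s)^2 + 140*(1/s)^3 + 3*(1/s)^4)
      / (420 + 720*(1/s) + 360*(1/s)^2 + 48*(1/s)^3) < 1/(t+1) := by
    have hD : (0:ℝ) < 420 + 720*(1/s) + 360*(1/s)^2 + 48*(1/s)^3 := by positivity
    rw [div_lt_div_iff₀ hD (by linarith : (0:ℝ) < t+1)]
    have expand : (420 + 720*(1/s) + 360*(1/s)^2 + 48*(1/s)^3) -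
        (420*(1/s) + 510*(1/s)^2 + 140*(1/s)^3 + 3*(1/s)^4) * (t+1)
        = (s*(420*s^3+720*s^2+360*s+48) - (t+1)*(420*s^3+510*s^2+140*s+3))/s^4 := by
      field_simp
    have key : (s*(420*s^3+720*s^2+360*s+48) - (t+1)*(420*s^3+510*s^2+140*s+3))
        = (12747/500)*(t - 2/5)^3 + (347166287/5000000)*(t-2/5)^2
          + (2315921014209/50000000000)*(t-2/5) + 850999832323621/500000000000000 := by
      rw [hs]
      ring
    have hy : (0:ℝ) ≤ t - 2/5 := by linarith
    have hpos : (0:ℝ) < (s*(420*s^3+720*s^2+360*s+48) - (t+1)*(420*s^3+510*s^2+140*s+3))/s^4 := by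
      rw [key]
      have t1 : (0:ℝ) ≤ (12747/500)*(t - 2/5)^3 := by positivity
      have t2 : (0:ℝ) ≤ (347166287/5000000)*(t-2/5)^2 := by positivity
      have t3 : (0:ℝ) ≤ (2315921014209/50000000000)*(t-2/5) := by positivity
      have hs4 : (0:ℝ) < s^4 := by positivity
      apply div_pos _ hs4
      linarith
    rw [← expand] at hpos
    nlinarith [hpos]
  calc log (t+1+c) - log (t+c) = log (1 + 1/(t+c)) := e1
  _ ≤ log (1 + 1/s) := h2
  _ ≤ _ := h3
  _ < 1/(t+1) := h4

/-! ### Upper bound : `B` positivity -/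

lemma B_pos {x : ℝ} (hx : 0 < x) : P x - γ < log (x + exp (-γ)) := by
  rcases le_or_gt x (2/5) with hsm | hlg
  · exact B_pos_small hx hsm
  · set c : ℝ := exp (-γ) with hc
    have hc0 : 0 < c := exp_pos _
    set B : ℝ → ℝ := fun t => γ + log (t + c) - P t with hB
    have hx25 : (2/5:ℝ) ≤ x := hlg.le
    have step : ∀ t : ℝ, 2/5 ≤ t → B (t+1) < B t := by
      intro t ht
      have hb := brB_pos ht
      have hp := P_rec (by linarith : (0:ℝ) ≤ t)
      simp only [hB]
      rw [hp]
      have e1 : t + 1 + c = t + 1 + c := rfl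
      linarith
    have chain : ∀ n : ℕ, B (x + ((n+1:ℕ):ℝ)) ≤ B (x + 1) := by
      intro n
      induction n with
      | zero => norm_num
      | succ k ih =>
        have hstep := step (x + ((k+1:ℕ):ℝ)) (by
          have : (0:ℝ) ≤ ((k+1:ℕ):ℝ) := Nat.cast_nonneg _
          linarith)
        have e : x + ((k+1+1:ℕ):ℝ) = (x + ((k+1:ℕ):ℝ)) + 1 := by push_cast; ring
        rw [e]
        linarith
    set mx : ℕ := ⌈x⌉₊ with hmx
    have hxmx : x ≤ (mx:ℝ) := Nat.le_ceil x
    have ub : ∀ n : ℕ, γ + log (x + ((n+1:ℕ):ℝ) + c) - (harmonic (mx+n+1) : ℝ)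
        ≤ B (x + ((n+1:ℕ):ℝ)) := by
      intro n
      simp only [hB]
      have hm : P (x + ((n+1:ℕ):ℝ)) ≤ P (((mx+n+1:ℕ)):ℝ) := by
        apply P_mono (by positivity)
        push_cast
        linarith
      rw [P_nat (mx+n+1)] at hm
      linarith
    have limit : Tendsto (fun n : ℕ => γ + log (x + ((n+1:ℕ):ℝ) + c) - (harmonic (mx+n+1) : ℝ))
        atTop (𝓝 0) := by
      have h1 : Tendsto (fun n : ℕ => (harmonic (n+(mx+1)) : ℝ) - log (((n+(mx+1):ℕ)):ℝ))
          atTop (𝓝 γ) := Real.tendsto_harmonic_sub_log.comp (tendsto_add_atTop_nat (mx+1))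
      have h2 := tendsto_log_shift (x + 1 + c) ((mx:ℝ) + 1)
      have h3 := ((tendsto_const_nhds (x := γ)).sub h1).add h2
      rw [show γ - γ + 0 = 0 by ring] at h3
      apply h3.congr
      intro n
      have e1 : (harmonic (mx+n+1) : ℝ) = (harmonic (n+(mx+1)) : ℝ) := by
        have e : mx+n+1 = n+(mx+1) := by omega
        rw [e]
      have e2 : log (x + ((n+1:ℕ):ℝ) + c) = log ((n:ℝ) + (x + 1 + c)) := by
        congr 1
        push_cast
        ring
      have e3 : log (((n+(mx+1):ℕ)):ℝ) = log ((n:ℝ) + ((mx:ℝ) + 1)) := by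
        congr 1
        push_cast
        ring
      rw [e1, e2, e3]
      ring
    have hB1 : 0 ≤ B (x + 1) := by
      apply le_of_tendsto limit
      filter_upwards with n
      exact le_trans (ub n) (chain n)
    have hstep0 := step x hx25
    have hfin : 0 < B x := lt_of_le_of_lt hB1 hstep0
    simp only [hB] at hfin
    linarith

end Stmt8Aux

theorem stmt8 (x : ℝ) (hx : 0 < x) :
    Real.log (x + 1 / 2) - 1 / x < digamma x ∧
      digamma x < Real.log (x + Real.exp (-Real.eulerMascheroniConstant)) - 1 / x := by
  have hd := Stmt8Aux.digamma_eq hx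
  constructor
  · have hA := Stmt8Aux.A_pos hx
    rw [hd]
    linarith
  · have hB := Stmt8Aux.B_pos hx
    rw [hd]
    linarith
end

section
/- The function Q(x) = e^{ψ(x+1)} - x is strictly decreasing on (0, ∞), and lim_{x→∞} Q(x) = 1/2. -/
open Real MeasureTheory Filter Set

section S9aux

open Real Filter Set Finset Topology

namespace S9

noncomputable def P (y : ℝ) : ℝ :=
  -Real.eulerMascheroniConstant + ∑' m : ℕ, (1/(m+1) - 1/(y+m))
noncomputable def T (y : ℝ) : ℝ := ∑' m : ℕ, 1/(y+m)^2
noncomputable def T2 (y : ℝ) : ℝ := ∑' m : ℕ, 1/(y+m)^3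

lemma pos_add {y : ℝ} (hy : 0 < y) (m : ℕ) : 0 < y + m := by positivity

lemma min_mul_le {y : ℝ} (hy : 0 < y) (m : ℕ) : min y 1 * (m+1) ≤ y + m := by
  have hm : (0:ℝ) ≤ m := Nat.cast_nonneg m
  rcases le_total y 1 with h | h
  · rw [min_eq_left h]; nlinarith
  · rw [min_eq_right h]; nlinarith

lemma summable_aux (k : ℕ) (hk : 2 ≤ k) : Summable (fun m : ℕ => 1/((m:ℝ)+1)^k) := by
  have := (summable_one_div_nat_pow (p := k)).mpr hk
  have h2 := (summable_nat_add_iff (f := fun n : ℕ => 1/(n:ℝ)^k) 1).mpr this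
  simpa using h2

lemma summable_T {y : ℝ} (hy : 0 < y) : Summable (fun m : ℕ => 1/(y+m)^2) := by
  have hmin : 0 < min y 1 := lt_min hy one_pos
  refine Summable.of_nonneg_of_le (fun m => by positivity)
    (fun m => ?_) ((summable_aux 2 le_rfl).mul_left ((1/min y 1)^2))
  have h1 := min_mul_le hy m
  have hm1 : (0:ℝ) < (m:ℝ)+1 := by positivity
  rw [div_pow, one_pow]
  rw [div_mul_div_comm, one_mul]
  apply div_le_div_of_nonneg_left one_pos.le (by positivity)
  calc (min y 1)^2 * ((m:ℝ)+1)^2 = (min y 1 * ((m:ℝ)+1))^2 := by ring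
  _ ≤ (y+m)^2 := pow_le_pow_left₀ (by positivity) h1 2

lemma summable_T2 {y : ℝ} (hy : 0 < y) : Summable (fun m : ℕ => 1/(y+m)^3) := by
  refine Summable.of_nonneg_of_le (fun m => by positivity) (fun m => ?_)
    ((summable_T hy).mul_left (1/y))
  have := pos_add hy m
  rw [div_mul_div_comm, one_mul]
  apply div_le_div_of_nonneg_left one_pos.le (by positivity)
  nlinarith [sq_nonneg (y+m)]

lemma summable_g {y : ℝ} (hy : 0 < y) :
    Summable (fun m : ℕ => 1/((m:ℝ)+1) - 1/(y+m)) := by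
  have hmin : 0 < min y 1 := lt_min hy one_pos
  apply Summable.of_norm
  refine Summable.of_nonneg_of_le (fun m => norm_nonneg _)
    (fun m => ?_) ((summable_aux 2 le_rfl).mul_left (|y-1| / min y 1))
  have h0 := pos_add hy m
  have hm1 : (0:ℝ) < (m:ℝ)+1 := by positivity
  have : 1/((m:ℝ)+1) - 1/(y+m) = (y-1)/(((m:ℝ)+1)*(y+m)) := by
    field_simp; ring
  have h1 := min_mul_le hy m
  have key : min y 1 * ((m:ℝ)+1)^2 ≤ ((m:ℝ)+1)*(y+m) := by nlinarith
  rw [Real.norm_eq_abs, this, abs_div,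
    abs_of_pos (show (0:ℝ) < ((m:ℝ)+1)*(y+m) by positivity)]
  calc |y-1| / (((m:ℝ)+1)*(y+m)) ≤ |y-1| / (min y 1 * ((m:ℝ)+1)^2) :=
        div_le_div_of_nonneg_left (abs_nonneg _) (by positivity) key
  _ = |y-1| / min y 1 * (1/((m:ℝ)+1)^2) := by
        rw [mul_one_div, div_div]


/-! ### Telescoping sums -/

lemma hasSum_telescope {f : ℕ → ℝ} (h0 : ∀ m, f (m+1) ≤ f m) (hf : Tendsto f atTop (𝓝 0)) :
    HasSum (fun m => f m - f (m+1)) (f 0) := by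
  rw [hasSum_iff_tendsto_nat_of_nonneg (fun m => sub_nonneg.mpr (h0 m))]
  simp only [Finset.sum_range_sub' f]
  simpa using tendsto_const_nhds.sub hf

lemma tendsto_add_nat_atTop (y : ℝ) : Tendsto (fun m : ℕ => y + (m:ℝ)) atTop atTop :=
  tendsto_atTop_add_const_left _ y tendsto_natCast_atTop_atTop

lemma tendsto_inv_shift_pow (y : ℝ) (k : ℕ) (hk : k ≠ 0) :
    Tendsto (fun m : ℕ => 1/(y+(m:ℝ))^k) atTop (𝓝 0) := by
  simp only [one_div]
  exact ((tendsto_pow_atTop hk).comp (tendsto_add_nat_atTop y)).inv_tendsto_atTop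

lemma tendsto_inv_shift (y : ℝ) : Tendsto (fun m : ℕ => 1/(y+(m:ℝ))) atTop (𝓝 0) := by
  simpa using tendsto_inv_shift_pow y 1 one_ne_zero

/-- `∑ 1/(y+m)(y+m+1)` telescopes to `1/y`. -/
lemma hasSum_tele1 {y : ℝ} (hy : 0 < y) :
    HasSum (fun m : ℕ => 1/(y+(m:ℝ)) - 1/(y+(m:ℝ)+1)) (1/y) := by
  have h := hasSum_telescope (f := fun m : ℕ => 1/(y+(m:ℝ)))
    (fun m => by
      have h1 := pos_add hy m
      push_cast
      gcongr <;> linarith)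
    (tendsto_inv_shift y)
  simp only [Nat.cast_add, Nat.cast_one, Nat.cast_zero, add_zero] at h
  convert h using 2 with m
  push_cast
  ring_nf

lemma hasSum_tele2 {y : ℝ} (hy : 0 < y) :
    HasSum (fun m : ℕ => 1/(y+(m:ℝ))^2 - 1/(y+(m:ℝ)+1)^2) (1/y^2) := by
  have h := hasSum_telescope (f := fun m : ℕ => 1/(y+(m:ℝ))^2)
    (fun m => by
      have h1 := pos_add hy m
      push_cast
      gcongr <;> linarith)
    (tendsto_inv_shift_pow y 2 two_ne_zero)
  simp only [Nat.cast_add, Nat.cast_one, Nat.cast_zero, add_zero] at h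
  convert h using 2 with m
  push_cast
  ring_nf

lemma hasSum_teleh {y : ℝ} (hy : 1/2 < y) :
    HasSum (fun m : ℕ => 1/(y+(m:ℝ)-1/2) - 1/(y+(m:ℝ)+1/2)) (1/(y-1/2)) := by
  have h := hasSum_telescope (f := fun m : ℕ => 1/(y+(m:ℝ)-1/2))
    (fun m => by
      have hm : (0:ℝ) ≤ m := Nat.cast_nonneg m
      push_cast
      gcongr <;> linarith)
    (by
      have := tendsto_inv_shift (y - 1/2)
      convert this using 2 with m
      ring)
  simp only [Nat.cast_add, Nat.cast_one, Nat.cast_zero, add_zero] at h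
  convert h using 2 with m
  push_cast
  ring_nf

lemma hasSum_teleh2 {y : ℝ} (hy : 1/2 < y) :
    HasSum (fun m : ℕ => 1/(2*(y+(m:ℝ)-1/2)^2) - 1/(2*(y+(m:ℝ)+1/2)^2)) (1/(2*(y-1/2)^2)) := by
  have h := hasSum_telescope (f := fun m : ℕ => 1/(2*(y+(m:ℝ)-1/2)^2))
    (fun m => by
      have hm : (0:ℝ) ≤ m := Nat.cast_nonneg m
      push_cast
      gcongr <;> nlinarith)
    (by
      have h2 := (tendsto_inv_shift_pow (y-1/2) 2 two_ne_zero).const_mul (1/2 : ℝ)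
      rw [mul_zero] at h2
      convert h2 using 2 with m
      field_simp
      ring_nf)
  simp only [Nat.cast_add, Nat.cast_one, Nat.cast_zero, add_zero] at h
  convert h using 2 with m
  push_cast
  ring_nf


/-! ### Bounds on T and T2 -/

lemma T_pos {y : ℝ} (hy : 0 < y) : 0 < T y := by
  have h0 : 0 < 1/y^2 := by positivity
  calc 0 < 1/(y+(0:ℕ))^2 := by push_cast; simpa using h0
  _ ≤ T y := Summable.le_tsum (summable_T hy) 0 (fun m _ => by positivity)

lemma T_lt {y : ℝ} (hy : 1/2 < y) : T y < 1/(y-1/2) := by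
  have hy0 : 0 < y := by linarith
  have term : ∀ m : ℕ, 1/(y+(m:ℝ))^2 < 1/(y+(m:ℝ)-1/2) - 1/(y+(m:ℝ)+1/2) := by
    intro m
    have hm : (0:ℝ) ≤ m := Nat.cast_nonneg m
    have h1 : (0:ℝ) < y+(m:ℝ)-1/2 := by linarith
    have h2 : (0:ℝ) < y+(m:ℝ)+1/2 := by linarith
    have h3 : (0:ℝ) < y+(m:ℝ) := by linarith
    rw [div_sub_div _ _ h1.ne' h2.ne', div_lt_div_iff₀ (by positivity) (by positivity)]
    nlinarith
  exact hasSum_lt (i := 0) (fun m => (term m).le) (term 0)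
    (summable_T hy0).hasSum (hasSum_teleh hy)

lemma T_gt {y : ℝ} (hy : 0 < y) : 1/y + 1/(2*y^2) < T y := by
  have hS : HasSum (fun m : ℕ =>
      (1/(y+(m:ℝ)) - 1/(y+(m:ℝ)+1)) + (1/2)*(1/(y+(m:ℝ))^2 - 1/(y+(m:ℝ)+1)^2))
      (1/y + 1/(2*y^2)) := by
    have := (hasSum_tele1 hy).add ((hasSum_tele2 hy).mul_left (1/2))
    convert this using 1
    rw [mul_one_div, div_div]
  have term : ∀ m : ℕ,
      (1/(y+(m:ℝ)) - 1/(y+(m:ℝ)+1)) + (1/2)*(1/(y+(m:ℝ))^2 - 1/(y+(m:ℝ)+1)^2)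
        < 1/(y+(m:ℝ))^2 := by
    intro m
    have h1 := pos_add hy m
    have h2 : (0:ℝ) < y+(m:ℝ)+1 := by linarith
    have key : 1/(y+(m:ℝ))^2 - ((1/(y+(m:ℝ)) - 1/(y+(m:ℝ)+1)) + (1/2)*(1/(y+(m:ℝ))^2 - 1/(y+(m:ℝ)+1)^2))
        = 1/(2*(y+(m:ℝ))^2*(y+(m:ℝ)+1)^2) := by
      field_simp
      ring
    nlinarith [key, one_div_pos.mpr (show (0:ℝ) < 2*(y+(m:ℝ))^2*(y+(m:ℝ)+1)^2 by positivity)]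
  exact hasSum_lt (i := 0) (fun m => (term m).le) (term 0) hS (summable_T hy).hasSum

lemma T2_pos {y : ℝ} (hy : 0 < y) : 0 < T2 y := by
  have h0 : 0 < 1/y^3 := by positivity
  calc 0 < 1/(y+(0:ℕ))^3 := by push_cast; simpa using h0
  _ ≤ T2 y := Summable.le_tsum (summable_T2 hy) 0 (fun m _ => by positivity)

lemma T2_lt {y : ℝ} (hy : 1/2 < y) : T2 y < 1/(2*(y-1/2)^2) := by
  have hy0 : 0 < y := by linarith
  have term : ∀ m : ℕ, 1/(y+(m:ℝ))^3 < 1/(2*(y+(m:ℝ)-1/2)^2) - 1/(2*(y+(m:ℝ)+1/2)^2) := by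
    intro m
    have hm : (0:ℝ) ≤ m := Nat.cast_nonneg m
    have h1 : (0:ℝ) < y+(m:ℝ)-1/2 := by linarith
    have h2 : (0:ℝ) < y+(m:ℝ)+1/2 := by linarith
    have h3 : (0:ℝ) < y+(m:ℝ) := by linarith
    have h4 : 1/4 < (y+(m:ℝ))^2 := by nlinarith
    rw [div_sub_div _ _ (by positivity) (by positivity),
      div_lt_div_iff₀ (by positivity) (by positivity)]
    nlinarith [h4, sq_nonneg (y+(m:ℝ))]
  exact hasSum_lt (i := 0) (fun m => (term m).le) (term 0)
    (summable_T2 hy0).hasSum (hasSum_teleh2 hy)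

/-! ### Recurrences -/

lemma T_rec {y : ℝ} (hy : 0 < y) : T (y+1) = T y - 1/y^2 := by
  have h := Summable.tsum_eq_zero_add (f := fun m : ℕ => 1/(y+(m:ℝ))^2) (summable_T hy)
  simp only [Nat.cast_zero, add_zero, Nat.cast_add, Nat.cast_one] at h
  have h2 : ∑' (b : ℕ), 1/(y+((b:ℝ)+1))^2 = T (y+1) := by
    unfold T; congr 1 with m; ring_nf
  rw [h2] at h
  have h3 : T y = 1/y^2 + T (y+1) := h
  linarith

lemma T2_rec {y : ℝ} (hy : 0 < y) : T2 (y+1) = T2 y - 1/y^3 := by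
  have h := Summable.tsum_eq_zero_add (f := fun m : ℕ => 1/(y+(m:ℝ))^3) (summable_T2 hy)
  simp only [Nat.cast_zero, add_zero, Nat.cast_add, Nat.cast_one] at h
  have h2 : ∑' (b : ℕ), 1/(y+((b:ℝ)+1))^3 = T2 (y+1) := by
    unfold T2; congr 1 with m; ring_nf
  rw [h2] at h
  have h3 : T2 y = 1/y^3 + T2 (y+1) := h
  linarith


/-! ### Positivity of `phi = (ψ')² + ψ''` -/

noncomputable def phi (y : ℝ) : ℝ := (T y)^2 - 2 * T2 y

lemma phi_step {y : ℝ} (hy : 0 < y) : phi (y+1) < phi y := by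
  have key : phi y - phi (y+1) = 2/y^2 * (T y - 1/y - 1/(2*y^2)) := by
    unfold phi
    rw [T_rec hy, T2_rec hy]
    field_simp
    ring
  have h2 : 0 < 2/y^2 * (T y - 1/y - 1/(2*y^2)) :=
    mul_pos (by positivity) (by linarith [T_gt hy])
  linarith

lemma T_shift_tendsto {y : ℝ} (hy : 1/2 < y) :
    Tendsto (fun n : ℕ => T (y+n)) atTop (𝓝 0) := by
  refine squeeze_zero (fun n => (T_pos (by positivity : (0:ℝ) < y + n)).le)
    (fun n => (T_lt (by push_cast; linarith [Nat.cast_nonneg (α := ℝ) n] : 1/2 < y + (n:ℝ))).le) ?_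
  have := tendsto_inv_shift (y - 1/2)
  convert this using 2 with n
  ring

lemma T2_shift_tendsto {y : ℝ} (hy : 1/2 < y) :
    Tendsto (fun n : ℕ => T2 (y+n)) atTop (𝓝 0) := by
  refine squeeze_zero (fun n => (T2_pos (by positivity : (0:ℝ) < y + n)).le)
    (fun n => (T2_lt (by push_cast; linarith [Nat.cast_nonneg (α := ℝ) n] : 1/2 < y + (n:ℝ))).le) ?_
  have h2 := (tendsto_inv_shift_pow (y-1/2) 2 two_ne_zero).const_mul (1/2 : ℝ)
  rw [mul_zero] at h2
  convert h2 using 2 with n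
  field_simp
  ring

lemma phi_shift_tendsto {y : ℝ} (hy : 1/2 < y) :
    Tendsto (fun n : ℕ => phi (y+n)) atTop (𝓝 0) := by
  have h := (((T_shift_tendsto hy).pow 2).sub ((T2_shift_tendsto hy).const_mul 2))
  simpa [phi] using h

lemma phi_nonneg {y : ℝ} (hy : 0 < y) : 0 ≤ phi y := by
  have hmono : ∀ n : ℕ, phi (y+(n+1:ℕ)) < phi (y+n) := by
    intro n
    have h := phi_step (show (0:ℝ) < y + n by positivity)
    convert h using 2
    push_cast
    ring
  have hle : ∀ n : ℕ, phi (y+n) ≤ phi y := by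
    intro n
    induction n with
    | zero => simp
    | succ k ih => exact le_trans (hmono k).le ih
  have htend : Tendsto (fun n : ℕ => phi (y+n)) atTop (𝓝 0) := by
    rcases lt_or_ge (1/2) y with h | h
    · exact phi_shift_tendsto h
    · have h1 : (1:ℝ)/2 < y + 1 := by linarith
      have := phi_shift_tendsto h1
      refine (tendsto_add_atTop_iff_nat 1).mp ?_
      convert this using 2 with n
      push_cast
      ring
  exact le_of_tendsto htend (Eventually.of_forall hle)

lemma phi_pos {y : ℝ} (hy : 0 < y) : 0 < phi y := by
  have h1 := phi_nonneg (show (0:ℝ) < y + 1 by linarith)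
  linarith [phi_step hy]


/-! ### Uniform convergence and derivatives -/

/-- Gauss limit partial terms -/
noncomputable def A (n : ℕ) (y : ℝ) : ℝ :=
  Real.log n - ∑ m ∈ Finset.range (n+1), 1/(y+m)

noncomputable def c (n : ℕ) : ℝ := Real.log n - ∑ m ∈ Finset.range (n+1), 1/((m:ℝ)+1)

lemma tendsto_c : Tendsto c atTop (𝓝 (-Real.eulerMascheroniConstant)) := by
  have key : ∀ n : ℕ, c n =
      -(Real.eulerMascheroniSeq' (n+1)) - (Real.log ((n:ℝ)+1) - Real.log n) := by
    intro n
    have h1 : ((harmonic (n+1) : ℚ) : ℝ) = ∑ m ∈ Finset.range (n+1), 1/((m:ℝ)+1) := by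
      unfold harmonic
      push_cast
      simp [one_div]
    unfold c
    rw [Real.eulerMascheroniSeq', if_neg (Nat.succ_ne_zero n), ← h1]
    push_cast
    ring
  have h2 : Tendsto (fun n : ℕ => -(Real.eulerMascheroniSeq' (n+1))
      - (Real.log ((n:ℝ)+1) - Real.log n)) atTop (𝓝 (-Real.eulerMascheroniConstant - 0)) :=
    ((Real.tendsto_eulerMascheroniSeq'.comp (tendsto_add_atTop_nat 1)).neg).sub
      Real.tendsto_log_nat_add_one_sub_log
  rw [sub_zero] at h2
  exact h2.congr (fun n => (key n).symm)

lemma TUO_comp_succ {F : ℕ → ℝ → ℝ} {f : ℝ → ℝ} {s : Set ℝ}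
    (h : TendstoUniformlyOn F f atTop s) :
    TendstoUniformlyOn (fun n => F (n+1)) f atTop s :=
  fun u hu => (tendsto_add_atTop_nat 1).eventually (h u hu)

lemma tuo_A {a b : ℝ} (ha : 0 < a) (hb : 0 < b) :
    TendstoUniformlyOn A (fun y => -Real.eulerMascheroniConstant
      + ∑' m : ℕ, (1/((m:ℝ)+1) - 1/(y+m))) atTop (Ioo a b) := by
  have hmin : 0 < min a 1 := lt_min ha one_pos
  -- uniform convergence of the series part
  have hsum : TendstoUniformlyOn
      (fun n => fun y => ∑ m ∈ Finset.range n, (1/((m:ℝ)+1) - 1/(y+m)))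
      (fun y => ∑' m : ℕ, (1/((m:ℝ)+1) - 1/(y+m))) atTop (Ioo a b) := by
    refine tendstoUniformlyOn_tsum_nat
      (u := fun m => (b+1) / (min a 1 * ((m:ℝ)+1)^2)) ?_ ?_
    · refine Summable.of_nonneg_of_le (fun m => by positivity) (fun m => ?_)
        ((summable_aux 2 le_rfl).mul_left ((b+1)/(min a 1)))
      rw [div_mul_eq_mul_div, mul_one_div, div_div, mul_comm ((a ⊓ 1))]
    · intro m y hy
      obtain ⟨hya, hyb⟩ := hy
      have hy0 : 0 < y := ha.trans hya
      have h0 := pos_add hy0 m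
      have hm1 : (0:ℝ) < (m:ℝ)+1 := by positivity
      have hb0 : 0 < b := hy0.trans hyb
      have this1 : 1/((m:ℝ)+1) - 1/(y+m) = (y-1)/(((m:ℝ)+1)*(y+m)) := by
        field_simp; ring
      have h1 : min a 1 * ((m:ℝ)+1) ≤ a + m := min_mul_le ha m
      have key : min a 1 * ((m:ℝ)+1)^2 ≤ ((m:ℝ)+1)*(y+m) := by
        have : a + (m:ℝ) ≤ y + m := by linarith
        nlinarith
      rw [Real.norm_eq_abs, this1, abs_div,
        abs_of_pos (show (0:ℝ) < ((m:ℝ)+1)*(y+m) by positivity)]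
      have habs : |y - 1| ≤ b + 1 := by
        rw [abs_le]; constructor <;> linarith
      exact div_le_div₀ (by linarith) habs (by positivity) key
  have hA : A = fun n => fun y => c n
      + ∑ m ∈ Finset.range (n+1), (1/((m:ℝ)+1) - 1/(y+m)) := by
    funext n y
    unfold A c
    rw [Finset.sum_sub_distrib]
    ring
  rw [hA]
  have := (tendsto_c.tendstoUniformlyOn_const (Ioo a b)).add (TUO_comp_succ hsum)
  exact this

lemma tendsto_A_P {y : ℝ} (hy : 0 < y) : Tendsto (fun n => A n y) atTop (𝓝 (P y)) := by
  have h := (tuo_A (a := y/2) (b := y+1) (by positivity) (by positivity)).tendsto_at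
    (show y ∈ Ioo (y/2) (y+1) by constructor <;> [linarith; linarith])
  exact h

lemma hasDerivAt_logGammaSeq {x : ℝ} (hx : 0 < x) (n : ℕ) :
    HasDerivAt (fun y => Real.BohrMollerup.logGammaSeq y n) (A n x) x := by
  have hsum : HasDerivAt (fun y : ℝ => ∑ m ∈ Finset.range (n+1), Real.log (y+m))
      (∑ m ∈ Finset.range (n+1), 1/(x+m)) x := by
    apply HasDerivAt.fun_sum
    intro m _
    have h0 := pos_add hx m
    have := ((hasDerivAt_id x).add_const (m:ℝ)).log h0.ne'
    simpa [one_div] using this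
  have h1 : HasDerivAt (fun y : ℝ => y * Real.log n + Real.log (Nat.factorial n))
      (Real.log n) x := by
    simpa using ((hasDerivAt_id x).mul_const (Real.log n)).add_const (Real.log (Nat.factorial n))
  have := h1.fun_sub hsum
  unfold Real.BohrMollerup.logGammaSeq A
  convert this using 1

lemma hasDerivAt_logGamma {x : ℝ} (hx : 0 < x) :
    HasDerivAt (fun y => Real.log (Real.Gamma y)) (P x) x := by
  have key : HasDerivAt (fun y => Real.log (Real.Gamma y))
      (-Real.eulerMascheroniConstant + ∑' m : ℕ, (1/((m:ℝ)+1) - 1/(x+m))) x := by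
    apply hasDerivAt_of_tendstoUniformlyOn (isOpen_Ioo (a := x/2) (b := x+1))
      (tuo_A (by positivity) (by positivity)) (f := fun n => fun y => Real.BohrMollerup.logGammaSeq y n)
    · filter_upwards with n y hy
      have hy0 : 0 < y := lt_trans (by linarith [hy.1] : (0:ℝ) < x/2) hy.1
      exact hasDerivAt_logGammaSeq hy0 n
    · intro y hy
      have hy0 : 0 < y := lt_trans (by linarith [hy.1] : (0:ℝ) < x/2) hy.1
      exact Real.BohrMollerup.tendsto_log_gamma hy0
    · exact ⟨by linarith, by linarith⟩
  exact key

lemma digamma_eq {x : ℝ} (hx : 0 < x) : digamma x = P x := (hasDerivAt_logGamma hx).deriv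

lemma hasDerivAt_P {y : ℝ} (hy : 0 < y) : HasDerivAt P (T y) y := by
  set a := y/2 with ha
  have ha0 : (0:ℝ) < a := by positivity
  have key : HasDerivAt (fun z => -Real.eulerMascheroniConstant
      + ∑' m : ℕ, (1/((m:ℝ)+1) - 1/(z+m))) (∑' m : ℕ, 1/(y+(m:ℝ))^2) y := by
    apply hasDerivAt_of_tendstoUniformlyOn (isOpen_Ioo (a := a) (b := y+1))
      (f := fun n => fun z => -Real.eulerMascheroniConstant
        + ∑ m ∈ Finset.range n, (1/((m:ℝ)+1) - 1/(z+m)))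
      (f' := fun n => fun z => ∑ m ∈ Finset.range n, 1/(z+(m:ℝ))^2)
      (g' := fun z => ∑' m : ℕ, 1/(z+(m:ℝ))^2) (l := atTop)
    · have := tendstoUniformlyOn_tsum_nat (f := fun m : ℕ => fun z : ℝ => 1/(z+(m:ℝ))^2)
        (u := fun m => 1/(a+(m:ℝ))^2) (summable_T ha0) (s := Ioo a (y+1)) ?_
      · exact this
      · intro m z hz
        have h1 := pos_add ha0 m
        have h2 : a + (m:ℝ) ≤ z + m := by linarith [hz.1]
        have h3 : (0:ℝ) < z + m := h1.trans_le h2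
        rw [Real.norm_eq_abs, abs_of_pos (one_div_pos.mpr (pow_pos h3 2))]
        exact one_div_le_one_div_of_le (pow_pos h1 2) (pow_le_pow_left₀ h1.le h2 2)
    · filter_upwards with n z hz
      apply HasDerivAt.const_add
      apply HasDerivAt.fun_sum
      intro m _
      have h0 : (0:ℝ) < z + m := pos_add (ha0.trans hz.1) m
      have := (((hasDerivAt_id z).add_const (m:ℝ)).inv h0.ne').const_sub (1/((m:ℝ)+1))
      convert this using 1
      · funext w
        simp [one_div]
      · simp only [id_eq]
        field_simp
    · intro z hz
      have hz0 : 0 < z := ha0.trans hz.1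
      exact ((summable_g hz0).hasSum.tendsto_sum_nat).const_add _
    · exact ⟨by rw [ha]; linarith, by linarith⟩
  have hP : P = fun z => -Real.eulerMascheroniConstant
      + ∑' m : ℕ, (1/((m:ℝ)+1) - 1/(z+m)) := by
    funext z; rfl
  rw [hP]
  exact key

lemma hasDerivAt_T {y : ℝ} (hy : 0 < y) : HasDerivAt T (-2 * T2 y) y := by
  set a := y/2 with ha
  have ha0 : (0:ℝ) < a := by positivity
  have key : HasDerivAt (fun z => ∑' m : ℕ, 1/(z+(m:ℝ))^2)
      (∑' m : ℕ, (-2) * (1/(y+(m:ℝ))^3)) y := by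
    apply hasDerivAt_of_tendstoUniformlyOn (isOpen_Ioo (a := a) (b := y+1))
      (f := fun n => fun z => ∑ m ∈ Finset.range n, 1/(z+(m:ℝ))^2)
      (f' := fun n => fun z => ∑ m ∈ Finset.range n, (-2) * (1/(z+(m:ℝ))^3))
      (g' := fun z => ∑' m : ℕ, (-2) * (1/(z+(m:ℝ))^3)) (l := atTop)
    · have := tendstoUniformlyOn_tsum_nat
        (f := fun m : ℕ => fun z : ℝ => (-2 : ℝ) * (1/(z+(m:ℝ))^3))
        (u := fun m => 2 * (1/(a+(m:ℝ))^3)) ((summable_T2 ha0).mul_left 2)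
        (s := Ioo a (y+1)) ?_
      · exact this
      · intro m z hz
        have h1 := pos_add ha0 m
        have h2 : a + (m:ℝ) ≤ z + m := by linarith [hz.1]
        have h3 : (0:ℝ) < z + m := by linarith
        rw [Real.norm_eq_abs, abs_mul, abs_of_pos (by positivity : (0:ℝ) < 1/(z+(m:ℝ))^3)]
        norm_num
        gcongr
    · filter_upwards with n z hz
      apply HasDerivAt.fun_sum
      intro m _
      have h0 : (0:ℝ) < z + m := pos_add (ha0.trans hz.1) m
      have hsq : HasDerivAt (fun w : ℝ => (w+(m:ℝ))^2) (2*(z+(m:ℝ))) z := by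
        have := ((hasDerivAt_id z).add_const (m:ℝ)).fun_pow 2
        simpa [mul_comm] using this
      have := hsq.inv (by positivity : ((z+(m:ℝ))^2) ≠ 0)
      refine (this.congr_of_eventuallyEq (Filter.EventuallyEq.of_eq ?_)).congr_deriv (Eq.symm ?_)
      · funext w
        simp [one_div]
      · field_simp
    · intro z hz
      exact (summable_T (ha0.trans hz.1)).hasSum.tendsto_sum_nat
    · exact ⟨by rw [ha]; linarith, by linarith⟩
  have h2 : ∑' m : ℕ, (-2 : ℝ) * (1/(y+(m:ℝ))^3) = -2 * T2 y := tsum_mul_left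
  rw [h2] at key
  exact key


/-! ### The function F = ψ + log ψ' -/

noncomputable def Fn (y : ℝ) : ℝ := P y + Real.log (T y)

lemma hasDerivAt_F {y : ℝ} (hy : 0 < y) :
    HasDerivAt Fn (T y + (-2 * T2 y) / T y) y :=
  (hasDerivAt_P hy).add ((hasDerivAt_T hy).log (T_pos hy).ne')

lemma F_deriv_pos {y : ℝ} (hy : 0 < y) : 0 < T y + (-2 * T2 y) / T y := by
  have hT := T_pos hy
  have hphi := phi_pos hy
  have key : T y + (-2 * T2 y) / T y = phi y / T y := by
    unfold phi
    field_simp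
    ring
  rw [key]
  exact div_pos hphi hT

lemma F_strictMono : StrictMonoOn Fn (Ioi (1/2 : ℝ)) := by
  apply strictMonoOn_of_deriv_pos (convex_Ioi _)
  · intro y hy
    have hy0 : (0:ℝ) < y := lt_trans one_half_pos hy
    exact (hasDerivAt_F hy0).continuousAt.continuousWithinAt
  · intro y hy
    rw [interior_Ioi] at hy
    have hy0 : (0:ℝ) < y := lt_trans one_half_pos hy
    rw [(hasDerivAt_F hy0).deriv]
    exact F_deriv_pos hy0

/-! ### Elementary log inequalities -/

lemma nonneg_of_tendsto_zero {g G : ℝ → ℝ} {c : ℝ}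
    (hd : ∀ t ∈ Ioi c, HasDerivAt g (G t) t) (hG : ∀ t ∈ Ioi c, G t ≤ 0)
    (h0 : Tendsto g atTop (𝓝 0)) {s : ℝ} (hs : c < s) : 0 ≤ g s := by
  have hanti : AntitoneOn g (Ioi c) := by
    refine antitoneOn_of_deriv_nonpos (convex_Ioi c)
      (fun t ht => (hd t ht).continuousAt.continuousWithinAt) ?_ ?_
    · intro t ht
      rw [interior_Ioi] at ht
      exact (hd t ht).differentiableAt.differentiableWithinAt
    · intro t ht
      rw [interior_Ioi] at ht
      rw [(hd t ht).deriv]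
      exact hG t ht
  refine le_of_tendsto h0 ?_
  filter_upwards [eventually_ge_atTop s] with z hz
  exact hanti hs (lt_of_lt_of_le hs hz) hz

lemma tendsto_log_ratio (p q : ℝ) :
    Tendsto (fun t : ℝ => Real.log (t+p) - Real.log (t+q)) atTop (𝓝 0) := by
  have h1 : Tendsto (fun t : ℝ => (t+p)/(t+q)) atTop (𝓝 1) := by
    have h0 : Tendsto (fun t : ℝ => 1 + (p-q)/(t+q)) atTop (𝓝 (1+0)) :=
      tendsto_const_nhds.add
        (tendsto_const_nhds.div_atTop (tendsto_atTop_add_const_right _ q tendsto_id))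
    rw [add_zero] at h0
    apply h0.congr'
    filter_upwards [eventually_gt_atTop (-q)] with t ht
    have : t + q > 0 := by linarith
    field_simp
    ring
  have h2 := (Real.continuousAt_log one_ne_zero).tendsto.comp h1
  rw [Real.log_one] at h2
  apply h2.congr'
  filter_upwards [eventually_gt_atTop (-p), eventually_gt_atTop (-q)] with t h1t h2t
  have hp : t + p > 0 := by linarith
  have hq : t + q > 0 := by linarith
  simp only [Function.comp_apply]
  rw [Real.log_div hp.ne' hq.ne']

lemma tendsto_one_div_poly (k : ℕ) (hk : k ≠ 0) :
    Tendsto (fun t : ℝ => 1/t^k) atTop (𝓝 0) := by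
  simp only [one_div]
  exact (tendsto_pow_atTop hk).inv_tendsto_atTop

lemma log_ineq_low {s : ℝ} (hs : 1/2 < s) :
    1/s ≤ Real.log (s+1/2) - Real.log (s-1/2) := by
  have key : 0 ≤ (fun t : ℝ => Real.log (t+1/2) - Real.log (t-1/2) - 1/t) s := by
    refine nonneg_of_tendsto_zero (c := 1/2)
      (g := fun t : ℝ => Real.log (t+1/2) - Real.log (t-1/2) - 1/t)
      (G := fun t => 1/(t+1/2) - 1/(t-1/2) + 1/t^2) ?_ ?_ ?_ hs
    · intro t ht
      rw [Set.mem_Ioi] at ht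
      have h1 : (0:ℝ) < t + 1/2 := by linarith
      have h2 : (0:ℝ) < t - 1/2 := by linarith
      have h3 : (0:ℝ) < t := by linarith
      have d1 := ((hasDerivAt_id t).add_const (1/2:ℝ)).log h1.ne'
      have d2 := ((hasDerivAt_id t).sub_const (1/2:ℝ)).log h2.ne'
      have d3 := (hasDerivAt_id t).inv h3.ne'
      have := (d1.fun_sub d2).fun_sub d3
      refine (this.congr_of_eventuallyEq (Filter.EventuallyEq.of_eq ?_)).congr_deriv (Eq.symm ?_)
      · funext w
        simp [one_div]
      · simp only [id_eq]
        field_simp [h1.ne', h2.ne', h3.ne']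
        ring
    · intro t ht
      rw [Set.mem_Ioi] at ht
      have h1 : (0:ℝ) < t + 1/2 := by linarith
      have h2 : (0:ℝ) < t - 1/2 := by linarith
      have h3 : (0:ℝ) < t := by linarith
      have key2 : 1/(t+1/2) - 1/(t-1/2) = -(1/((t-1/2)*(t+1/2))) := by
        rw [div_sub_div _ _ h1.ne' h2.ne',
          show (1:ℝ)*(t-1/2) - (t+1/2)*1 = -1 by ring,
          show (t+1/2)*(t-1/2) = (t-1/2)*(t+1/2) by ring, neg_div, one_div]
      show 1/(t+1/2) - 1/(t-1/2) + 1/t^2 ≤ 0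
      rw [key2]
      have h4 : (t-1/2)*(t+1/2) ≤ t^2 := by nlinarith
      have h5 : (0:ℝ) < (t-1/2)*(t+1/2) := by positivity
      have h6 : 1/t^2 ≤ 1/((t-1/2)*(t+1/2)) := one_div_le_one_div_of_le h5 h4
      linarith
    · have ha := tendsto_log_ratio (1/2) (-1/2)
      have hb := (ha.sub (tendsto_one_div_poly 1 one_ne_zero))
      rw [sub_zero] at hb
      apply hb.congr
      intro t
      norm_num [sub_eq_add_neg]
  simp only at key
  linarith

lemma log_ineq_high {s : ℝ} (hs : 1 < s) :
    Real.log (s+1/2) - Real.log (s-1/2) ≤ 1/s + (1/9)*(1/s^3) := by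
  have key : 0 ≤ (fun t : ℝ =>
      1/t + (1/9)*(1/t^3) - (Real.log (t+1/2) - Real.log (t-1/2))) s := by
    refine nonneg_of_tendsto_zero (c := 1)
      (g := fun t : ℝ => 1/t + (1/9)*(1/t^3) - (Real.log (t+1/2) - Real.log (t-1/2)))
      (G := fun t => -(1/t^2) - (1/3)*(1/t^4) - (1/(t+1/2) - 1/(t-1/2))) ?_ ?_ ?_ hs
    · intro t ht
      rw [Set.mem_Ioi] at ht
      have h1 : (0:ℝ) < t + 1/2 := by linarith
      have h2 : (0:ℝ) < t - 1/2 := by linarith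
      have h3 : (0:ℝ) < t := by linarith
      have d1 := ((hasDerivAt_id t).add_const (1/2:ℝ)).log h1.ne'
      have d2 := ((hasDerivAt_id t).sub_const (1/2:ℝ)).log h2.ne'
      have d3 := (hasDerivAt_id t).inv h3.ne'
      have d4 : HasDerivAt (fun w : ℝ => w^3) (3*t^2) t := by
        simpa using (hasDerivAt_id t).fun_pow 3
      have d5 := d4.inv (by positivity : t^3 ≠ 0)
      have := (d3.fun_add (d5.const_mul (1/9:ℝ))).fun_sub (d1.fun_sub d2)
      refine (this.congr_of_eventuallyEq (Filter.EventuallyEq.of_eq ?_)).congr_deriv (Eq.symm ?_)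
      · funext w
        simp [one_div]
      · simp only [id_eq]
        field_simp [h1.ne', h2.ne', h3.ne']
        ring
    · intro t ht
      rw [Set.mem_Ioi] at ht
      have h1 : (0:ℝ) < t + 1/2 := by linarith
      have h2 : (0:ℝ) < t - 1/2 := by linarith
      have h3 : (0:ℝ) < t := by linarith
      have key2 : 1/(t+1/2) - 1/(t-1/2) = -(1/((t-1/2)*(t+1/2))) := by
        rw [div_sub_div _ _ h1.ne' h2.ne',
          show (1:ℝ)*(t-1/2) - (t+1/2)*1 = -1 by ring,
          show (t+1/2)*(t-1/2) = (t-1/2)*(t+1/2) by ring, neg_div, one_div]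
      show -(1/t^2) - (1/3)*(1/t^4) - (1/(t+1/2) - 1/(t-1/2)) ≤ 0
      rw [key2]
      have h5 : (0:ℝ) < (t-1/2)*(t+1/2) := by positivity
      have e1 : 1/((t-1/2)*(t+1/2)) - 1/t^2 = (1/4)/(t^2*((t-1/2)*(t+1/2))) := by
        rw [div_sub_div _ _ h5.ne' (by positivity : (t:ℝ)^2 ≠ 0)]
        congr 1
        · ring
        · ring
      have e2 : (1/4)/(t^2*((t-1/2)*(t+1/2))) ≤ (1/3)*(1/t^4) := by
        rw [mul_one_div, div_le_div_iff₀ (by positivity) (by positivity)]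
        nlinarith [sq_nonneg t, sq_nonneg (t-1), sq_nonneg (t+1)]
      linarith
    · have ha := (tendsto_one_div_poly 1 one_ne_zero).add
        ((tendsto_one_div_poly 3 three_ne_zero).const_mul (1/9 : ℝ))
      have hb := ha.sub (tendsto_log_ratio (1/2) (-1/2))
      norm_num at hb ⊢
      apply hb.congr
      intro t
      norm_num [sub_eq_add_neg]
  simp only at key
  linarith


/-! ### Bounds on P -/

lemma tendsto_logn_sub (y : ℝ) :
    Tendsto (fun n : ℕ => Real.log n - Real.log (y+(n:ℝ)+1/2)) atTop (𝓝 0) := by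
  have h := (tendsto_log_ratio 0 (y+1/2)).comp tendsto_natCast_atTop_atTop
  apply h.congr
  intro n
  simp only [Function.comp_apply, add_zero]
  ring_nf

lemma sum_tele_log {y : ℝ} (n : ℕ) :
    ∑ m ∈ Finset.range (n+1), (Real.log (y+(m:ℝ)+1/2) - Real.log (y+(m:ℝ)-1/2))
      = Real.log (y+(n:ℝ)+1/2) - Real.log (y-1/2) := by
  have h := Finset.sum_range_sub (f := fun i : ℕ => Real.log (y+(i:ℝ)-1/2)) (n+1)
  simp only [Nat.cast_add, Nat.cast_one, Nat.cast_zero] at h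
  convert h using 2 with m
  · push_cast
    ring_nf
  · push_cast
    ring_nf
  · norm_num

lemma P_ge {y : ℝ} (hy : 1/2 < y) : Real.log (y-1/2) ≤ P y := by
  have hy0 : 0 < y := by linarith
  have hL : Tendsto (fun n : ℕ =>
      (Real.log n - Real.log (y+(n:ℝ)+1/2)) + Real.log (y-1/2))
      atTop (𝓝 (Real.log (y-1/2))) := by
    have := (tendsto_logn_sub y).add_const (Real.log (y-1/2))
    rwa [zero_add] at this
  refine le_of_tendsto_of_tendsto' hL (tendsto_A_P hy0) ?_
  intro n
  have hsum : ∑ m ∈ Finset.range (n+1), 1/(y+(m:ℝ))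
      ≤ Real.log (y+(n:ℝ)+1/2) - Real.log (y-1/2) := by
    rw [← sum_tele_log n]
    apply Finset.sum_le_sum
    intro m _
    have hm : (0:ℝ) ≤ m := Nat.cast_nonneg m
    exact log_ineq_low (by linarith : 1/2 < y+(m:ℝ))
  unfold A
  linarith

lemma P_le {y : ℝ} (hy : 1 < y) : P y ≤ Real.log (y-1/2) + T2 y / 9 := by
  have hy0 : 0 < y := by linarith
  have hL : Tendsto (fun n : ℕ =>
      (Real.log n - Real.log (y+(n:ℝ)+1/2)) + (Real.log (y-1/2) + T2 y / 9))
      atTop (𝓝 (Real.log (y-1/2) + T2 y / 9)) := by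
    have := (tendsto_logn_sub y).add_const (Real.log (y-1/2) + T2 y / 9)
    rwa [zero_add] at this
  refine le_of_tendsto_of_tendsto' (tendsto_A_P hy0) hL ?_
  intro n
  have hsum : Real.log (y+(n:ℝ)+1/2) - Real.log (y-1/2)
      - (1/9) * ∑ m ∈ Finset.range (n+1), 1/(y+(m:ℝ))^3
      ≤ ∑ m ∈ Finset.range (n+1), 1/(y+(m:ℝ)) := by
    rw [← sum_tele_log n, Finset.mul_sum, ← Finset.sum_sub_distrib]
    apply Finset.sum_le_sum
    intro m _
    have hm : (0:ℝ) ≤ m := Nat.cast_nonneg m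
    have := log_ineq_high (by linarith : 1 < y+(m:ℝ))
    have h9 : (1/9) * (1/(y+(m:ℝ))^3) = (1/9)*(1/(y+(m:ℝ))^3) := rfl
    linarith
  have htsum : ∑ m ∈ Finset.range (n+1), 1/(y+(m:ℝ))^3 ≤ T2 y :=
    Summable.sum_le_tsum _ (fun m _ => by positivity) (summable_T2 hy0)
  unfold A
  have h19 : (0:ℝ) < 1/9 := by norm_num
  nlinarith [hsum, htsum]

/-! ### Limit of F at infinity -/

lemma tendsto_aux_low : Tendsto (fun y : ℝ => Real.log (y-1/2) - Real.log y) atTop (𝓝 0) := by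
  have h := tendsto_log_ratio (-1/2) 0
  apply h.congr
  intro t
  norm_num [sub_eq_add_neg]

lemma tendsto_sub_half_atTop : Tendsto (fun y : ℝ => y - 1/2) atTop atTop := by
  have h := tendsto_atTop_add_const_right atTop (-1/2 : ℝ) tendsto_id
  apply h.congr
  intro y
  show y + (-1/2) = y - 1/2
  ring

lemma tendsto_aux_high : Tendsto (fun y : ℝ => (1/9)*(1/(2*(y-1/2)^2))) atTop (𝓝 0) := by
  have h1 : Tendsto (fun y : ℝ => (y-1/2)^2) atTop atTop :=
    (tendsto_pow_atTop two_ne_zero).comp tendsto_sub_half_atTop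
  have h2 : Tendsto (fun y : ℝ => 2*(y-1/2)^2) atTop atTop :=
    h1.const_mul_atTop (show (0:ℝ) < 2 by norm_num)
  have h3 := h2.inv_tendsto_atTop
  have h4 := h3.const_mul (1/9 : ℝ)
  rw [mul_zero] at h4
  apply h4.congr
  intro y
  simp [one_div]

lemma F_tendsto : Tendsto Fn atTop (𝓝 0) := by
  apply tendsto_of_tendsto_of_tendsto_of_le_of_le' tendsto_aux_low tendsto_aux_high
  · filter_upwards [eventually_gt_atTop (1:ℝ)] with y hy
    have hy0 : (0:ℝ) < y := by linarith
    have hyh : (1:ℝ)/2 < y := by linarith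
    have hT := T_pos hy0
    have hTy : 1/y ≤ T y := by
      have := T_gt hy0
      have : 1/y + 1/(2*y^2) ≤ T y := this.le
      have hpos : (0:ℝ) < 1/(2*y^2) := by positivity
      linarith
    have hlog : Real.log (1/y) ≤ Real.log (T y) :=
      Real.log_le_log (by positivity) hTy
    rw [one_div, Real.log_inv] at hlog
    have hP := P_ge hyh
    unfold Fn
    linarith
  · filter_upwards [eventually_gt_atTop (1:ℝ)] with y hy
    have hy0 : (0:ℝ) < y := by linarith
    have hyh : (1:ℝ)/2 < y := by linarith
    have hT := T_pos hy0
    have hlog : Real.log (T y) ≤ Real.log (1/(y-1/2)) :=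
      Real.log_le_log hT (T_lt hyh).le
    rw [one_div, Real.log_inv] at hlog
    have hP := P_le hy
    have hT2 : T2 y / 9 ≤ (1/9)*(1/(2*(y-1/2)^2)) := by
      rw [show (1/9:ℝ)*(1/(2*(y-1/2)^2)) = (1/(2*(y-1/2)^2))/9 by ring]
      gcongr
      exact (T2_lt hyh).le
    unfold Fn
    linarith

lemma F_neg {y : ℝ} (hy : 1/2 < y) : Fn y < 0 := by
  have h1 : Fn y < Fn (y+1) :=
    F_strictMono (mem_Ioi.mpr hy) (mem_Ioi.mpr (by linarith)) (lt_add_one y)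
  have h2 : Fn (y+1) ≤ 0 := by
    refine ge_of_tendsto F_tendsto ?_
    filter_upwards [eventually_ge_atTop (y+1)] with z hz
    exact F_strictMono.monotoneOn (mem_Ioi.mpr (by linarith)) (mem_Ioi.mpr (by linarith)) hz
  linarith


/-! ### Final assembly -/

lemma hasDerivAt_Q {x : ℝ} (hx : -1/2 < x) :
    HasDerivAt (fun x : ℝ => Real.exp (digamma (x+1)) - x)
      (T (x+1) * Real.exp (P (x+1)) - 1) x := by
  have hx1 : (0:ℝ) < x + 1 := by linarith
  have hP1 : HasDerivAt (fun x : ℝ => P (x+1)) (T (x+1)) x := by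
    have := (hasDerivAt_P hx1).comp x ((hasDerivAt_id x).add_const (1:ℝ))
    exact this.congr_deriv (mul_one _)
  have hExp : HasDerivAt (fun x : ℝ => Real.exp (P (x+1)))
      (T (x+1) * Real.exp (P (x+1))) x := by
    have := hP1.exp
    convert this using 1
    ring
  have h2 : HasDerivAt (fun x : ℝ => Real.exp (P (x+1)) - x)
      (T (x+1) * Real.exp (P (x+1)) - 1) x := by
    exact hExp.fun_sub (hasDerivAt_id x)
  apply h2.congr_of_eventuallyEq
  have hmem : Ioi (-1 : ℝ) ∈ 𝓝 x := (isOpen_Ioi).mem_nhds (by simp; linarith)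
  filter_upwards [hmem] with z hz
  rw [Set.mem_Ioi] at hz
  rw [digamma_eq (by linarith : (0:ℝ) < z + 1)]

lemma Q_deriv_neg {x : ℝ} (hx : -1/2 < x) :
    T (x+1) * Real.exp (P (x+1)) - 1 < 0 := by
  have hx1 : (0:ℝ) < x + 1 := by linarith
  have hF := F_neg (show 1/2 < x+1 by linarith)
  have hT := T_pos hx1
  have hlog : Real.log (T (x+1)) < -P (x+1) := by
    unfold Fn at hF
    linarith
  have h2 : T (x+1) < Real.exp (-P (x+1)) := by
    calc T (x+1) = Real.exp (Real.log (T (x+1))) := (Real.exp_log hT).symm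
    _ < Real.exp (-P (x+1)) := Real.exp_lt_exp.mpr hlog
  have h3 : T (x+1) * Real.exp (P (x+1)) < Real.exp (-P (x+1)) * Real.exp (P (x+1)) :=
    mul_lt_mul_of_pos_right h2 (Real.exp_pos _)
  have h4 : Real.exp (-P (x+1)) * Real.exp (P (x+1)) = 1 := by
    rw [← Real.exp_add]
    simp
  linarith

theorem Q_strictAnti : StrictAntiOn (fun x : ℝ => Real.exp (digamma (x + 1)) - x) (Ioi 0) := by
  apply strictAntiOn_of_deriv_neg (convex_Ioi 0)
  · intro x hx
    rw [Set.mem_Ioi] at hx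
    exact (hasDerivAt_Q (by linarith)).continuousAt.continuousWithinAt
  · intro x hx
    rw [interior_Ioi, Set.mem_Ioi] at hx
    rw [(hasDerivAt_Q (by linarith)).deriv]
    exact Q_deriv_neg (by linarith)

theorem Q_tendsto : Tendsto (fun x : ℝ => Real.exp (digamma (x + 1)) - x)
    atTop (𝓝 (1/2)) := by
  have upperTendsto : Tendsto (fun x : ℝ => 1/2 + (1/9)*(1/(x+1/2))) atTop (𝓝 (1/2)) := by
    have h1 : Tendsto (fun x : ℝ => x + 1/2) atTop atTop :=
      tendsto_atTop_add_const_right atTop (1/2 : ℝ) tendsto_id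
    have h2 := h1.inv_tendsto_atTop
    have h3 := h2.const_mul (1/9 : ℝ)
    rw [mul_zero] at h3
    have h4 := h3.const_add (1/2 : ℝ)
    rw [add_zero] at h4
    apply h4.congr
    intro x
    simp [one_div]
  apply tendsto_of_tendsto_of_tendsto_of_le_of_le' (tendsto_const_nhds) upperTendsto
  · filter_upwards [eventually_ge_atTop (1:ℝ)] with x hx
    have hx1 : (0:ℝ) < x + 1 := by linarith
    rw [digamma_eq hx1]
    have hP := P_ge (show 1/2 < x+1 by linarith)
    have hhalf : (0:ℝ) < x + 1/2 := by linarith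
    have key : x + 1/2 ≤ Real.exp (P (x+1)) := by
      calc x + 1/2 = Real.exp (Real.log (x+1/2)) := (Real.exp_log hhalf).symm
      _ ≤ Real.exp (P (x+1)) := by
          apply Real.exp_le_exp.mpr
          rw [show x + 1/2 = (x+1) - 1/2 by ring]
          exact hP
    linarith
  · filter_upwards [eventually_ge_atTop (1:ℝ)] with x hx
    have hx1 : (0:ℝ) < x + 1 := by linarith
    rw [digamma_eq hx1]
    set R := T2 (x+1) / 9 with hRdef
    have hhalf : (0:ℝ) < x + 1/2 := by linarith
    have hRpos : 0 < R := by
      rw [hRdef]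
      have := T2_pos hx1
      positivity
    have hR1 : R ≤ 1/(18*(x+1/2)^2) := by
      rw [hRdef]
      have h := (T2_lt (show 1/2 < x+1 by linarith)).le
      have e : (1:ℝ)/(2*((x+1)-1/2)^2) / 9 = 1/(18*(x+1/2)^2) := by
        rw [show ((x+1)-1/2 : ℝ) = x + 1/2 by ring, div_div]
        congr 1
        ring
      calc T2 (x+1) / 9 ≤ (1/(2*((x+1)-1/2)^2)) / 9 := by gcongr
      _ = 1/(18*(x+1/2)^2) := e
    have hRhalf : R ≤ 1/2 := by
      refine hR1.trans ?_
      rw [div_le_div_iff₀ (by positivity) (by norm_num)]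
      nlinarith
    have hexpP : Real.exp (P (x+1)) ≤ (x+1/2) * Real.exp R := by
      have hP := P_le (show 1 < x+1 by linarith)
      calc Real.exp (P (x+1)) ≤ Real.exp (Real.log ((x+1)-1/2) + R) := by
            apply Real.exp_le_exp.mpr
            exact hP
      _ = ((x+1)-1/2) * Real.exp R := by
            rw [Real.exp_add, Real.exp_log (by linarith : (0:ℝ) < (x+1)-1/2)]
      _ = (x+1/2) * Real.exp R := by ring_nf
    have hexpR : Real.exp R ≤ 1 + 2*R := by
      have h5 : 1 - R ≤ Real.exp (-R) := by
        have := Real.add_one_le_exp (-R)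
        linarith
      have h6 : (1 - R) * Real.exp R ≤ 1 := by
        calc (1 - R) * Real.exp R ≤ Real.exp (-R) * Real.exp R :=
              mul_le_mul_of_nonneg_right h5 (Real.exp_pos _).le
        _ = 1 := by rw [← Real.exp_add]; simp
      nlinarith [Real.exp_pos R, hRhalf, hRpos]
    have final : Real.exp (P (x+1)) - x ≤ 1/2 + (1/9)*(1/(x+1/2)) := by
      have step1 : Real.exp (P (x+1)) ≤ (x+1/2) * (1 + 2*R) :=
        hexpP.trans (mul_le_mul_of_nonneg_left hexpR (by linarith))
      have step2 : (x+1/2) * (2*R) ≤ (x+1/2) * (2*(1/(18*(x+1/2)^2))) := by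
        apply mul_le_mul_of_nonneg_left _ (by linarith)
        linarith
      have step3 : (x+1/2) * (2*(1/(18*(x+1/2)^2))) = (1/9)*(1/(x+1/2)) := by
        field_simp
        ring
      nlinarith [step1, step2, step3]
    exact final

end S9

end S9aux

theorem stmt9 :
    StrictAntiOn (fun x : ℝ => Real.exp (digamma (x + 1)) - x) (Set.Ioi 0) ∧
      Filter.Tendsto (fun x : ℝ => Real.exp (digamma (x + 1)) - x)
        Filter.atTop (nhds (1 / 2)) :=
  ⟨S9.Q_strictAnti, S9.Q_tendsto⟩
end
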